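/- arXiv:2604.04672 — 6 statements merged into one kernel-verified Lean document; each statement's English description precedes it below -/
import Mathlib

section
/- Let J and J' be Jordan curves in the plane (i.e., images of continuous injections from the circle S¹ into ℝ²), with interior regions Int J, Int J' (the bounded complementary components) and exterior regions Ext J, Ext J' (the unbounded components). If J is contained in the closure of Int J', then Int J is contained in Int J'. -/
abbrev Plane := ℝ × ℝ

/-- A Jordan curve: a subset of the plane homeomorphic to the circle. -/
def IsJordanCurve (J : Set Plane) : Prop := Nonempty (Circle ≃ₜ J)

/-- The interior region: points off `J` whose connected component in the complement is bounded. -/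
def intRegion (J : Set Plane) : Set Plane :=
  {z | z ∉ J ∧ Bornology.IsBounded (connectedComponentIn Jᶜ z)}

/-- The exterior region: points off `J` whose connected component in the complement is unbounded. -/
def extRegion (J : Set Plane) : Set Plane :=
  {z | z ∉ J ∧ ¬ Bornology.IsBounded (connectedComponentIn Jᶜ z)}

section JordanCurveAuxSection

open Complex Set Metric Bornology Real

namespace JordanCurveAux

noncomputable section

lemma ratio_slit {a b : ℂ} (hb : b ≠ 0) (h : ‖a - b‖ < ‖b‖) :
    a / b ∈ Complex.slitPlane := by
  rw [Complex.mem_slitPlane_iff]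
  left
  have hb' : 0 < ‖b‖ := norm_pos_iff.mpr hb
  have h1 : ‖a / b - 1‖ < 1 := by
    rw [show a / b - 1 = (a - b) / b by field_simp]
    rw [norm_div]
    rw [div_lt_one hb']
    exact h
  have h2 : |(a / b - 1).re| < 1 := lt_of_le_of_lt (Complex.abs_re_le_norm _) h1
  have : (a / b - 1).re = (a / b).re - 1 := by simp
  rw [this] at h2
  have := abs_lt.mp h2
  linarith [this.1]

/-- Existence of a continuous logarithm lift on `[0,1]` for a nonvanishing continuous function. -/
lemma exists_lift (γ : ℝ → ℂ) (hγ : Continuous γ) (hne : ∀ t, γ t ≠ 0) :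
    ∃ θ : ℝ → ℂ, ContinuousOn θ (Icc 0 1) ∧ ∀ t ∈ Icc (0:ℝ) 1, Complex.exp (θ t) = γ t := by
  -- minimum modulus
  obtain ⟨t₀, ht₀, hmin⟩ := isCompact_Icc.exists_isMinOn (⟨0, by norm_num⟩ : (Icc (0:ℝ) 1).Nonempty)
    (continuous_norm.comp hγ).continuousOn
  set ε := ‖γ t₀‖ with hε
  have hεpos : 0 < ε := norm_pos_iff.mpr (hne t₀)
  -- uniform continuity
  obtain ⟨δ, hδpos, hδ⟩ := Metric.uniformContinuousOn_iff.mp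
    (isCompact_Icc.uniformContinuousOn_of_continuous hγ.continuousOn) ε hεpos
  obtain ⟨n, hn⟩ := exists_nat_one_div_lt hδpos
  set N : ℕ := n + 1 with hN
  have hNpos : (0:ℝ) < N := by positivity
  have key : ∀ k : ℕ, k ≤ N → ∃ θ : ℝ → ℂ, ContinuousOn θ (Icc 0 ((k:ℝ)/N)) ∧
      ∀ t ∈ Icc (0:ℝ) ((k:ℝ)/N), Complex.exp (θ t) = γ t := by
    intro k
    induction k with
    | zero =>
      intro _
      refine ⟨fun _ => Complex.log (γ 0), continuousOn_const, ?_⟩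
      intro t ht
      simp only [Nat.cast_zero, zero_div, Icc_self, mem_singleton_iff] at ht
      subst ht
      exact Complex.exp_log (hne 0)
    | succ k ih =>
      intro hk1
      obtain ⟨θ, hθc, hθe⟩ := ih (le_of_lt (Nat.lt_of_succ_le hk1))
      set c : ℝ := (k:ℝ)/N with hc
      set c' : ℝ := ((k+1:ℕ):ℝ)/N with hc'
      have hcnn : 0 ≤ c := by positivity
      have hcc' : c ≤ c' := by
        apply div_le_div_of_nonneg_right _ (le_of_lt hNpos)
        push_cast; linarith
      have hc'le1 : c' ≤ 1 := by
        rw [hc', div_le_one hNpos]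
        exact_mod_cast hk1
      have hcle1 : c ≤ 1 := le_trans hcc' hc'le1
      have hgap : c' - c = 1 / N := by
        rw [hc, hc', div_sub_div_same]
        push_cast; ring_nf
      have hmin' : ∀ y ∈ Icc (0:ℝ) 1, ε ≤ ‖γ y‖ := fun y hy => hmin hy
      have hslit : ∀ t ∈ Icc (0:ℝ) c', γ (max t c) / γ c ∈ Complex.slitPlane := by
        intro t ht
        apply ratio_slit (hne c)
        have hmm : max t c ∈ Icc (0:ℝ) 1 := by
          constructor
          · exact le_trans hcnn (le_max_right _ _)
          · exact le_trans (max_le ht.2 hcc') hc'le1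
        have hcm : c ∈ Icc (0:ℝ) 1 := ⟨hcnn, hcle1⟩
        have hdist : dist (max t c) c < δ := by
          rw [Real.dist_eq]
          have h0 : (0:ℝ) ≤ max t c - c := sub_nonneg.mpr (le_max_right t c)
          rw [_root_.abs_of_nonneg h0]
          calc max t c - c ≤ c' - c := by
                have : max t c ≤ c' := max_le ht.2 hcc'
                linarith
            _ = 1 / N := hgap
            _ < δ := by rw [hN]; push_cast; exact hn
        have := hδ _ hmm _ hcm hdist
        rw [Complex.dist_eq] at this
        exact lt_of_lt_of_le this (hmin' c hcm)
      refine ⟨fun t => θ (min t c) + Complex.log (γ (max t c) / γ c), ?_, ?_⟩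
      · apply ContinuousOn.add
        · apply hθc.comp ((continuous_id.min continuous_const).continuousOn)
          intro t ht
          exact ⟨le_min ht.1 hcnn, min_le_right _ _⟩
        · apply ContinuousOn.clog
          · exact ((hγ.comp (continuous_id.max continuous_const)).div_const (γ c)).continuousOn
          · exact hslit
      · intro t ht
        beta_reduce
        rcases le_total t c with h | h
        · rw [min_eq_left h, max_eq_right h, div_self (hne c), Complex.log_one, add_zero]
          exact hθe t ⟨ht.1, h⟩
        · rw [min_eq_right h, max_eq_left h, Complex.exp_add,
            Complex.exp_log (div_ne_zero (hne t) (hne c)), hθe c ⟨hcnn, le_refl c⟩,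
            mul_comm, div_mul_cancel₀ _ (hne c)]
  obtain ⟨θ, hc, he⟩ := key N le_rfl
  have : ((N:ℝ))/N = 1 := div_self (ne_of_gt hNpos)
  rw [this] at hc he
  exact ⟨θ, hc, he⟩


lemma int_mul_two_pi_I_im (m : ℤ) : ((m:ℂ) * (2*(π:ℂ)*Complex.I)).im = m * (2*π) := by
  simp [Complex.mul_im]

lemma variation_unique (γ θ₁ θ₂ : ℝ → ℂ)
    (h₁c : ContinuousOn θ₁ (Icc 0 1)) (h₂c : ContinuousOn θ₂ (Icc 0 1))
    (h₁ : ∀ t ∈ Icc (0:ℝ) 1, Complex.exp (θ₁ t) = γ t)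
    (h₂ : ∀ t ∈ Icc (0:ℝ) 1, Complex.exp (θ₂ t) = γ t) :
    θ₁ 1 - θ₁ 0 = θ₂ 1 - θ₂ 0 := by
  set d : ℝ → ℂ := fun t => θ₁ t - θ₂ t with hd
  have hkey : ∀ t ∈ Icc (0:ℝ) 1, ∃ m : ℤ, d t = m * (2 * π * Complex.I) := by
    intro t ht
    rw [← Complex.exp_eq_one_iff, hd]
    rw [Complex.exp_sub, h₁ t ht, h₂ t ht, div_self]
    rw [← h₁ t ht]
    exact Complex.exp_ne_zero _
  set k : ℝ → ℝ := fun t => (d t).im / (2 * π) with hk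
  have hkc : ContinuousOn k (Icc 0 1) :=
    (Complex.continuous_im.comp_continuousOn (h₁c.sub h₂c)).div_const _
  have hkint : ∀ t ∈ Icc (0:ℝ) 1, ∃ m : ℤ, k t = m := by
    intro t ht
    obtain ⟨m, hm⟩ := hkey t ht
    refine ⟨m, ?_⟩
    rw [hk]
    simp only [hm]
    rw [int_mul_two_pi_I_im, mul_div_assoc, div_self (by positivity : (2:ℝ) * π ≠ 0), mul_one]
  have h01 : (0:ℝ) ∈ Icc (0:ℝ) 1 := by norm_num
  have h11 : (1:ℝ) ∈ Icc (0:ℝ) 1 := by norm_num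
  obtain ⟨m0, hm0⟩ := hkint 0 h01
  obtain ⟨m1, hm1⟩ := hkint 1 h11
  have hmeq : m0 = m1 := by
    by_contra hne
    have huIcc : uIcc (0:ℝ) 1 = Icc 0 1 := uIcc_of_le zero_le_one
    have hIVT := intermediate_value_uIcc (f := k) (a := 0) (b := 1) (by rw [huIcc]; exact hkc)
    have hc : ((max m0 m1 : ℤ) : ℝ) - 1/2 ∈ uIcc (k 0) (k 1) := by
      rw [hm0, hm1]
      have h1 : ((min m0 m1 : ℤ) : ℝ) + 1 ≤ ((max m0 m1 : ℤ) : ℝ) := by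
        exact_mod_cast (by omega : min m0 m1 + 1 ≤ max m0 m1)
      rw [Set.mem_uIcc]
      rcases le_total m0 m1 with h | h
      · left
        constructor
        · have : ((m0:ℝ)) ≤ ((min m0 m1 : ℤ):ℝ) := by exact_mod_cast (le_min le_rfl h)
          linarith
        · have : ((max m0 m1 : ℤ):ℝ) = (m1:ℝ) := by exact_mod_cast (max_eq_right h)
          linarith
      · right
        constructor
        · have : ((m1:ℝ)) ≤ ((min m0 m1 : ℤ):ℝ) := by exact_mod_cast (le_min h le_rfl)
          linarith
        · have : ((max m0 m1 : ℤ):ℝ) = (m0:ℝ) := by exact_mod_cast (max_eq_left h)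
          linarith
    obtain ⟨t, ht, hkt⟩ := hIVT hc
    rw [huIcc] at ht
    obtain ⟨mt, hmt⟩ := hkint t ht
    rw [hmt] at hkt
    have : (2*mt : ℤ) = 2 * max m0 m1 - 1 := by
      have : ((2*mt : ℤ):ℝ) = ((2 * max m0 m1 - 1 : ℤ):ℝ) := by push_cast at hkt ⊢; linarith
      exact_mod_cast this
    omega
  obtain ⟨m0', hd0⟩ := hkey 0 h01
  obtain ⟨m1', hd1⟩ := hkey 1 h11
  have e0 : (m0' : ℝ) = k 0 := by
    rw [hk]; simp only [hd0]
    rw [int_mul_two_pi_I_im, mul_div_assoc, div_self (by positivity : (2:ℝ) * π ≠ 0), mul_one]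
  have e1 : (m1' : ℝ) = k 1 := by
    rw [hk]; simp only [hd1]
    rw [int_mul_two_pi_I_im, mul_div_assoc, div_self (by positivity : (2:ℝ) * π ≠ 0), mul_one]
  have : m0' = m1' := by
    have : (m0' : ℝ) = (m1' : ℝ) := by rw [e0, e1, hm0, hm1]; exact_mod_cast hmeq
    exact_mod_cast this
  have hdd : d 1 = d 0 := by rw [hd0, hd1, this]
  have : θ₁ 1 - θ₂ 1 = θ₁ 0 - θ₂ 0 := hdd
  linear_combination this


/-- There is no continuous map `ℂ → ℂ` avoiding `0` that equals the identity far away. -/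
lemma no_retraction (f : ℂ → ℂ) (R : ℝ) (hR : 0 < R) (hf : Continuous f)
    (h0 : ∀ z, f z ≠ 0) (hid : ∀ z, R ≤ ‖z‖ → f z = z) : False := by
  set E : ℝ → ℂ := fun t => Complex.exp (2 * (π:ℂ) * Complex.I * (t:ℂ)) with hE
  have hEcont : Continuous E :=
    Complex.continuous_exp.comp (continuous_const.mul Complex.continuous_ofReal)
  have hEnorm : ∀ t : ℝ, ‖E t‖ = 1 := by
    intro t
    rw [hE]
    rw [Complex.norm_exp]
    have : (2 * (π:ℂ) * Complex.I * (t:ℂ)).re = 0 := by simp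
    rw [this, Real.exp_zero]
  have hE0 : E 0 = 1 := by simp [hE]
  have hE1 : E 1 = 1 := by
    rw [hE]
    push_cast
    rw [mul_one]
    rw [show 2 * (π:ℂ) * Complex.I = (π:ℂ) * Complex.I * 2 by ring]
    rw [Complex.exp_eq_one_iff]
    exact ⟨1, by push_cast; ring⟩
  set H : ℝ → ℝ → ℂ := fun s t => f ((s:ℂ) * (R:ℂ) * E t) with hH
  have hγc : ∀ s : ℝ, Continuous (fun t => H s t) := by
    intro s
    exact hf.comp (continuous_const.mul hEcont)
  have hγne : ∀ s t : ℝ, H s t ≠ 0 := fun s t => h0 _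
  have lift : ∀ s : ℝ, ∃ θ : ℝ → ℂ, ContinuousOn θ (Icc 0 1) ∧
      ∀ t ∈ Icc (0:ℝ) 1, Complex.exp (θ t) = H s t :=
    fun s => exists_lift (fun t => H s t) (hγc s) (hγne s)
  set θs : ℝ → ℝ → ℂ := fun s => Classical.choose (lift s) with hθs
  have θspec : ∀ s : ℝ, ContinuousOn (θs s) (Icc 0 1) ∧
      ∀ t ∈ Icc (0:ℝ) 1, Complex.exp (θs s t) = H s t := fun s => Classical.choose_spec (lift s)
  set v : ℝ → ℂ := fun s => θs s 1 - θs s 0 with hv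
  -- the loop at s = 1 is the circle of radius R
  have hv1 : v 1 = 2 * (π:ℂ) * Complex.I := by
    have hloop : ∀ t : ℝ, H 1 t = (R:ℂ) * E t := by
      intro t
      rw [hH]
      simp only [Complex.ofReal_one, one_mul]
      apply hid
      rw [norm_mul, hEnorm, mul_one, Complex.norm_real, Real.norm_eq_abs, abs_of_pos hR]
    have hlift2 : ∀ t ∈ Icc (0:ℝ) 1,
        Complex.exp ((Real.log R : ℂ) + 2 * (π:ℂ) * Complex.I * (t:ℂ)) = H 1 t := by
      intro t _
      rw [Complex.exp_add, hloop t, ← Complex.ofReal_exp, Real.exp_log hR, hE]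
    have := variation_unique (fun t => H 1 t) (θs 1)
      (fun t => (Real.log R : ℂ) + 2 * (π:ℂ) * Complex.I * (t:ℂ))
      (θspec 1).1
      (by fun_prop)
      (θspec 1).2 hlift2
    rw [hv]
    beta_reduce
    rw [this]
    push_cast
    ring
  have hv0 : v 0 = 0 := by
    have hconst : ∀ t : ℝ, H 0 t = f 0 := by
      intro t
      rw [hH]
      simp
    have hlift2 : ∀ t ∈ Icc (0:ℝ) 1, Complex.exp (Complex.log (f 0)) = H 0 t := by
      intro t _
      rw [Complex.exp_log (h0 0), hconst t]
    have := variation_unique (fun t => H 0 t) (θs 0) (fun _ => Complex.log (f 0))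
      (θspec 0).1 continuousOn_const (θspec 0).2 hlift2
    rw [hv]
    beta_reduce
    rw [this, sub_self]
  -- local constancy of v
  have claim : ∀ s₀ ∈ Icc (0:ℝ) 1, ∃ δ > 0, ∀ s ∈ Icc (0:ℝ) 1, |s - s₀| < δ → v s = v s₀ := by
    intro s₀ hs₀
    obtain ⟨t₀, ht₀, hmin⟩ := isCompact_Icc.exists_isMinOn
      (⟨0, by norm_num⟩ : (Icc (0:ℝ) 1).Nonempty)
      (continuous_norm.comp (hγc s₀)).continuousOn
    set ε := ‖H s₀ t₀‖ with hε
    have hεpos : 0 < ε := norm_pos_iff.mpr (hγne s₀ t₀)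
    have hmin' : ∀ y ∈ Icc (0:ℝ) 1, ε ≤ ‖H s₀ y‖ := fun y hy => hmin hy
    have hGcont : Continuous (fun q : ℝ × ℝ => H q.1 q.2) := by
      apply hf.comp
      exact ((Complex.continuous_ofReal.comp continuous_fst).mul continuous_const).mul
        (hEcont.comp continuous_snd)
    have hKc : IsCompact ((Icc (0:ℝ) 1) ×ˢ (Icc (0:ℝ) 1)) := isCompact_Icc.prod isCompact_Icc
    obtain ⟨δ, hδpos, hδ⟩ := Metric.uniformContinuousOn_iff.mp
      (hKc.uniformContinuousOn_of_continuous hGcont.continuousOn) ε hεpos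
    refine ⟨δ, hδpos, ?_⟩
    intro s hs hss₀
    have hnear : ∀ t ∈ Icc (0:ℝ) 1, ‖H s t - H s₀ t‖ < ε := by
      intro t ht
      have h1 : ((s, t) : ℝ × ℝ) ∈ (Icc (0:ℝ) 1) ×ˢ (Icc (0:ℝ) 1) := ⟨hs, ht⟩
      have h2 : ((s₀, t) : ℝ × ℝ) ∈ (Icc (0:ℝ) 1) ×ˢ (Icc (0:ℝ) 1) := ⟨hs₀, ht⟩
      have h3 : dist ((s, t) : ℝ × ℝ) ((s₀, t) : ℝ × ℝ) < δ := by
        rw [Prod.dist_eq]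
        simp only [dist_self]
        rw [Real.dist_eq]
        exact max_lt hss₀ hδpos
      have := hδ _ h1 _ h2 h3
      rwa [Complex.dist_eq] at this
    have hslit : ∀ t ∈ Icc (0:ℝ) 1, H s t / H s₀ t ∈ Complex.slitPlane := by
      intro t ht
      exact ratio_slit (hγne s₀ t) (lt_of_lt_of_le (hnear t ht) (hmin' t ht))
    set θ' : ℝ → ℂ := fun t => θs s₀ t + Complex.log (H s t / H s₀ t) with hθ'
    have hθ'c : ContinuousOn θ' (Icc 0 1) := by
      apply (θspec s₀).1.add
      apply ContinuousOn.clog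
      · exact ((hγc s).continuousOn.div (hγc s₀).continuousOn (fun t _ => hγne s₀ t))
      · exact hslit
    have hθ'e : ∀ t ∈ Icc (0:ℝ) 1, Complex.exp (θ' t) = H s t := by
      intro t ht
      rw [hθ']
      beta_reduce
      rw [Complex.exp_add, Complex.exp_log (div_ne_zero (hγne s t) (hγne s₀ t)),
        (θspec s₀).2 t ht, mul_comm, div_mul_cancel₀ _ (hγne s₀ t)]
    have hvar := variation_unique (fun t => H s t) (θs s) θ' (θspec s).1 hθ'c (θspec s).2 hθ'e
    rw [hv]
    beta_reduce
    rw [hvar, hθ']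
    beta_reduce
    have hsper : H s 1 = H s 0 := by rw [hH]; beta_reduce; rw [hE0, hE1]
    have hs₀per : H s₀ 1 = H s₀ 0 := by rw [hH]; beta_reduce; rw [hE0, hE1]
    rw [hsper, hs₀per]
    ring
  -- propagate constancy from 0 to 1 via sSup
  set S : Set ℝ := {s | s ∈ Icc (0:ℝ) 1 ∧ v s = v 0} with hS
  have h0S : (0:ℝ) ∈ S := ⟨by norm_num, rfl⟩
  have hbdd : BddAbove S := ⟨1, fun s hs => hs.1.2⟩
  set σ := sSup S with hσ
  have hσ0 : 0 ≤ σ := le_csSup hbdd h0S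
  have hσ1 : σ ≤ 1 := csSup_le ⟨0, h0S⟩ (fun s hs => hs.1.2)
  obtain ⟨δ, hδpos, hδ⟩ := claim σ ⟨hσ0, hσ1⟩
  have hvσ : v σ = v 0 := by
    obtain ⟨s, hsS, hs⟩ := exists_lt_of_lt_csSup ⟨0, h0S⟩ (show σ - δ < σ by linarith)
    have hsσ : s ≤ σ := le_csSup hbdd hsS
    have habs : |s - σ| < δ := by rw [abs_lt]; constructor <;> linarith
    have := hδ s hsS.1 habs
    rw [← this, hsS.2]
  have hσeq : σ = 1 := by
    by_contra hne
    have hσlt : σ < 1 := lt_of_le_of_ne hσ1 hne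
    set s' := min 1 (σ + δ/2) with hs'
    have hs'mem : s' ∈ Icc (0:ℝ) 1 := by
      constructor
      · apply le_min <;> linarith
      · exact min_le_left _ _
    have hs'gt : σ < s' := by
      apply lt_min hσlt
      linarith
    have hs'abs : |s' - σ| < δ := by
      rw [abs_lt]
      constructor
      · linarith
      · have : s' ≤ σ + δ/2 := min_le_right _ _
        linarith
    have : v s' = v 0 := by rw [hδ s' hs'mem hs'abs, hvσ]
    have : s' ≤ σ := le_csSup hbdd ⟨hs'mem, this⟩
    linarith
  have : v 1 = v 0 := by rw [← hσeq, hvσ]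
  rw [hv1, hv0] at this
  have hpi : (π:ℂ) ≠ 0 := by exact_mod_cast Real.pi_ne_zero
  have : (2:ℂ) * (π:ℂ) * Complex.I ≠ 0 :=
    mul_ne_zero (mul_ne_zero two_ne_zero hpi) Complex.I_ne_zero
  exact this (by assumption)


/-- frontier of a connected component of the complement of a closed set lies in the set -/
lemma frontier_cci_subset {S : Set Plane} (hS : IsClosed S) (x : Plane) :
    frontier (connectedComponentIn Sᶜ x) ⊆ S := by
  set U := connectedComponentIn Sᶜ x with hU
  have hUopen : IsOpen U := hS.isOpen_compl.connectedComponentIn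
  intro y hy
  by_contra hyS
  have hyU : y ∉ U := by
    intro h
    exact (hUopen.frontier_eq ▸ hy).2 h
  have hyc : y ∈ closure U := (frontier_subset_closure hy)
  obtain ⟨r, hrpos, hball⟩ := Metric.isOpen_iff.mp hS.isOpen_compl y hyS
  obtain ⟨w, hwU, hwr⟩ := Metric.mem_closure_iff.mp hyc r hrpos
  have hBconn : IsPreconnected (ball y r) :=
    ((convex_ball y r).isPathConnected (by simpa using hrpos)).isConnected.isPreconnected
  have hsub : ball y r ⊆ connectedComponentIn Sᶜ y :=
    hBconn.subset_connectedComponentIn (mem_ball_self hrpos) hball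
  have hw2 : w ∈ connectedComponentIn Sᶜ y := hsub (Metric.mem_ball.mpr (by rwa [dist_comm] at hwr))
  have e1 : connectedComponentIn Sᶜ y = connectedComponentIn Sᶜ w := connectedComponentIn_eq hw2
  have e2 : connectedComponentIn Sᶜ x = connectedComponentIn Sᶜ w := connectedComponentIn_eq hwU
  have : y ∈ U := by
    rw [hU, e2, ← e1]
    exact mem_connectedComponentIn hyS
  exact hyU this

lemma isOpen_intRegion {S : Set Plane} (hS : IsClosed S) : IsOpen (intRegion S) := by
  rw [isOpen_iff_forall_mem_open]
  intro z hz
  refine ⟨connectedComponentIn Sᶜ z, ?_, hS.isOpen_compl.connectedComponentIn, ?_⟩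
  · intro y hy
    have e : connectedComponentIn Sᶜ z = connectedComponentIn Sᶜ y := connectedComponentIn_eq hy
    exact ⟨connectedComponentIn_subset _ _ hy, e ▸ hz.2⟩
  · exact mem_connectedComponentIn hz.1

lemma mem_intRegion_of_closure {S : Set Plane} (hS : IsClosed S) {x : Plane}
    (hx : x ∈ closure (intRegion S)) (hxS : x ∉ S) : x ∈ intRegion S := by
  obtain ⟨r, hrpos, hball⟩ := Metric.isOpen_iff.mp hS.isOpen_compl x hxS
  obtain ⟨w, hwU, hwr⟩ := Metric.mem_closure_iff.mp hx r hrpos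
  have hBconn : IsPreconnected (ball x r) :=
    ((convex_ball x r).isPathConnected (by simpa using hrpos)).isConnected.isPreconnected
  have hsub : ball x r ⊆ connectedComponentIn Sᶜ x :=
    hBconn.subset_connectedComponentIn (mem_ball_self hrpos) hball
  have hw2 : w ∈ connectedComponentIn Sᶜ x := hsub (Metric.mem_ball.mpr (by rwa [dist_comm] at hwr))
  have e1 : connectedComponentIn Sᶜ x = connectedComponentIn Sᶜ w := connectedComponentIn_eq hw2
  refine ⟨hxS, ?_⟩
  rw [e1]
  exact hwU.2

/-- the far region -/
def V (R : ℝ) : Set Plane := {p | R < ‖p‖}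

lemma fst_linear : IsLinearMap ℝ (fun p : Plane => p.1) := ⟨fun _ _ => rfl, fun _ _ => rfl⟩
lemma snd_linear : IsLinearMap ℝ (fun p : Plane => p.2) := ⟨fun _ _ => rfl, fun _ _ => rfl⟩

lemma V_eq (R : ℝ) : V R = {p : Plane | R < p.1} ∪ {p : Plane | R < p.2}
    ∪ {p : Plane | p.1 < -R} ∪ {p : Plane | p.2 < -R} := by
  ext p
  simp only [V, mem_setOf_eq, mem_union, Prod.norm_def, Real.norm_eq_abs, lt_max_iff, lt_abs]
  constructor
  · rintro ((h | h) | (h | h))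
    · exact Or.inl (Or.inl (Or.inl h))
    · exact Or.inl (Or.inr (by linarith))
    · exact Or.inl (Or.inl (Or.inr h))
    · exact Or.inr (by linarith)
  · rintro (((h | h) | h) | h)
    · exact Or.inl (Or.inl h)
    · exact Or.inr (Or.inl h)
    · exact Or.inl (Or.inr (by linarith))
    · exact Or.inr (Or.inr (by linarith))

lemma V_preconnected {R : ℝ} (hR : 0 < R) : IsPreconnected (V R) := by
  rw [V_eq]
  have h1 : IsPreconnected {p : Plane | R < p.1} :=
    (convex_halfSpace_gt fst_linear R).isPreconnected
  have h2 : IsPreconnected {p : Plane | R < p.2} :=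
    (convex_halfSpace_gt snd_linear R).isPreconnected
  have h3 : IsPreconnected {p : Plane | p.1 < -R} :=
    (convex_halfSpace_lt fst_linear (-R)).isPreconnected
  have h4 : IsPreconnected {p : Plane | p.2 < -R} :=
    (convex_halfSpace_lt snd_linear (-R)).isPreconnected
  have h12 : IsPreconnected ({p : Plane | R < p.1} ∪ {p : Plane | R < p.2}) := by
    apply IsPreconnected.union (x := ((R+1, R+1) : Plane)) _ _ h1 h2 <;>
      simp only [mem_setOf_eq] <;> linarith
  have h123 : IsPreconnected ({p : Plane | R < p.1} ∪ {p : Plane | R < p.2}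
      ∪ {p : Plane | p.1 < -R}) := by
    apply IsPreconnected.union (x := ((-R-1, R+1) : Plane)) _ _ h12 h3
    · exact Or.inr (by simp only [mem_setOf_eq]; linarith)
    · simp only [mem_setOf_eq]; linarith
  apply IsPreconnected.union (x := ((-R-1, -R-1) : Plane)) _ _ h123 h4
  · exact Or.inr (by simp only [mem_setOf_eq]; linarith)
  · simp only [mem_setOf_eq]; linarith

lemma V_subset_comp {R : ℝ} (hR : 0 < R) {S : Set Plane} (hS : S ⊆ ball 0 R) {w : Plane}
    (hw : w ∈ V R) : V R ⊆ connectedComponentIn Sᶜ w := by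
  apply (V_preconnected hR).subset_connectedComponentIn hw
  intro p hp
  intro hpS
  have := hS hpS
  rw [mem_ball_zero_iff] at this
  exact absurd hp (by simp only [V, mem_setOf_eq]; linarith)

lemma V_unbounded {R : ℝ} (hR : 0 < R) : ¬ IsBounded (V R) := by
  intro h
  obtain ⟨C, hC⟩ := isBounded_iff_forall_norm_le.mp h
  set M := max C R + 1 with hM
  have hMR : R < M := by have := le_max_right C R; linarith
  have hM0 : 0 < M := lt_trans hR hMR
  have hmem : ((M, 0) : Plane) ∈ V R := by
    simp only [V, mem_setOf_eq, Prod.norm_def, Real.norm_eq_abs, abs_zero]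
    rw [abs_of_pos hM0, max_eq_left (le_of_lt hM0)]
    exact hMR
  have hle := hC _ hmem
  rw [Prod.norm_def] at hle
  simp only [Real.norm_eq_abs, abs_zero] at hle
  rw [abs_of_pos hM0, max_eq_left (le_of_lt hM0)] at hle
  have := le_max_left C R
  linarith

lemma comp_unbounded_eq {R : ℝ} (hR : 0 < R) {S : Set Plane} (hS : S ⊆ ball 0 R)
    {x y : Plane} (hx : x ∉ S) (hy : y ∉ S)
    (hxu : ¬ IsBounded (connectedComponentIn Sᶜ x))
    (hyu : ¬ IsBounded (connectedComponentIn Sᶜ y)) :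
    connectedComponentIn Sᶜ x = connectedComponentIn Sᶜ y := by
  have far : ∀ z : Plane, z ∉ S → ¬ IsBounded (connectedComponentIn Sᶜ z) →
      ∃ w, w ∈ connectedComponentIn Sᶜ z ∧ w ∈ V R := by
    intro z hz hzu
    by_contra hcon
    push_neg at hcon
    apply hzu
    apply isBounded_closedBall (x := (0:Plane)) (r := R) |>.subset
    intro w hw
    rw [mem_closedBall_zero_iff]
    by_contra hnorm
    exact hcon w hw (by simp only [V, mem_setOf_eq]; linarith)
  obtain ⟨w1, hw1c, hw1V⟩ := far x hx hxu
  obtain ⟨w2, hw2c, hw2V⟩ := far y hy hyu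
  have hV1 : V R ⊆ connectedComponentIn Sᶜ w1 := V_subset_comp hR hS hw1V
  have hV2 : V R ⊆ connectedComponentIn Sᶜ w2 := V_subset_comp hR hS hw2V
  have hv0 : ((R+1, 0) : Plane) ∈ V R := by
    simp only [V, mem_setOf_eq, Prod.norm_def, Real.norm_eq_abs, abs_zero]
    rw [abs_of_pos (by linarith : (0:ℝ) < R + 1)]
    simp only [max_eq_left (by linarith : (0:ℝ) ≤ R + 1)]
    linarith
  calc connectedComponentIn Sᶜ x = connectedComponentIn Sᶜ w1 := connectedComponentIn_eq hw1c
    _ = connectedComponentIn Sᶜ ((R+1, 0) : Plane) := connectedComponentIn_eq (hV1 hv0)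
    _ = connectedComponentIn Sᶜ w2 := (connectedComponentIn_eq (hV2 hv0)).symm
    _ = connectedComponentIn Sᶜ y := (connectedComponentIn_eq hw2c).symm


/-- transfer of `no_retraction` to the plane -/
lemma no_retraction_plane (g : Plane → Plane) (p : Plane) (R : ℝ) (hR : 0 < R)
    (hg : Continuous g) (hp : ∀ x, g x ≠ p) (hid : ∀ x, R ≤ ‖x‖ → g x = x) : False := by
  set ι : ℂ ≃ₜ Plane := Complex.equivRealProdCLM.toHomeomorph with hι
  obtain ⟨K, hK⟩ : ∃ K : NNReal, AntilipschitzWith K (ι : ℂ → Plane) :=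
    ⟨_, Complex.equivRealProdCLM.antilipschitz⟩
  set Kr : ℝ := (K : ℝ) + 1 with hKr
  have hKrpos : 0 < Kr := by positivity
  set R₁ : ℝ := Kr * R + 1 with hR₁
  have hR₁pos : 0 < R₁ := by positivity
  have hbig : ∀ z : ℂ, R₁ ≤ ‖z‖ → R ≤ ‖ι z‖ := by
    intro z hz
    have h1 : dist z 0 ≤ K * dist (ι z) (ι 0) := hK.le_mul_dist z 0
    have h2 : ι (0 : ℂ) = 0 := by
      simp [hι]
    rw [h2] at h1
    rw [dist_zero_right, dist_zero_right] at h1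
    have h3 : ‖z‖ ≤ Kr * ‖ι z‖ := by
      apply le_trans h1
      apply mul_le_mul_of_nonneg_right _ (norm_nonneg _)
      rw [hKr]; linarith
    have h4 : R₁ ≤ ‖z‖ := by exact hz
    nlinarith [norm_nonneg (ι z)]
  set q : ℂ := ι.symm p with hq
  set f : ℂ → ℂ := fun w => ι.symm (g (ι (w + q))) - q with hf
  have hfc : Continuous f :=
    ((ι.symm.continuous.comp (hg.comp (ι.continuous.comp (continuous_id.add continuous_const))))).sub
      continuous_const
  have hfne : ∀ w, f w ≠ 0 := by
    intro w hw
    rw [hf] at hw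
    have : ι.symm (g (ι (w + q))) = q := by
      have := sub_eq_zero.mp hw
      exact this
    apply hp (ι (w + q))
    have := congrArg ι this
    simpa [hq] using this
  have hfid : ∀ w, R₁ + ‖q‖ ≤ ‖w‖ → f w = w := by
    intro w hw
    have h1 : R₁ ≤ ‖w + q‖ := by
      have h2 : ‖w‖ ≤ ‖w + q‖ + ‖q‖ := by
        have h3 := norm_add_le (w + q) (-q)
        simp only [add_neg_cancel_right, norm_neg] at h3
        exact h3
      linarith
    have h2 : g (ι (w + q)) = ι (w + q) := hid _ (hbig _ h1)
    rw [hf]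
    beta_reduce
    rw [h2]
    simp
  exact no_retraction f (R₁ + ‖q‖) (by positivity) hfc hfne hfid

/-- An arc in the plane does not have any bounded complementary component. -/
lemma arc_no_bounded_comp {a b : ℝ} (hab : a ≤ b) {F : ℝ → Plane} (hF : Continuous F)
    (hinj : InjOn F (Icc a b)) {p : Plane} (hp : p ∉ F '' Icc a b) :
    ¬ IsBounded (connectedComponentIn (F '' Icc a b)ᶜ p) := by
  intro hbdd
  set β : Set Plane := F '' Icc a b with hβ
  have hβcpt : IsCompact β := isCompact_Icc.image hF
  have hβcl : IsClosed β := hβcpt.isClosed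
  set U : Set Plane := connectedComponentIn βᶜ p with hU
  have hUopen : IsOpen U := hβcl.isOpen_compl.connectedComponentIn
  have hpU : p ∈ U := mem_connectedComponentIn hp
  -- build the retraction r onto β
  haveI : CompactSpace (Icc a b) := isCompact_iff_compactSpace.mp isCompact_Icc
  set Fsub : Icc a b → β := fun t => ⟨F t, mem_image_of_mem F t.2⟩ with hFsub
  have hFsubc : Continuous Fsub := (hF.comp continuous_subtype_val).subtype_mk _
  have hFsubbij : Function.Bijective Fsub := by
    constructor
    · intro s t hst
      have : F s = F t := congrArg Subtype.val hst
      exact Subtype.ext (hinj s.2 t.2 this)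
    · rintro ⟨y, hy⟩
      obtain ⟨t, ht, rfl⟩ := hy
      exact ⟨⟨t, ht⟩, rfl⟩
  set eqv : Icc a b ≃ β := Equiv.ofBijective Fsub hFsubbij with heqv
  set homeo : Icc a b ≃ₜ β := Continuous.homeoOfEquivCompactToT2 (f := eqv) hFsubc with hhomeo
  set ψ : β → ℝ := fun y => (homeo.symm y : ℝ) with hψ
  have hψc : Continuous ψ := continuous_subtype_val.comp homeo.symm.continuous
  obtain ⟨g, hg⟩ := ContinuousMap.exists_restrict_eq (Y := ℝ) hβcl ⟨ψ, hψc⟩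
  have hgval : ∀ y : β, g y = ψ y := fun y => congrFun (congrArg DFunLike.coe hg) y
  set G2 : Plane → ℝ := fun x => max a (min b (g x)) with hG2
  have hG2c : Continuous G2 := continuous_const.max (continuous_const.min g.continuous)
  have hG2mem : ∀ x, G2 x ∈ Icc a b := by
    intro x
    constructor
    · exact le_max_left _ _
    · rw [hG2]
      beta_reduce
      rw [max_le_iff]
      exact ⟨hab, min_le_left _ _⟩
  have hG2β : ∀ y : β, G2 y = ψ y := by
    intro y
    have hmem : ψ y ∈ Icc a b := (homeo.symm y).2
    rw [hG2]
    beta_reduce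
    rw [hgval y, min_eq_right hmem.2, max_eq_right hmem.1]
  set r : Plane → Plane := fun x => F (G2 x) with hr
  have hrc : Continuous r := hF.comp hG2c
  have hrβ : ∀ x, r x ∈ β := fun x => mem_image_of_mem F (hG2mem x)
  have hrid : ∀ y ∈ β, r y = y := by
    intro y hy
    rw [hr]
    beta_reduce
    rw [hG2β ⟨y, hy⟩]
    have : F (ψ ⟨y, hy⟩) = (Fsub (homeo.symm ⟨y, hy⟩) : Plane) := rfl
    rw [this]
    have : Fsub (homeo.symm ⟨y, hy⟩) = eqv (homeo.symm ⟨y, hy⟩) := rfl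
    rw [this]
    have h2 : (homeo (homeo.symm ⟨y, hy⟩) : Plane) = ((⟨y, hy⟩ : β) : Plane) := by
      rw [Homeomorph.apply_symm_apply]
    exact h2
  -- glue
  haveI : ∀ x : Plane, Decidable (x ∈ closure U) := fun _ => Classical.propDecidable _
  set g' : Plane → Plane := (closure U).piecewise r id with hg'
  have hfr : ∀ x ∈ frontier (closure U), r x = id x := by
    intro x hx
    have h1 : x ∈ frontier U := frontier_closure_subset hx
    have h2 : x ∈ β := frontier_cci_subset hβcl p h1
    exact hrid x h2
  have hg'c : Continuous g' := Continuous.piecewise hfr hrc continuous_id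
  have hg'ne : ∀ x, g' x ≠ p := by
    intro x
    rw [hg']
    by_cases hx : x ∈ closure U
    · rw [Set.piecewise_eq_of_mem _ _ _ hx]
      intro h
      exact hp (h ▸ hrβ x)
    · rw [Set.piecewise_eq_of_notMem _ _ _ hx]
      intro h
      have : x = p := h
      rw [this] at hx
      exact hx (subset_closure hpU)
  obtain ⟨R, hRpos, hRsub⟩ := (hbdd.closure).subset_ball_lt 0 0
  have hg'id : ∀ x, R ≤ ‖x‖ → g' x = x := by
    intro x hx
    rw [hg', Set.piecewise_eq_of_notMem]
    · rfl
    · intro hmem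
      have := hRsub hmem
      rw [mem_ball_zero_iff] at this
      linarith
  exact no_retraction_plane g' p R hRpos hg'c hg'ne hg'id


/-- Given a Jordan curve and a point `z` on it, we can remove a small neighborhood of `z`
from the curve, leaving a closed arc missing `z`. -/
lemma exists_arc {J : Set Plane} (e : Circle ≃ₜ J) {z : Plane} (hz : z ∈ J) {ε : ℝ}
    (hε : 0 < ε) :
    ∃ (aa bb : ℝ) (F : ℝ → Plane), aa ≤ bb ∧ Continuous F ∧ InjOn F (Icc aa bb) ∧
      F '' Icc aa bb ⊆ J ∧ z ∉ F '' Icc aa bb ∧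
      ∀ y ∈ J, y ∉ F '' Icc aa bb → dist y z < ε := by
  set c : Circle := e.symm ⟨z, hz⟩ with hc
  set θ0 : ℝ := Complex.arg (c : ℂ) with hθ0
  have hexpθ0 : Circle.exp θ0 = c := Circle.exp_arg c
  set Φ : ℝ → Plane := fun s => ((e (Circle.exp (θ0 + s)) : J) : Plane) with hΦ
  have hΦc : Continuous Φ := by
    apply continuous_subtype_val.comp
    exact e.continuous.comp (Circle.exp.continuous.comp (continuous_const.add continuous_id))
  have hΦ0 : Φ 0 = z := by
    rw [hΦ]
    beta_reduce
    rw [add_zero, hexpθ0, hc, Homeomorph.apply_symm_apply]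
  have hcont : ContinuousAt Φ 0 := hΦc.continuousAt
  obtain ⟨δ, hδpos, hδ⟩ := Metric.continuousAt_iff.mp hcont ε hε
  set d : ℝ := min (δ/2) 1 with hd
  have hdpos : 0 < d := lt_min (by linarith) one_pos
  have hdδ : d < δ := lt_of_le_of_lt (min_le_left _ _) (by linarith)
  have hd1 : d ≤ 1 := min_le_right _ _
  have hπ : (3:ℝ) < π := Real.pi_gt_three
  have hab : d ≤ 2*π - d := by nlinarith
  have hΦnear : ∀ s : ℝ, |s| < δ → dist (Φ s) z < ε := by
    intro s hs
    have := hδ (show dist s 0 < δ by rwa [Real.dist_eq, sub_zero])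
    rwa [hΦ0] at this
  -- injectivity
  have hinj : InjOn Φ (Icc d (2*π - d)) := by
    intro s hs t ht hst
    have h1 : e (Circle.exp (θ0 + s)) = e (Circle.exp (θ0 + t)) := Subtype.ext hst
    have h2 : Circle.exp (θ0 + s) = Circle.exp (θ0 + t) := e.injective h1
    obtain ⟨m, hm⟩ := Circle.exp_eq_exp.mp h2
    have hst' : s - t = m * (2*π) := by linarith
    have hb1 : |s - t| < 2*π := by
      rw [abs_lt]
      constructor
      · have := hs.1; have := ht.2; nlinarith
      · have := hs.2; have := ht.1; nlinarith
    rw [hst'] at hb1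
    have : |(m:ℝ)| * (2*π) < 2*π := by
      rwa [abs_mul, abs_of_pos (by positivity : (0:ℝ) < 2*π)] at hb1
    have hm1 : |(m:ℝ)| < 1 := by
      by_contra hcon
      push_neg at hcon
      nlinarith
    have : m = 0 := by
      have h' : |(m:ℝ)| = ((|m| : ℤ) : ℝ) := by push_cast; rfl
      rw [h'] at hm1
      have : |m| < 1 := by exact_mod_cast hm1
      exact Int.abs_lt_one_iff.mp this
    rw [this] at hst'
    push_cast at hst'
    linarith
  refine ⟨d, 2*π - d, Φ, hab, hΦc, hinj, ?_, ?_, ?_⟩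
  · rintro y ⟨s, _, rfl⟩
    exact Subtype.mem _
  · rintro ⟨s, hs, hsz⟩
    have h1 : Φ s = Φ 0 := by rw [hsz, hΦ0]
    have h2 : Circle.exp (θ0 + s) = Circle.exp (θ0 + 0) := e.injective (Subtype.ext h1)
    obtain ⟨m, hm⟩ := Circle.exp_eq_exp.mp h2
    have hs' : s = m * (2*π) := by linarith
    have : (0:ℝ) < s := lt_of_lt_of_le hdpos hs.1
    have : s < 2*π := by have := hs.2; nlinarith
    rw [hs'] at this ‹(0:ℝ) < s›
    have hm0 : (0:ℝ) < (m:ℝ) := by nlinarith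
    have hm2 : (m:ℝ) < 1 := by nlinarith
    have : (0:ℤ) < m := by exact_mod_cast hm0
    have : m < 1 := by exact_mod_cast hm2
    omega
  · intro y hy hyβ
    set x : Circle := e.symm ⟨y, hy⟩ with hx
    set t1 : ℝ := Complex.arg (x : ℂ) with ht1
    have hexpx : Circle.exp t1 = x := Circle.exp_arg x
    set s : ℝ := (t1 - θ0) - ⌊(t1 - θ0) / (2*π)⌋ * (2*π) with hs
    have h2πpos : (0:ℝ) < 2*π := by positivity
    have hs0 : 0 ≤ s := Int.sub_floor_div_mul_nonneg (t1 - θ0) h2πpos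
    have hs2π : s < 2*π := Int.sub_floor_div_mul_lt (t1 - θ0) h2πpos
    have hΦs : Φ s = y := by
      rw [hΦ]
      beta_reduce
      have : Circle.exp (θ0 + s) = x := by
        rw [← hexpx]
        apply Circle.exp_eq_exp.mpr
        exact ⟨-⌊(t1 - θ0) / (2*π)⌋, by rw [hs]; push_cast; ring⟩
      rw [this, hx, Homeomorph.apply_symm_apply]
    by_cases hmem : s ∈ Icc d (2*π - d)
    · exact absurd ⟨s, hmem, hΦs⟩ hyβ
    · rw [mem_Icc, not_and_or] at hmem
      push_neg at hmem
      rcases hmem with h | h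
      · rw [← hΦs]
        apply hΦnear
        rw [_root_.abs_of_nonneg hs0]
        linarith
      · have hΦs' : Φ (s - 2*π) = Φ s := by
          rw [hΦ]
          beta_reduce
          congr 1
          congr 1
          apply Circle.exp_eq_exp.mpr
          exact ⟨-1, by push_cast; ring⟩
        rw [← hΦs, ← hΦs']
        apply hΦnear
        rw [_root_.abs_of_nonpos (by linarith)]
        linarith

/-- Every point of a Jordan curve is in the closure of any unbounded complementary component. -/
lemma jordan_closure_unbounded {J : Set Plane} (e : Circle ≃ₜ J) {z : Plane} (hz : z ∈ J)
    {x₀ : Plane} (hx₀ : x₀ ∉ J) (hx₀u : ¬ IsBounded (connectedComponentIn Jᶜ x₀)) :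
    z ∈ closure (connectedComponentIn Jᶜ x₀) := by
  haveI : CompactSpace J := e.compactSpace
  have hJcpt : IsCompact J := isCompact_iff_compactSpace.mpr ‹_›
  have hJcl : IsClosed J := hJcpt.isClosed
  set E := connectedComponentIn Jᶜ x₀ with hE
  by_contra hcl
  have hEopen : IsOpen E := hJcl.isOpen_compl.connectedComponentIn
  have hEne : (closure E).Nonempty := ⟨x₀, subset_closure (mem_connectedComponentIn hx₀)⟩
  have hρpos : 0 < infDist z (closure E) :=
    (isClosed_closure.notMem_iff_infDist_pos hEne).mp hcl
  set ρ := infDist z (closure E) with hρ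
  obtain ⟨aa, bb, F, hab, hFc, hFinj, hβJ, hzβ, hnear⟩ := exists_arc e hz (by linarith : (0:ℝ) < ρ/2)
  set β : Set Plane := F '' Icc aa bb with hβ
  have hβcpt : IsCompact β := isCompact_Icc.image hFc
  have hx₀β : x₀ ∉ β := fun h => hx₀ (hβJ h)
  -- both z and x₀ have unbounded components in βᶜ
  have hzcomp : ¬ IsBounded (connectedComponentIn βᶜ z) := arc_no_bounded_comp hab hFc hFinj hzβ
  have hx₀comp : ¬ IsBounded (connectedComponentIn βᶜ x₀) := by
    intro hb
    apply hx₀u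
    apply hb.subset
    exact connectedComponentIn_mono x₀ (compl_subset_compl.mpr hβJ)
  obtain ⟨R, hRpos, hRsub⟩ := hβcpt.isBounded.subset_ball_lt 0 0
  have hcompeq : connectedComponentIn βᶜ z = connectedComponentIn βᶜ x₀ :=
    comp_unbounded_eq hRpos hRsub hzβ hx₀β hzcomp hx₀comp
  set C0 := connectedComponentIn βᶜ z with hC0
  have hC0open : IsOpen C0 := hβcpt.isClosed.isOpen_compl.connectedComponentIn
  have hC0conn : IsConnected C0 := isConnected_connectedComponentIn_iff.mpr hzβ
  have hC0path : IsPathConnected C0 := hC0open.isConnected_iff_isPathConnected.mp hC0conn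
  have hzC0 : z ∈ C0 := mem_connectedComponentIn hzβ
  have hx₀C0 : x₀ ∈ C0 := by rw [hcompeq]; exact mem_connectedComponentIn hx₀β
  have hjoined : JoinedIn C0 z x₀ := hC0path.joinedIn z hzC0 x₀ hx₀C0
  set γ := hjoined.somePath with hγ
  set u : ℝ → Plane := ⇑γ.extend with hu
  have huc : Continuous u := γ.continuous_extend
  have hu0 : u 0 = z := γ.extend_zero
  have hu1 : u 1 = x₀ := γ.extend_one
  have humem : ∀ t : ℝ, u t ∈ C0 := by
    intro t
    rw [hu, Path.extend]
    exact hjoined.somePath_mem _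
  have huβ : ∀ t : ℝ, u t ∈ βᶜ := fun t => connectedComponentIn_subset _ _ (humem t)
  set T : Set ℝ := {t | t ∈ Icc (0:ℝ) 1 ∧ u t ∈ closure E} with hT
  have hTne : T.Nonempty := ⟨1, ⟨by norm_num, by rw [hu1]; exact subset_closure (mem_connectedComponentIn hx₀)⟩⟩
  have hTclosed : IsClosed T := by
    have : T = Icc (0:ℝ) 1 ∩ u ⁻¹' (closure E) := rfl
    rw [this]
    exact isClosed_Icc.inter (isClosed_closure.preimage huc)
  have hTbdd : BddBelow T := ⟨0, fun t ht => ht.1.1⟩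
  set t0 := sInf T with ht0
  have ht0T : t0 ∈ T := hTclosed.csInf_mem hTne hTbdd
  have ht0Icc : t0 ∈ Icc (0:ℝ) 1 := ht0T.1
  have ht0E : u t0 ∈ closure E := ht0T.2
  have ht0pos : 0 < t0 := by
    rcases lt_or_eq_of_le ht0Icc.1 with h | h
    · exact h
    · exfalso
      rw [← h] at ht0E
      rw [hu0] at ht0E
      exact hcl ht0E
  have hnotE : u t0 ∉ E := by
    intro hmem
    have hpre : u ⁻¹' E ∈ nhds t0 := (hEopen.preimage huc).mem_nhds hmem
    obtain ⟨δ, hδpos, hδ⟩ := Metric.mem_nhds_iff.mp hpre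
    set t' := max 0 (t0 - δ/2) with ht'
    have ht'lt : t' < t0 := by
      apply max_lt ht0pos
      linarith
    have ht'mem : t' ∈ ball t0 δ := by
      rw [mem_ball, Real.dist_eq]
      rw [abs_of_nonpos (by linarith)]
      have : t0 - δ/2 ≤ t' := le_max_right _ _
      linarith
    have ht'T : t' ∈ T := by
      refine ⟨⟨le_max_left _ _, le_trans (le_of_lt ht'lt) ht0Icc.2⟩, ?_⟩
      exact subset_closure (hδ ht'mem)
    have := csInf_le hTbdd ht'T
    linarith
  have hfront : u t0 ∈ J := by
    apply frontier_cci_subset hJcl x₀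
    rw [hEopen.frontier_eq]
    exact ⟨ht0E, hnotE⟩
  have hdist : dist (u t0) z < ρ/2 := hnear _ hfront (huβ t0)
  have : ρ ≤ dist z (u t0) := infDist_le_dist_of_mem ht0E
  rw [dist_comm] at this
  linarith


end

end JordanCurveAux

end JordanCurveAuxSection

section MainTheorem

open Complex Set Metric Bornology Real

noncomputable section

theorem stmt0 (J J' : Set Plane) (hJ : IsJordanCurve J) (hJ' : IsJordanCurve J')
    (h : J ⊆ closure (intRegion J')) : intRegion J ⊆ intRegion J' := by
  obtain ⟨e⟩ := hJ
  obtain ⟨e'⟩ := hJ'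
  haveI : CompactSpace J := e.compactSpace
  haveI : CompactSpace J' := e'.compactSpace
  have hJcpt : IsCompact J := isCompact_iff_compactSpace.mpr ‹_›
  have hJ'cpt : IsCompact J' := isCompact_iff_compactSpace.mpr ‹_›
  have hJcl : IsClosed J := hJcpt.isClosed
  have hJ'cl : IsClosed J' := hJ'cpt.isClosed
  obtain ⟨R, hRpos, hRsub⟩ := hJ'cpt.isBounded.subset_ball_lt 0 0
  -- the far point
  set x₀ : Plane := (R + 1, 0) with hx₀def
  have hx₀V : x₀ ∈ JordanCurveAux.V R := by
    simp only [JordanCurveAux.V, mem_setOf_eq, Prod.norm_def, Real.norm_eq_abs, abs_zero]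
    rw [abs_of_pos (by linarith : (0:ℝ) < R + 1), show x₀.2 = 0 from rfl, abs_zero,
      max_eq_left (by linarith : (0:ℝ) ≤ R + 1)]
    linarith
  have hVJ' : JordanCurveAux.V R ⊆ J'ᶜ := by
    intro p hp hpJ'
    have := hRsub hpJ'
    rw [mem_ball_zero_iff] at this
    exact absurd hp (by simp only [JordanCurveAux.V, mem_setOf_eq]; linarith)
  have hx₀J' : x₀ ∉ J' := hVJ' hx₀V
  set E := connectedComponentIn J'ᶜ x₀ with hE
  have hVE : JordanCurveAux.V R ⊆ E := JordanCurveAux.V_subset_comp hRpos hRsub hx₀V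
  have hEunb : ¬ IsBounded E := fun hb => JordanCurveAux.V_unbounded hRpos (hb.subset hVE)
  -- E misses J (uses the hypothesis h)
  have hEJ : ∀ p ∈ E, p ∉ J := by
    intro p hpE hpJ
    have hpc : p ∈ closure (intRegion J') := h hpJ
    have hEopen : IsOpen E := hJ'cl.isOpen_compl.connectedComponentIn
    obtain ⟨w, hwE, hwint⟩ := mem_closure_iff.mp hpc E hEopen hpE
    have hwcomp : connectedComponentIn J'ᶜ w = E := (connectedComponentIn_eq hwE).symm
    apply hEunb
    rw [← hwcomp]
    exact hwint.2
  -- hence E is inside the unbounded component of Jᶜ ; E misses intRegion J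
  have hEint : ∀ p ∈ E, p ∉ intRegion J := by
    intro p hpE hpint
    have hEJc : E ⊆ Jᶜ := fun q hq => hEJ q hq
    have hEconn : IsPreconnected E := isPreconnected_connectedComponentIn
    have hsub : E ⊆ connectedComponentIn Jᶜ p := hEconn.subset_connectedComponentIn hpE hEJc
    exact hEunb (hpint.2.subset hsub)
  intro z hz
  -- step 1 : z ∉ J'
  have hzJ' : z ∉ J' := by
    intro hzJ'
    have hcl : z ∈ closure E := JordanCurveAux.jordan_closure_unbounded e' hzJ' hx₀J' hEunb
    have hzopen : IsOpen (intRegion J) := JordanCurveAux.isOpen_intRegion hJcl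
    obtain ⟨w, hwE, hwint⟩ := mem_closure_iff.mp hcl (intRegion J) hzopen hz
    exact hEint w hwint hwE
  -- step 2 : the component of z in J'ᶜ is bounded
  refine ⟨hzJ', ?_⟩
  by_contra hunb
  have : connectedComponentIn J'ᶜ z = E :=
    JordanCurveAux.comp_unbounded_eq hRpos hRsub hzJ' hx₀J' hunb hEunb
  have hzE : z ∈ E := this ▸ mem_connectedComponentIn hzJ'
  exact hEint z hzE hz


end

end MainTheorem
end

section
/- Let γ ⊂ ℝ² be a topological line (a subset homeomorphic to ℝ) and let σ ⊂ ℝ² be another topological line such that σ \ γ is a portion of σ (open, connected, relatively compact, and nonempty proper as a subset of σ in the subspace topology, where 'portion' means its preimage under any homeomorphism ℝ → σ is a bounded open interval), and γ \ σ is a portion of γ. Then γ \ σ is nonempty. -/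
/-- A topological line: a subset of the plane homeomorphic to `ℝ`. -/
def IsTopLine (γ : Set Plane) : Prop := Nonempty (ℝ ≃ₜ γ)

/-- A portion of a topological line `γ` : a subset whose preimage under any
parametrizing homeomorphism `ℝ ≃ₜ γ` is a bounded open interval. -/
def IsPortion (γ π : Set Plane) : Prop :=
  π ⊆ γ ∧ ∀ Φ : ℝ ≃ₜ γ, ∃ a b : ℝ, {t : ℝ | (Φ t : Plane) ∈ π} = Set.Ioo a b

/-- The Jordan curve associated with two topological lines. -/
noncomputable def lineJ (γ γ' : Set Plane) : Set Plane := closure (symmDiff γ γ')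

theorem stmt4 (γ σ : Set Plane) (hγ : IsTopLine γ) (hσ : IsTopLine σ) (hne : γ ≠ σ)
    (h1 : IsPortion σ (σ \ γ)) (h2 : IsPortion γ (γ \ σ)) :
    (γ \ σ).Nonempty := by
  rw [Set.nonempty_iff_ne_empty]
  intro hempty
  have hsub : γ ⊆ σ := Set.diff_eq_empty.mp hempty
  obtain ⟨Φ⟩ := hσ
  obtain ⟨Ψ⟩ := hγ
  set f : ℝ → Plane := fun t => (Φ t : Plane) with hf
  obtain ⟨a, b, hab⟩ := h1.2 Φ
  have hab' : f ⁻¹' (σ \ γ) = Set.Ioo a b := hab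
  -- σ \ γ nonempty, hence a < b
  have hssub : σ \ γ ≠ ∅ := by
    intro h
    exact hne (Set.Subset.antisymm hsub (Set.diff_eq_empty.mp h))
  obtain ⟨x, hx⟩ := Set.nonempty_iff_ne_empty.mpr hssub
  have hxr : x ∈ Set.range f := by
    refine ⟨Φ.symm ⟨x, hx.1⟩, ?_⟩
    simp [hf]
  obtain ⟨t₀, ht₀⟩ := hxr
  have ht₀' : t₀ ∈ Set.Ioo a b := by
    rw [← hab']; simp only [Set.mem_preimage, ht₀]; exact hx
  have hlt : a < b := lt_trans ht₀'.1 ht₀'.2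
  -- f is inducing
  have hind : Topology.IsInducing f := by
    have : Topology.IsInducing (Subtype.val : σ → Plane) := Topology.IsInducing.subtypeVal
    exact this.comp Φ.isInducing
  have hrange : Set.range f = σ := by
    ext z; constructor
    · rintro ⟨t, rfl⟩; exact (Φ t).2
    · intro hz; exact ⟨Φ.symm ⟨z, hz⟩, by simp [hf]⟩
  -- image of the complement is γ
  have himg : f '' (Set.Ioo a b)ᶜ = γ := by
    rw [← hab', ← Set.preimage_compl, Set.image_preimage_eq_inter_range, hrange]
    ext z
    simp only [Set.mem_inter_iff, Set.mem_compl_iff, Set.mem_diff]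
    have := @hsub z
    tauto
  -- γ is preconnected
  have hγconn : IsPreconnected γ := by
    have : γ = Set.range (fun t => (Ψ t : Plane)) := by
      ext z; constructor
      · intro hz; exact ⟨Ψ.symm ⟨z, hz⟩, by simp⟩
      · rintro ⟨t, rfl⟩; exact (Ψ t).2
    rw [this]
    exact isPreconnected_range (continuous_subtype_val.comp Ψ.continuous)
  -- hence (Ioo a b)ᶜ is preconnected
  have hpre : IsPreconnected (Set.Ioo a b)ᶜ := by
    rw [← hind.isPreconnected_image, himg]; exact hγconn
  -- but it is not
  have hord := hpre.ordConnected
  have hmid : (a + b) / 2 ∈ Set.Icc a b :=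
    ⟨by linarith, by linarith⟩
  have := hord.out (s := (Set.Ioo a b)ᶜ)
    (x := a) (y := b) (by simp) (by simp) ⟨hmid.1, hmid.2⟩
  exact this (by constructor <;> [linarith; linarith])
end

section
/- Let γ, γ' ⊂ ℝ² be distinct topological lines such that γ \ γ' is a portion of γ and γ' \ γ is a portion of γ'. Then the closure of the symmetric difference, J(γ, γ') := cl(γ △ γ'), is a Jordan curve. -/
open Set Topology

/-- A preconnected subset of ℝ avoiding an open interval lies on one side. -/
lemma ray_split {a b : ℝ} (hab : a < b) {s : Set ℝ} (hs : IsPreconnected s)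
    (h : s ⊆ (Set.Ioo a b)ᶜ) : s ⊆ Set.Iic a ∨ s ⊆ Set.Ici b := by
  by_contra hc
  push_neg at hc
  obtain ⟨h1, h2⟩ := hc
  obtain ⟨x, hxs, hx⟩ := not_subset.mp h1
  obtain ⟨y, hys, hy⟩ := not_subset.mp h2
  simp only [mem_Iic, not_le, mem_Ici] at hx hy
  have hxb : b ≤ x := by
    by_contra hxb
    exact h hxs ⟨hx, lt_of_not_ge hxb⟩
  have hya : y ≤ a := by
    by_contra hya
    exact h hys ⟨lt_of_not_ge hya, hy⟩
  have hmid : (a + b) / 2 ∈ Icc y x := ⟨by linarith, by linarith⟩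
  have := hs.ordConnected.out hys hxs hmid
  exact h this ⟨by linarith, by linarith⟩

/-- Endpoint identification: if two embedded closed rays coincide as sets,
their endpoints coincide. -/
lemma endpoint_eq {F F' : ℝ → Plane} (hF : IsEmbedding F) (hF' : IsEmbedding F')
    {a a' : ℝ} (h : F '' Set.Iic a = F' '' Set.Iic a') : F a = F' a' := by
  have hFa : F a ∈ F' '' Set.Iic a' := by rw [← h]; exact ⟨a, self_mem_Iic, rfl⟩
  obtain ⟨t, ht, hteq⟩ := hFa
  rcases eq_or_lt_of_le (show t ≤ a' from ht) with rfl | hlt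
  · exact hteq.symm
  · exfalso
    have h1 : F' '' (Set.Iic a' \ {t}) = F '' Set.Iio a := by
      rw [image_diff hF'.injective, image_singleton, hteq, ← h,
        ← image_singleton (f := F), ← image_diff hF.injective, Iic_diff_right]
    have hpc : IsPreconnected (Set.Iic a' \ {t}) := by
      rw [← hF'.toIsInducing.isPreconnected_image, h1]
      exact isPreconnected_Iio.image F hF.continuous.continuousOn
    have hmem1 : t - 1 ∈ Set.Iic a' \ {t} := ⟨by simp; linarith, by simp⟩
    have hmem2 : a' ∈ Set.Iic a' \ {t} := ⟨self_mem_Iic, by simp [ne_of_gt hlt]⟩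
    have := hpc.ordConnected.out hmem1 hmem2 ⟨by linarith, le_of_lt hlt⟩
    exact this.2 rfl

lemma jordan_core {γ γ' : Set Plane} {F F' : ℝ → Plane}
    (hF : IsEmbedding F) (hF' : IsEmbedding F')
    (hrF : Set.range F = γ) (hrF' : Set.range F' = γ')
    {a b a' b' : ℝ} (hab : a < b) (hab' : a' < b')
    (hmem : ∀ t, F t ∈ γ' ↔ t ∉ Set.Ioo a b)
    (hmem' : ∀ t, F' t ∈ γ ↔ t ∉ Set.Ioo a' b')
    (hIic : F '' Set.Iic a = F' '' Set.Iic a') :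
    IsJordanCurve (lineJ γ γ') := by
  have hside : ∀ (c d t : ℝ), t ∉ Set.Ioo c d ↔ t ∈ Set.Iic c ∪ Set.Ici d := by
    intro c d t
    simp only [mem_Ioo, not_and_or, not_lt, mem_union, mem_Iic, mem_Ici]
  -- the common part
  have hcap : γ ∩ γ' = F '' (Set.Iic a ∪ Set.Ici b) := by
    ext z
    constructor
    · rintro ⟨hz, hz'⟩
      obtain ⟨t, rfl⟩ := hrF ▸ hz
      exact ⟨t, (hside a b t).mp ((hmem t).mp hz'), rfl⟩
    · rintro ⟨t, ht, rfl⟩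
      exact ⟨hrF ▸ mem_range_self t, (hmem t).mpr ((hside a b t).mpr ht)⟩
  have hcap' : γ ∩ γ' = F' '' (Set.Iic a' ∪ Set.Ici b') := by
    ext z
    constructor
    · rintro ⟨hz, hz'⟩
      obtain ⟨t, rfl⟩ := hrF' ▸ hz'
      exact ⟨t, (hside a' b' t).mp ((hmem' t).mp hz), rfl⟩
    · rintro ⟨t, ht, rfl⟩
      exact ⟨(hmem' t).mpr ((hside a' b' t).mpr ht), hrF' ▸ mem_range_self t⟩
  have hIci : F '' Set.Ici b = F' '' Set.Ici b' := by
    have e1 : (F '' Set.Iic a ∪ F '' Set.Ici b) \ (F '' Set.Iic a) = F '' Set.Ici b := by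
      apply union_diff_cancel_left
      rintro z ⟨⟨s, hs, rfl⟩, ⟨u, hu, huz⟩⟩
      exfalso
      have h := hF.injective huz
      simp only [mem_Iic, mem_Ici] at hs hu
      rw [h] at hu
      linarith
    have e2 : (F' '' Set.Iic a' ∪ F' '' Set.Ici b') \ (F' '' Set.Iic a') = F' '' Set.Ici b' := by
      apply union_diff_cancel_left
      rintro z ⟨⟨s, hs, rfl⟩, ⟨u, hu, huz⟩⟩
      exfalso
      have h := hF'.injective huz
      simp only [mem_Iic, mem_Ici] at hs hu
      rw [h] at hu
      linarith
    rw [← e1, ← e2, ← image_union, ← image_union, ← hcap, ← hcap', hIic]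
  have hpa : F a = F' a' := endpoint_eq hF hF' hIic
  have hpb : F b = F' b' := by
    have hnegemb : IsEmbedding (fun t : ℝ => -t) := (Homeomorph.neg ℝ).isEmbedding
    have h1 : (F ∘ fun t : ℝ => -t) '' Set.Iic (-b) = (F' ∘ fun t : ℝ => -t) '' Set.Iic (-b') := by
      rw [image_comp, image_comp]
      have : (fun t : ℝ => -t) '' Set.Iic (-b) = Set.Ici b := by
        ext x; simp only [mem_image, mem_Iic, mem_Ici]
        constructor
        · rintro ⟨y, hy, rfl⟩; linarith
        · intro hx; exact ⟨-x, by linarith, by ring⟩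
      rw [this]
      have : (fun t : ℝ => -t) '' Set.Iic (-b') = Set.Ici b' := by
        ext x; simp only [mem_image, mem_Iic, mem_Ici]
        constructor
        · rintro ⟨y, hy, rfl⟩; linarith
        · intro hx; exact ⟨-x, by linarith, by ring⟩
      rw [this, hIci]
    have := endpoint_eq (hF.comp hnegemb) (hF'.comp hnegemb) h1
    simpa using this
  -- description of J
  have hdiff : γ \ γ' = F '' Set.Ioo a b := by
    ext z
    constructor
    · rintro ⟨hz, hz'⟩
      obtain ⟨t, rfl⟩ := hrF ▸ hz
      exact ⟨t, by_contra fun ht => hz' ((hmem t).mpr ht), rfl⟩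
    · rintro ⟨t, ht, rfl⟩
      exact ⟨hrF ▸ mem_range_self t, fun hz' => ((hmem t).mp hz') ht⟩
  have hdiff' : γ' \ γ = F' '' Set.Ioo a' b' := by
    ext z
    constructor
    · rintro ⟨hz, hz'⟩
      obtain ⟨t, rfl⟩ := hrF' ▸ hz
      exact ⟨t, by_contra fun ht => hz' ((hmem' t).mpr ht), rfl⟩
    · rintro ⟨t, ht, rfl⟩
      exact ⟨hrF' ▸ mem_range_self t, fun hz' => ((hmem' t).mp hz') ht⟩
  have hclo : ∀ (G : ℝ → Plane) (c d : ℝ), c < d → IsEmbedding G →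
      closure (G '' Set.Ioo c d) = G '' Set.Icc c d := by
    intro G c d hcd hG
    apply subset_antisymm
    · exact closure_minimal (image_mono Ioo_subset_Icc_self)
        ((isCompact_Icc.image hG.continuous).isClosed)
    · rw [← closure_Ioo hcd.ne]
      exact image_closure_subset_closure_image hG.continuous
  have hJ : lineJ γ γ' = F '' Set.Icc a b ∪ F' '' Set.Icc a' b' := by
    rw [lineJ, Set.symmDiff_def, hdiff, hdiff', closure_union,
      hclo F a b hab hF, hclo F' a' b' hab' hF']
  -- build the homeomorphism
  haveI : Fact ((0:ℝ) < 2) := ⟨by norm_num⟩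
  set f : ℝ → Plane := fun t =>
    if t ≤ 1 then F (a + t * (b - a)) else F' (b' + (t - 1) * (a' - b')) with hfdef
  have hval1 : ∀ t : ℝ, t ≤ 1 → f t = F (a + t * (b - a)) := fun t ht => if_pos ht
  have hval2 : ∀ t : ℝ, ¬ t ≤ 1 → f t = F' (b' + (t - 1) * (a' - b')) := fun t ht => if_neg ht
  have hfc : Continuous f := by
    apply Continuous.if_le
    · exact hF.continuous.comp (by continuity)
    · exact hF'.continuous.comp (by continuity)
    · exact continuous_id
    · exact continuous_const
    · intro x hx
      subst hx
      rw [show a + 1 * (b - a) = b by ring, show b' + (1 - 1) * (a' - b') = b' by ring, hpb]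
  have hf0 : f 0 = f 2 := by
    rw [hval1 0 (by norm_num), hval2 2 (by norm_num),
      show a + 0 * (b - a) = a by ring, show b' + (2 - 1) * (a' - b') = a' by ring, hpa]
  have hinj : Set.InjOn f (Set.Ico 0 2) := by
    intro s hs u hu heq
    rcases le_or_gt s 1 with h1 | h1 <;> rcases le_or_gt u 1 with h2 | h2
    · rw [hval1 s h1, hval1 u h2] at heq
      have h := hF.injective heq
      have hba : b - a ≠ 0 := sub_ne_zero.mpr hab.ne'
      have : s * (b - a) = u * (b - a) := by linarith [h]
      exact mul_right_cancel₀ hba this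
    · exfalso
      rw [hval1 s h1, hval2 u (not_le.mpr h2)] at heq
      have h3 : b' + (u - 1) * (a' - b') ∈ Set.Ioo a' b' :=
        ⟨by nlinarith [hu.2], by nlinarith [hu.2]⟩
      have h4 : F (a + s * (b - a)) ∈ γ := hrF ▸ mem_range_self _
      rw [heq] at h4
      exact (hmem' _).mp h4 h3
    · exfalso
      rw [hval2 s (not_le.mpr h1), hval1 u h2] at heq
      have h3 : b' + (s - 1) * (a' - b') ∈ Set.Ioo a' b' :=
        ⟨by nlinarith [hs.2], by nlinarith [hs.2]⟩
      have h4 : F (a + u * (b - a)) ∈ γ := hrF ▸ mem_range_self _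
      rw [← heq] at h4
      exact (hmem' _).mp h4 h3
    · rw [hval2 s (not_le.mpr h1), hval2 u (not_le.mpr h2)] at heq
      have h := hF'.injective heq
      have hba : a' - b' ≠ 0 := sub_ne_zero.mpr hab'.ne
      have : (s - 1) * (a' - b') = (u - 1) * (a' - b') := by linarith [h]
      have := mul_right_cancel₀ hba this
      linarith
  set G : AddCircle (2:ℝ) → Plane := AddCircle.liftIco 2 0 f with hGdef'
  have hGc : Continuous G := AddCircle.liftIco_zero_continuous hf0 hfc.continuousOn
  have hGdef : ∀ x, G x = f ((AddCircle.equivIco 2 0 x : ℝ)) := fun x => rfl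
  have hmem0 : ∀ x : AddCircle (2:ℝ), ((AddCircle.equivIco 2 0 x : ℝ)) ∈ Set.Ico (0:ℝ) 2 :=
    fun x => by simpa using (AddCircle.equivIco 2 0 x).2
  have hGinj : Function.Injective G := by
    intro x y hxy
    rw [hGdef, hGdef] at hxy
    have h := hinj (hmem0 x) (hmem0 y) hxy
    have := (AddCircle.equivIco 2 0).injective (Subtype.ext h)
    exact this
  have himg1 : f '' Set.Icc 0 1 = F '' Set.Icc a b := by
    ext z
    constructor
    · rintro ⟨t, ⟨ht0, ht1⟩, rfl⟩
      rw [hval1 t ht1]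
      exact ⟨_, ⟨by nlinarith, by nlinarith⟩, rfl⟩
    · rintro ⟨y, ⟨hy1, hy2⟩, rfl⟩
      have hba : (0:ℝ) < b - a := by linarith
      have hle : (y - a) / (b - a) ≤ 1 := (div_le_one hba).mpr (by linarith)
      refine ⟨(y - a) / (b - a), ⟨div_nonneg (by linarith) hba.le, hle⟩, ?_⟩
      rw [hval1 _ hle]
      congr 1
      field_simp
      ring
  have himg2 : f '' Set.Ioo 1 2 = F' '' Set.Ioo a' b' := by
    ext z
    constructor
    · rintro ⟨t, ⟨ht0, ht1⟩, rfl⟩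
      rw [hval2 t (not_le.mpr ht0)]
      exact ⟨_, ⟨by nlinarith, by nlinarith⟩, rfl⟩
    · rintro ⟨y, ⟨hy1, hy2⟩, rfl⟩
      have hba : (0:ℝ) < b' - a' := by linarith
      have hpos : 0 < (b' - y) / (b' - a') := div_pos (by linarith) hba
      have hlt : (b' - y) / (b' - a') < 1 := (div_lt_one hba).mpr (by linarith)
      refine ⟨1 + (b' - y) / (b' - a'), ⟨by linarith, by linarith⟩, ?_⟩
      rw [hval2 _ (by push_neg; linarith)]
      congr 1
      field_simp
      ring
  have hGrange : Set.range G = lineJ γ γ' := by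
    have h1 : Set.range G = f '' Set.Ico 0 2 := by
      ext z
      constructor
      · rintro ⟨x, rfl⟩
        exact ⟨_, hmem0 x, (hGdef x).symm⟩
      · rintro ⟨t, ht, rfl⟩
        exact ⟨(t : AddCircle (2:ℝ)), AddCircle.liftIco_zero_coe_apply ht⟩
    rw [hJ, h1, show Set.Ico (0:ℝ) 2 = Set.Icc 0 1 ∪ Set.Ioo 1 2 from
      (Set.Icc_union_Ioo_eq_Ico (by norm_num) (by norm_num)).symm, image_union, himg1, himg2]
    apply subset_antisymm
    · exact union_subset_union_right _ (image_mono Ioo_subset_Icc_self)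
    · rintro z (hz | ⟨t, ht, rfl⟩)
      · exact Or.inl hz
      · rcases eq_or_lt_of_le (show a' ≤ t from ht.1) with rfl | h1
        · exact Or.inl ⟨a, ⟨le_refl a, hab.le⟩, hpa⟩
        · rcases eq_or_lt_of_le (show t ≤ b' from ht.2) with h2 | h2
          · rw [h2]
            exact Or.inl ⟨b, ⟨hab.le, le_refl b⟩, hpb⟩
          · exact Or.inr ⟨t, ⟨h1, h2⟩, rfl⟩
  have hmemJ : ∀ x, G x ∈ lineJ γ γ' := fun x => hGrange ▸ mem_range_self x
  have hbij : Function.Bijective (fun x => (⟨G x, hmemJ x⟩ : lineJ γ γ')) := by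
    constructor
    · intro x y h
      exact hGinj (congrArg Subtype.val h)
    · rintro ⟨z, hz⟩
      obtain ⟨x, hx⟩ : z ∈ Set.range G := hGrange.symm ▸ hz
      exact ⟨x, Subtype.ext hx⟩
  set e : AddCircle (2:ℝ) ≃ lineJ γ γ' := Equiv.ofBijective _ hbij with hedef
  have hec : Continuous e := Continuous.subtype_mk hGc _
  exact ⟨(AddCircle.homeomorphCircle (by norm_num : (2:ℝ) ≠ 0)).symm.trans
    (Continuous.homeoOfEquivCompactToT2 (f := e) hec)⟩

/-- A ray of one line in the common part lies inside one of the rays of the other. -/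
lemma ray_subset {γ γ' : Set Plane} {F F' : ℝ → Plane}
    (hF : IsEmbedding F) (hF' : IsEmbedding F')
    (hrF : Set.range F = γ) (hrF' : Set.range F' = γ')
    {a' b' : ℝ} (hab' : a' < b')
    (hmem' : ∀ t, F' t ∈ γ ↔ t ∉ Set.Ioo a' b')
    (s : Set ℝ) (hs : IsPreconnected s) (hsub : ∀ t ∈ s, F t ∈ γ') :
    F '' s ⊆ F' '' Set.Iic a' ∨ F '' s ⊆ F' '' Set.Ici b' := by
  set T : Set ℝ := F' ⁻¹' (F '' s) with hT
  have hsub2 : F '' s ⊆ Set.range F' := by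
    rintro z ⟨t, ht, rfl⟩
    exact hrF' ▸ hsub t ht
  have hT1 : F' '' T = F '' s := Set.image_preimage_eq_of_subset hsub2
  have hT2 : IsPreconnected T := by
    rw [← hF'.toIsInducing.isPreconnected_image, hT1]
    exact hs.image F hF.continuous.continuousOn
  have hT3 : T ⊆ (Set.Ioo a' b')ᶜ := by
    intro t ht
    obtain ⟨u, hu, huf⟩ := ht
    have : F' t ∈ γ := by rw [← huf]; exact hrF ▸ mem_range_self u
    exact (hmem' t).mp this
  rcases ray_split hab' hT2 hT3 with h | h
  · exact Or.inl (by rw [← hT1]; exact image_mono h)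
  · exact Or.inr (by rw [← hT1]; exact image_mono h)

lemma jordan_aux {γ γ' : Set Plane} {F F' : ℝ → Plane}
    (hF : IsEmbedding F) (hF' : IsEmbedding F')
    (hrF : Set.range F = γ) (hrF' : Set.range F' = γ')
    {a b a' b' : ℝ} (hab : a < b) (hab' : a' < b')
    (hmem : ∀ t, F t ∈ γ' ↔ t ∉ Set.Ioo a b)
    (hmem' : ∀ t, F' t ∈ γ ↔ t ∉ Set.Ioo a' b') :
    IsJordanCurve (lineJ γ γ') := by
  have hS : F '' Set.Iic a ⊆ F' '' Set.Iic a' ∨ F '' Set.Iic a ⊆ F' '' Set.Ici b' :=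
    ray_subset hF hF' hrF hrF' hab' hmem' _ isPreconnected_Iic
      (fun t ht => (hmem t).mpr (fun hIoo => absurd ht (not_le.mpr hIoo.1)))
  have hS' : ∀ s : Set ℝ, IsPreconnected s → (∀ t ∈ s, F' t ∈ γ) →
      F' '' s ⊆ F '' Set.Iic a ∨ F' '' s ⊆ F '' Set.Ici b :=
    fun s hs h => ray_subset hF' hF hrF' hrF hab hmem s hs h
  have habs : ∀ {S : Set Plane}, F a ∈ S → S ⊆ F '' Set.Ici b → False := by
    intro S hmemS hsubS
    obtain ⟨u, hu, huf⟩ := hsubS hmemS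
    have := hF.injective huf
    rw [this] at hu
    exact absurd hu (not_le.mpr hab)
  have hIica' : ∀ t ∈ Set.Iic a', F' t ∈ γ :=
    fun t ht => (hmem' t).mpr (fun hIoo => absurd ht (not_le.mpr hIoo.1))
  have hIcib' : ∀ t ∈ Set.Ici b', F' t ∈ γ :=
    fun t ht => (hmem' t).mpr (fun hIoo => absurd ht (not_le.mpr hIoo.2))
  rcases hS with h | h
  · -- F '' Iic a ⊆ F' '' Iic a' ; get reverse inclusion
    rcases hS' (Set.Iic a') isPreconnected_Iic hIica' with h2 | h2
    · exact jordan_core hF hF' hrF hrF' hab hab' hmem hmem' (subset_antisymm h h2)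
    · exact absurd (habs (h ⟨a, self_mem_Iic, rfl⟩) h2) not_false
  · -- F '' Iic a ⊆ F' '' Ici b' : swap parametrization of γ'
    rcases hS' (Set.Ici b') isPreconnected_Ici hIcib' with h2 | h2
    · have hIic2 : F '' Set.Iic a = F' '' Set.Ici b' := subset_antisymm h h2
      have hnegemb : IsEmbedding (fun t : ℝ => -t) := (Homeomorph.neg ℝ).isEmbedding
      have hnegIci : (fun t : ℝ => -t) '' Set.Iic (-b') = Set.Ici b' := by
        ext x
        simp only [mem_image, mem_Iic, mem_Ici]
        constructor
        · rintro ⟨y, hy, rfl⟩; linarith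
        · intro hx; exact ⟨-x, by linarith, by ring⟩
      refine jordan_core (F' := F' ∘ fun t : ℝ => -t) hF (hF'.comp hnegemb) hrF ?_ hab
        (show -b' < -a' by linarith) hmem ?_ ?_
      · rw [Set.range_comp, show Set.range (fun t : ℝ => -t) = Set.univ from
          (Homeomorph.neg ℝ).surjective.range_eq, image_univ, hrF']
      · intro t
        rw [Function.comp_apply, hmem' (-t)]
        constructor
        · intro hn hIoo
          exact hn ⟨by simpa using neg_lt_neg hIoo.2, by simpa using neg_lt_neg hIoo.1⟩
        · intro hn hIoo
          exact hn ⟨by linarith [hIoo.2], by linarith [hIoo.1]⟩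
      · rw [image_comp, hnegIci, hIic2]
    · exact absurd (habs (h ⟨a, self_mem_Iic, rfl⟩) h2) not_false

lemma empty_aux {γ γ' : Set Plane} {F' : ℝ → Plane}
    (hF' : IsEmbedding F') (hrF' : Set.range F' = γ')
    {a' b' : ℝ} (hmem' : ∀ t, F' t ∈ γ ↔ t ∉ Set.Ioo a' b')
    (hγ : IsPreconnected γ) (hsub : γ ⊆ γ') : ¬ a' < b' := by
  intro h
  have hT : F' ⁻¹' γ = (Set.Ioo a' b')ᶜ := by
    ext t
    simpa using hmem' t
  have himg : F' '' (F' ⁻¹' γ) = γ := Set.image_preimage_eq_of_subset (hrF' ▸ hsub)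
  have hpc : IsPreconnected ((Set.Ioo a' b')ᶜ) := by
    rw [← hT]
    exact hF'.toIsInducing.isPreconnected_image.mp (by rw [himg]; exact hγ)
  have hmid := hpc.ordConnected.out
    (show a' ∈ (Set.Ioo a' b')ᶜ by simp)
    (show b' ∈ (Set.Ioo a' b')ᶜ by simp)
    (show (a' + b') / 2 ∈ Set.Icc a' b' from ⟨by linarith, by linarith⟩)
  exact hmid ⟨by linarith, by linarith⟩

theorem stmt5 (γ γ' : Set Plane) (hγ : IsTopLine γ) (hγ' : IsTopLine γ') (hne : γ ≠ γ')
    (h1 : IsPortion γ (γ \ γ')) (h2 : IsPortion γ' (γ' \ γ)) :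
    IsJordanCurve (lineJ γ γ') := by
  obtain ⟨Φ⟩ := hγ
  obtain ⟨Φ'⟩ := hγ'
  set F : ℝ → Plane := fun t => ((Φ t : γ) : Plane) with hFdef
  set F' : ℝ → Plane := fun t => ((Φ' t : γ') : Plane) with hF'def
  have hF : IsEmbedding F := IsEmbedding.subtypeVal.comp Φ.isEmbedding
  have hF' : IsEmbedding F' := IsEmbedding.subtypeVal.comp Φ'.isEmbedding
  have hrF : Set.range F = γ := by
    rw [hFdef]
    rw [show (fun t => ((Φ t : γ) : Plane)) = (Subtype.val ∘ Φ) from rfl, Set.range_comp,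
      Φ.surjective.range_eq, image_univ, Subtype.range_coe]
  have hrF' : Set.range F' = γ' := by
    rw [hF'def]
    rw [show (fun t => ((Φ' t : γ') : Plane)) = (Subtype.val ∘ Φ') from rfl, Set.range_comp,
      Φ'.surjective.range_eq, image_univ, Subtype.range_coe]
  obtain ⟨a, b, hab⟩ := h1.2 Φ
  obtain ⟨a', b', hab'⟩ := h2.2 Φ'
  have hFin : ∀ t, F t ∈ γ := fun t => (Φ t).2
  have hF'in : ∀ t, F' t ∈ γ' := fun t => (Φ' t).2
  have hmem : ∀ t, F t ∈ γ' ↔ t ∉ Set.Ioo a b := by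
    intro t
    constructor
    · intro ht hIoo
      have : F t ∈ γ \ γ' := by rw [← hab] at hIoo; exact hIoo
      exact this.2 ht
    · intro ht
      by_contra hc
      exact ht (hab ▸ (show F t ∈ γ \ γ' from ⟨hFin t, hc⟩))
  have hmem' : ∀ t, F' t ∈ γ ↔ t ∉ Set.Ioo a' b' := by
    intro t
    constructor
    · intro ht hIoo
      have : F' t ∈ γ' \ γ := by rw [← hab'] at hIoo; exact hIoo
      exact this.2 ht
    · intro ht
      by_contra hc
      exact ht (hab' ▸ (show F' t ∈ γ' \ γ from ⟨hF'in t, hc⟩))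
  have hγpre : IsPreconnected γ := by
    rw [← hrF, ← image_univ]
    exact isPreconnected_univ.image F hF.continuous.continuousOn
  have hγ'pre : IsPreconnected γ' := by
    rw [← hrF', ← image_univ]
    exact isPreconnected_univ.image F' hF'.continuous.continuousOn
  by_cases hlt : a < b
  · by_cases hlt' : a' < b'
    · exact jordan_aux hF hF' hrF hrF' hlt hlt' hmem hmem'
    · -- γ' ⊆ γ, hence by empty_aux (roles swapped) ¬ a < b, contradiction... 
      have hsub : γ' ⊆ γ := by
        rintro z hz
        obtain ⟨t, rfl⟩ := hrF' ▸ hz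
        exact (hmem' t).mpr (fun hIoo => hlt' (hIoo.1.trans hIoo.2))
      exact absurd hlt (empty_aux hF hrF hmem hγ'pre hsub)
  · have hsub : γ ⊆ γ' := by
      rintro z hz
      obtain ⟨t, rfl⟩ := hrF ▸ hz
      exact (hmem t).mpr (fun hIoo => hlt (hIoo.1.trans hIoo.2))
    have hlt' := empty_aux hF' hrF' hmem' hγpre hsub
    have hsub' : γ' ⊆ γ := by
      rintro z hz
      obtain ⟨t, rfl⟩ := hrF' ▸ hz
      exact (hmem' t).mpr (fun hIoo => hlt' (hIoo.1.trans hIoo.2))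
    exact absurd (subset_antisymm hsub hsub') hne
end

section
/- Let Φ: ℝ → γ be a homeomorphism onto a topological line γ ⊂ ℝ², and let σ be another topological line such that γ \ σ and σ \ γ are portions of γ and σ respectively, with γ \ σ nonempty. Then there exists a homeomorphism φ: ℝ → σ and a nonempty bounded open interval I = (a, b) ⊂ ℝ such that Φ = φ on ℝ \ I, φ(I) = σ \ γ, and Φ(I) = γ \ σ. -/
open Set

lemma complIoo (a b : ℝ) : (Set.Ioo a b)ᶜ = Set.Iic a ∪ Set.Ici b := by
  ext x
  simp only [Set.mem_compl_iff, Set.mem_Ioo, Set.mem_union, Set.mem_Iic, Set.mem_Ici,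
    not_and_or, not_lt]

lemma ray_case (c d : ℝ) (hcd : c < d) (M : Set ℝ) (hM : IsPreconnected M)
    (hMT : M ⊆ (Set.Ioo c d)ᶜ) : M ⊆ Set.Iic c ∨ M ⊆ Set.Ici d := by
  by_cases hy : ∃ y ∈ M, d ≤ y
  · right
    obtain ⟨y, hyM, hdy⟩ := hy
    intro x hx
    by_contra hxd
    rw [Set.mem_Ici, not_le] at hxd
    have hxc : x ≤ c := by
      rcases (complIoo c d ▸ hMT hx : x ∈ Set.Iic c ∪ Set.Ici d) with h | h
      · exact h
      · exact absurd (Set.mem_Ici.mp h) (not_le.mpr hxd)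
    have hmid : (c + d) / 2 ∈ M := by
      have := (hM.ordConnected).out hx hyM
      exact this ⟨by linarith, by linarith⟩
    exact (hMT hmid) ⟨by linarith, by linarith⟩
  · left
    push_neg at hy
    intro x hx
    rcases (complIoo c d ▸ hMT hx : x ∈ Set.Iic c ∪ Set.Ici d) with h | h
    · exact h
    · exact absurd (Set.mem_Ici.mp h) (not_le.mpr (hy x hx))

lemma mono_ray_left (f : ℝ → ℝ) (a c : ℝ) (hc : ContinuousOn f (Set.Iic a))
    (hi : Set.InjOn f (Set.Iic a)) (him : f '' (Set.Iic a) = Set.Iic c) :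
    f a = c ∧ StrictMonoOn f (Set.Iic a) := by
  have hub : ∀ t ≤ a, f t ≤ c := by
    intro t ht
    have : f t ∈ Set.Iic c := him ▸ Set.mem_image_of_mem f (Set.mem_Iic.mpr ht)
    exact this
  have hfa : f a ≤ c := hub a le_rfl
  have hmem : ∀ y ≤ c, ∃ t ≤ a, f t = y := by
    intro y hy
    obtain ⟨t, ht, hft⟩ := (him ▸ (Set.mem_Iic.mpr hy) : y ∈ f '' Set.Iic a)
    exact ⟨t, ht, hft⟩
  have hfac : f a = c := by
    by_contra hne
    have hfac' : f a < c := lt_of_le_of_ne hfa hne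
    obtain ⟨t₀, ht₀, hft₀⟩ := hmem c le_rfl
    obtain ⟨t₁, ht₁, hft₁⟩ := hmem (min (f a) c - 1)
      (by have := min_le_right (f a) c; linarith)
    have ht₀a : t₀ < a := by
      rcases lt_or_eq_of_le ht₀ with h | h
      · exact h
      · exact absurd (h ▸ hft₀) hne
    have ht₁a : t₁ < a := by
      rcases lt_or_eq_of_le ht₁ with h | h
      · exact h
      · have := min_le_left (f a) c
        rw [h] at hft₁; linarith
    set m := min t₀ t₁ with hm
    have hma : m ≤ a := le_trans (min_le_left _ _) ht₀
    rcases (hc.mono Set.Icc_subset_Iic_self).strictMonoOn_of_injOn_Icc' hma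
        (hi.mono Set.Icc_subset_Iic_self) with hmono | hanti
    · have : f t₀ < f a :=
        hmono ⟨min_le_left _ _, ht₀⟩ ⟨hma, le_rfl⟩ ht₀a
      rw [hft₀] at this; linarith
    · have : f a < f t₁ :=
        hanti ⟨min_le_right _ _, ht₁⟩ ⟨hma, le_rfl⟩ ht₁a
      have h2 := min_le_left (f a) c
      rw [hft₁] at this; linarith
  refine ⟨hfac, ?_⟩
  intro x hx y hy hxy
  have hxa : x < a := lt_of_lt_of_le hxy hy
  rcases (hc.mono Set.Icc_subset_Iic_self).strictMonoOn_of_injOn_Icc' hxa.le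
      (hi.mono Set.Icc_subset_Iic_self) with hmono | hanti
  · exact hmono ⟨le_rfl, le_of_lt hxa⟩ ⟨hxy.le, hy⟩ hxy
  · exfalso
    have h1 : f a < f x := hanti ⟨le_rfl, hxa.le⟩ ⟨hxa.le, le_rfl⟩ hxa
    have h2 := hub x hx
    rw [hfac] at h1
    linarith

lemma mono_ray_right (f : ℝ → ℝ) (b d : ℝ) (hc : ContinuousOn f (Set.Ici b))
    (hi : Set.InjOn f (Set.Ici b)) (him : f '' (Set.Ici b) = Set.Ici d) :
    f b = d ∧ StrictMonoOn f (Set.Ici b) := by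
  have key := mono_ray_left (fun t => -f (-t)) (-b) (-d)
    (by
      have h1 : ContinuousOn (fun t : ℝ => f (-t)) (Set.Iic (-b)) := by
        apply ContinuousOn.comp hc continuousOn_neg
        intro x hx
        simp only [Set.mem_Ici]
        have := Set.mem_Iic.mp hx; linarith
      exact h1.neg)
    (by
      intro x hx y hy hxy
      have h0 : f (-x) = f (-y) := by
        have h := hxy
        simp only at h
        linarith
      have := hi (Set.mem_Ici.mpr (by have := Set.mem_Iic.mp hx; linarith))
        (Set.mem_Ici.mpr (by have := Set.mem_Iic.mp hy; linarith)) h0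
      linarith)
    (by
      ext y
      constructor
      · rintro ⟨t, ht, rfl⟩
        have h1 : f (-t) ∈ Set.Ici d := him ▸ Set.mem_image_of_mem f
          (Set.mem_Ici.mpr (by have := Set.mem_Iic.mp ht; linarith))
        simp only [Set.mem_Iic]
        have := Set.mem_Ici.mp h1; linarith
      · intro hy
        have h1 : -y ∈ f '' Set.Ici b := him ▸ Set.mem_Ici.mpr
          (by have := Set.mem_Iic.mp hy; linarith)
        obtain ⟨t, ht, hft⟩ := h1
        refine ⟨-t, Set.mem_Iic.mpr (by have := Set.mem_Ici.mp ht; linarith), ?_⟩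
        simp only [neg_neg]
        rw [hft]; ring)
  obtain ⟨h1, h2⟩ := key
  constructor
  · simp only [neg_neg] at h1
    linarith
  · intro x hx y hy hxy
    have h3 := h2 (Set.mem_Iic.mpr (by have := Set.mem_Ici.mp hy; linarith) : -y ∈ Set.Iic (-b))
      (Set.mem_Iic.mpr (by have := Set.mem_Ici.mp hx; linarith) : -x ∈ Set.Iic (-b))
      (by linarith)
    simp only [neg_neg] at h3
    linarith

lemma homeoOf (g : ℝ → ℝ) (hm : StrictMono g) (hs : Function.Surjective g) :
    ∃ G : ℝ ≃ₜ ℝ, ⇑G = g :=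
  ⟨(StrictMono.orderIsoOfSurjective g hm hs).toHomeomorph, rfl⟩

lemma auxExt (a b c d : ℝ) (hab : a < b) (hcd : c < d) (H K : ℝ → ℝ)
    (hHc : ContinuousOn H (Set.Ioo a b)ᶜ)
    (hHT : ∀ t ∉ Set.Ioo a b, H t ∉ Set.Ioo c d)
    (hKS : ∀ s ∉ Set.Ioo c d, K s ∉ Set.Ioo a b)
    (hKH : ∀ t ∉ Set.Ioo a b, K (H t) = t)
    (hHK : ∀ s ∉ Set.Ioo c d, H (K s) = s)
    (hcase : H '' Set.Iic a ⊆ Set.Iic c) :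
    ∃ g : ℝ ≃ₜ ℝ, (∀ t ∉ Set.Ioo a b, g t = H t) ∧ ⇑g '' Set.Ioo a b = Set.Ioo c d := by
  have hSa : Set.Iic a ⊆ (Set.Ioo a b)ᶜ := by
    rw [complIoo]; exact Set.subset_union_left
  have hSb : Set.Ici b ⊆ (Set.Ioo a b)ᶜ := by
    rw [complIoo]; exact Set.subset_union_right
  have hInj : Set.InjOn H (Set.Ioo a b)ᶜ := by
    intro x hx y hy hxy
    have := hKH x hx
    rw [hxy, hKH y hy] at this
    exact this.symm
  -- image of Ici b is in Iic c or Ici d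
  have hMb : H '' Set.Ici b ⊆ Set.Iic c ∨ H '' Set.Ici b ⊆ Set.Ici d := by
    apply ray_case c d hcd
    · exact (isPreconnected_Ici).image H (hHc.mono hSb)
    · rintro y ⟨t, ht, rfl⟩
      exact hHT t (hSb ht)
  have hcase_b : H '' Set.Ici b ⊆ Set.Ici d := by
    rcases hMb with h | h
    · exfalso
      have hd : d ∉ Set.Ioo c d := by simp
      have : d = H (K d) := (hHK d hd).symm
      have hKd : K d ∉ Set.Ioo a b := hKS d hd
      rcases (complIoo a b ▸ hKd : K d ∈ Set.Iic a ∪ Set.Ici b) with h' | h'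
      · have : d ∈ Set.Iic c := this ▸ hcase (Set.mem_image_of_mem H h')
        exact absurd (Set.mem_Iic.mp this) (not_le.mpr hcd)
      · have : d ∈ Set.Iic c := this ▸ h (Set.mem_image_of_mem H h')
        exact absurd (Set.mem_Iic.mp this) (not_le.mpr hcd)
    · exact h
  -- exact images
  have him_a : H '' Set.Iic a = Set.Iic c := by
    apply Set.Subset.antisymm hcase
    intro y hy
    have hyT : y ∉ Set.Ioo c d := by
      intro h; exact absurd (Set.mem_Iic.mp hy) (not_le.mpr h.1)
    have hKy : K y ∉ Set.Ioo a b := hKS y hyT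
    rcases (complIoo a b ▸ hKy : K y ∈ Set.Iic a ∪ Set.Ici b) with h' | h'
    · exact ⟨K y, h', hHK y hyT⟩
    · exfalso
      have : y ∈ Set.Ici d := hHK y hyT ▸ hcase_b (Set.mem_image_of_mem H h')
      have := Set.mem_Ici.mp this
      have := Set.mem_Iic.mp hy
      linarith
  have him_b : H '' Set.Ici b = Set.Ici d := by
    apply Set.Subset.antisymm hcase_b
    intro y hy
    have hyT : y ∉ Set.Ioo c d := by
      intro h; exact absurd (Set.mem_Ici.mp hy) (not_le.mpr h.2)
    have hKy : K y ∉ Set.Ioo a b := hKS y hyT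
    rcases (complIoo a b ▸ hKy : K y ∈ Set.Iic a ∪ Set.Ici b) with h' | h'
    · exfalso
      have : y ∈ Set.Iic c := hHK y hyT ▸ hcase (Set.mem_image_of_mem H h')
      have := Set.mem_Iic.mp this
      have := Set.mem_Ici.mp hy
      linarith
    · exact ⟨K y, h', hHK y hyT⟩
  obtain ⟨hHa, hsm_a⟩ := mono_ray_left H a c (hHc.mono hSa) (hInj.mono hSa) him_a
  obtain ⟨hHb, hsm_b⟩ := mono_ray_right H b d (hHc.mono hSb) (hInj.mono hSb) him_b
  -- the glued map
  set L : ℝ → ℝ := fun t => c + (t - a) * ((d - c) / (b - a)) with hL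
  have hslope : (0:ℝ) < (d - c) / (b - a) := div_pos (by linarith) (by linarith)
  have hLmono : StrictMono L := by
    intro x y hxy
    simp only [hL]
    have : (x - a) * ((d - c) / (b - a)) < (y - a) * ((d - c) / (b - a)) :=
      mul_lt_mul_of_pos_right (by linarith) hslope
    linarith
  have hLa : L a = c := by simp [hL]
  have hLb : L b = d := by
    have h : (b - a) * ((d - c) / (b - a)) = d - c := by
      rw [mul_comm]
      exact div_mul_cancel₀ _ (ne_of_gt (by linarith : (0:ℝ) < b - a))
    simp only [hL]
    linarith
  set g : ℝ → ℝ := fun t => if t ≤ a then H t else if t < b then L t else H t with hg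
  have hg_left : ∀ t ≤ a, g t = H t := fun t ht => by simp [hg, ht]
  have hg_right : ∀ t, b ≤ t → g t = H t := by
    intro t ht
    have h1 : ¬ t ≤ a := by linarith
    have h2 : ¬ t < b := by linarith
    simp [hg, h1, h2]
  have hg_mid : ∀ t ∈ Set.Ioo a b, g t = L t := by
    intro t ht
    have h1 : ¬ t ≤ a := by have := ht.1; linarith
    simp [hg, h1, ht.2]
  -- bounds
  have hub_left : ∀ t ≤ a, g t ≤ c := by
    intro t ht
    rw [hg_left t ht]
    rcases lt_or_eq_of_le ht with h | h
    · exact le_of_lt (hHa ▸ hsm_a (Set.mem_Iic.mpr ht) (Set.mem_Iic.mpr le_rfl) h)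
    · rw [h, hHa]
  have hlb_right : ∀ t, b ≤ t → d ≤ g t := by
    intro t ht
    rw [hg_right t ht]
    rcases lt_or_eq_of_le ht with h | h
    · exact le_of_lt (hHb ▸ hsm_b (Set.mem_Ici.mpr le_rfl) (Set.mem_Ici.mpr ht) h)
    · rw [← h, hHb]
  have hmid_mem : ∀ t ∈ Set.Ioo a b, g t ∈ Set.Ioo c d := by
    intro t ht
    rw [hg_mid t ht]
    exact ⟨hLa ▸ hLmono ht.1, hLb ▸ hLmono ht.2⟩
  have hgmono : StrictMono g := by
    intro s t hst
    rcases le_or_gt s a with hs | hs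
    · rcases le_or_gt t a with ht | ht
      · rw [hg_left s hs, hg_left t ht]
        exact hsm_a (Set.mem_Iic.mpr hs) (Set.mem_Iic.mpr ht) hst
      · rcases lt_or_ge t b with ht' | ht'
        · have := (hmid_mem t ⟨ht, ht'⟩).1
          have := hub_left s hs
          linarith
        · have := hlb_right t ht'
          have := hub_left s hs
          linarith
    · rcases lt_or_ge s b with hs' | hs'
      · rcases lt_or_ge t b with ht' | ht'
        · rw [hg_mid s ⟨hs, hs'⟩, hg_mid t ⟨hs.trans hst, ht'⟩]
          exact hLmono hst
        · have h1 := (hmid_mem s ⟨hs, hs'⟩).2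
          have h2 := hlb_right t ht'
          linarith
      · have ht' : b ≤ t := hs'.trans hst.le
        rw [hg_right s hs', hg_right t ht']
        exact hsm_b (Set.mem_Ici.mpr hs') (Set.mem_Ici.mpr ht') hst
  have hgsurj : Function.Surjective g := by
    intro y
    rcases le_or_gt y c with hy | hy
    · obtain ⟨t, ht, hft⟩ := (him_a ▸ Set.mem_Iic.mpr hy : y ∈ H '' Set.Iic a)
      exact ⟨t, by rw [hg_left t ht]; exact hft⟩
    · rcases le_or_gt d y with hy' | hy'
      · obtain ⟨t, ht, hft⟩ := (him_b ▸ Set.mem_Ici.mpr hy' : y ∈ H '' Set.Ici b)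
        exact ⟨t, by rw [hg_right t ht]; exact hft⟩
      · refine ⟨a + (y - c) * ((b - a) / (d - c)), ?_⟩
        have hmem : a + (y - c) * ((b - a) / (d - c)) ∈ Set.Ioo a b := by
          constructor
          · have : 0 < (y - c) * ((b - a) / (d - c)) :=
              mul_pos (by linarith) (div_pos (by linarith) (by linarith))
            linarith
          · have h1 : (y - c) * ((b - a) / (d - c)) < (d - c) * ((b - a) / (d - c)) :=
              mul_lt_mul_of_pos_right (by linarith) (div_pos (by linarith) (by linarith))
            have h2 : (d - c) * ((b - a) / (d - c)) = b - a := by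
              rw [mul_comm]
              exact div_mul_cancel₀ _ (ne_of_gt (by linarith : (0:ℝ) < d - c))
            linarith
        rw [hg_mid _ hmem]
        simp only [hL]
        have key : ((b - a) / (d - c)) * ((d - c) / (b - a)) = 1 := by
          rw [div_mul_div_comm, mul_comm (b - a)]
          exact div_self (mul_ne_zero (ne_of_gt (by linarith : (0:ℝ) < d - c))
            (ne_of_gt (by linarith : (0:ℝ) < b - a)))
        have h3 : a + (y - c) * ((b - a) / (d - c)) - a = (y - c) * ((b - a) / (d - c)) := by
          ring
        rw [h3, mul_assoc, key, mul_one]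
        ring
  obtain ⟨G, hG⟩ := homeoOf g hgmono hgsurj
  refine ⟨G, ?_, ?_⟩
  · intro t ht
    rw [hG]
    rcases (complIoo a b ▸ ht : t ∈ Set.Iic a ∪ Set.Ici b) with h | h
    · exact hg_left t h
    · exact hg_right t h
  · rw [hG]
    apply Set.Subset.antisymm
    · rintro y ⟨t, ht, rfl⟩
      exact hmid_mem t ht
    · intro y hy
      obtain ⟨t, ht⟩ := hgsurj y
      refine ⟨t, ?_, ht⟩
      by_contra hnt
      rcases (complIoo a b ▸ hnt : t ∈ Set.Iic a ∪ Set.Ici b) with h | h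
      · have := hub_left t h; rw [ht] at this
        exact absurd (Set.mem_Ioo.mp hy).1 (not_lt.mpr this)
      · have := hlb_right t h; rw [ht] at this
        exact absurd (Set.mem_Ioo.mp hy).2 (not_lt.mpr this)

lemma realLemma (a b c d : ℝ) (hab : a < b) (H K : ℝ → ℝ)
    (hHc : ContinuousOn H (Set.Ioo a b)ᶜ)
    (hKc : ContinuousOn K (Set.Ioo c d)ᶜ)
    (hHT : ∀ t ∉ Set.Ioo a b, H t ∉ Set.Ioo c d)
    (hKS : ∀ s ∉ Set.Ioo c d, K s ∉ Set.Ioo a b)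
    (hKH : ∀ t ∉ Set.Ioo a b, K (H t) = t)
    (hHK : ∀ s ∉ Set.Ioo c d, H (K s) = s) :
    c < d ∧ ∃ g : ℝ ≃ₜ ℝ,
      (∀ t ∉ Set.Ioo a b, g t = H t) ∧ ⇑g '' Set.Ioo a b = Set.Ioo c d := by
  have hana : a ∉ Set.Ioo a b := by simp
  have hbna : b ∉ Set.Ioo a b := by simp
  have hcd : c < d := by
    by_contra h
    push_neg at h
    have hempty : Set.Ioo c d = ∅ := Set.Ioo_eq_empty (not_lt.mpr h)
    have hnot : ∀ s : ℝ, s ∉ Set.Ioo c d := by intro s; rw [hempty]; exact Set.notMem_empty s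
    have hKcont : Continuous K := by
      rw [← continuousOn_univ]
      have : (Set.Ioo c d)ᶜ = Set.univ := by rw [hempty, Set.compl_empty]
      exact this ▸ hKc
    have hM : IsPreconnected (Set.range K) := isPreconnected_range hKcont
    have ha : a ∈ Set.range K := ⟨H a, hKH a hana⟩
    have hb : b ∈ Set.range K := ⟨H b, hKH b hbna⟩
    have hmid : (a + b) / 2 ∈ Set.range K :=
      (hM.ordConnected).out ha hb ⟨by linarith, by linarith⟩
    obtain ⟨s, hs⟩ := hmid
    exact hKS s (hnot s) (hs ▸ ⟨by linarith, by linarith⟩)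
  refine ⟨hcd, ?_⟩
  have hSa : Set.Iic a ⊆ (Set.Ioo a b)ᶜ := by
    rw [complIoo]; exact Set.subset_union_left
  have hMa : H '' Set.Iic a ⊆ Set.Iic c ∨ H '' Set.Iic a ⊆ Set.Ici d := by
    apply ray_case c d hcd
    · exact (isPreconnected_Iic).image H (hHc.mono hSa)
    · rintro y ⟨t, ht, rfl⟩
      exact hHT t (hSa ht)
  rcases hMa with hcase | hcase
  · exact auxExt a b c d hab hcd H K hHc hHT hKS hKH hHK hcase
  · have hflip : ∀ s : ℝ, -s ∈ Set.Ioo (-d) (-c) ↔ s ∈ Set.Ioo c d := by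
      intro s
      constructor
      · rintro ⟨h1, h2⟩; exact ⟨by linarith, by linarith⟩
      · rintro ⟨h1, h2⟩; exact ⟨by linarith, by linarith⟩
    obtain ⟨g', hg'1, hg'2⟩ := auxExt a b (-d) (-c) hab (by linarith) (fun t => -H t)
      (fun s => K (-s)) hHc.neg
      (by
        intro t ht hmem
        simp only [Set.mem_Ioo] at hmem
        exact hHT t ht ⟨by linarith [hmem.2], by linarith [hmem.1]⟩)
      (by
        intro s hs
        apply hKS (-s)
        intro hmem
        exact hs ⟨by linarith [hmem.2], by linarith [hmem.1]⟩)
      (by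
        intro t ht
        simp only [neg_neg]
        exact hKH t ht)
      (by
        intro s hs
        have hns : -s ∉ Set.Ioo c d := by
          intro hmem
          exact hs ⟨by linarith [hmem.2], by linarith [hmem.1]⟩
        show -H (K (-s)) = s
        rw [hHK (-s) hns]
        ring)
      (by
        rintro y ⟨t, ht, rfl⟩
        have hd : d ≤ H t := hcase (Set.mem_image_of_mem H ht)
        simp only [Set.mem_Iic]
        linarith)
    refine ⟨g'.trans (Homeomorph.neg ℝ), ?_, ?_⟩
    · intro t ht
      have : (g'.trans (Homeomorph.neg ℝ)) t = -(g' t) := rfl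
      rw [this, hg'1 t ht]
      ring
    · ext y
      constructor
      · rintro ⟨t, ht, rfl⟩
        have hmem : g' t ∈ Set.Ioo (-d) (-c) := hg'2 ▸ Set.mem_image_of_mem _ ht
        have h1 := hmem.1
        have h2 := hmem.2
        have : (g'.trans (Homeomorph.neg ℝ)) t = -(g' t) := rfl
        rw [this]
        exact ⟨by linarith, by linarith⟩
      · intro hy
        have : -y ∈ Set.Ioo (-d) (-c) := ⟨by linarith [hy.2], by linarith [hy.1]⟩
        obtain ⟨t, ht, hgt⟩ := (hg'2 ▸ this : -y ∈ ⇑g' '' Set.Ioo a b)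
        refine ⟨t, ht, ?_⟩
        have : (g'.trans (Homeomorph.neg ℝ)) t = -(g' t) := rfl
        rw [this, hgt]
        ring

theorem stmt6 (γ σ : Set Plane) (hγ : IsTopLine γ) (hσ : IsTopLine σ)
    (Φ : ℝ ≃ₜ γ)
    (h1 : IsPortion γ (γ \ σ)) (h2 : IsPortion σ (σ \ γ))
    (hne : (γ \ σ).Nonempty) :
    ∃ (φ : ℝ ≃ₜ σ) (a b : ℝ), a < b ∧
      (∀ t ∉ Set.Ioo a b, (Φ t : Plane) = (φ t : Plane)) ∧
      (fun t => (φ t : Plane)) '' Set.Ioo a b = σ \ γ ∧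
      (fun t => (Φ t : Plane)) '' Set.Ioo a b = γ \ σ := by
  classical
  obtain ⟨a, b, hA⟩ := h1.2 Φ
  have hA' : ∀ t : ℝ, (Φ t : Plane) ∈ γ \ σ ↔ t ∈ Set.Ioo a b := fun t =>
    Set.ext_iff.mp hA t
  obtain ⟨Ψ⟩ := hσ
  obtain ⟨c, d, hB⟩ := h2.2 Ψ
  have hB' : ∀ s : ℝ, (Ψ s : Plane) ∈ σ \ γ ↔ s ∈ Set.Ioo c d := fun s =>
    Set.ext_iff.mp hB s
  -- a < b
  have hab : a < b := by
    obtain ⟨x, hx⟩ := hne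
    set t := Φ.symm ⟨x, hx.1⟩ with ht
    have hmem : (Φ t : Plane) ∈ γ \ σ := by
      rw [ht, Φ.apply_symm_apply]
      exact hx
    exact Set.nonempty_Ioo.mp ⟨t, (hA' t).mp hmem⟩
  -- basic membership facts
  have fact1 : ∀ t ∉ Set.Ioo a b, (Φ t : Plane) ∈ σ := by
    intro t ht
    by_contra hns
    exact ht ((hA' t).mp ⟨(Φ t).2, hns⟩)
  have fact2 : ∀ s ∉ Set.Ioo c d, (Ψ s : Plane) ∈ γ := by
    intro s hs
    by_contra hns
    exact hs ((hB' s).mp ⟨(Ψ s).2, hns⟩)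
  -- the transition maps
  set F : Plane → ℝ := fun z => if hz : z ∈ σ then (Ψ.symm ⟨z, hz⟩ : ℝ) else 0 with hFdef
  set G : Plane → ℝ := fun z => if hz : z ∈ γ then (Φ.symm ⟨z, hz⟩ : ℝ) else 0 with hGdef
  set H : ℝ → ℝ := fun t => F ((Φ t : Plane)) with hHdef
  set K : ℝ → ℝ := fun s => G ((Ψ s : Plane)) with hKdef
  have hHval : ∀ (t : ℝ) (ht : (Φ t : Plane) ∈ σ), H t = Ψ.symm ⟨(Φ t : Plane), ht⟩ := by
    intro t ht
    simp only [hHdef, hFdef]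
    rw [dif_pos ht]
  have hKval : ∀ (s : ℝ) (hs : (Ψ s : Plane) ∈ γ), K s = Φ.symm ⟨(Ψ s : Plane), hs⟩ := by
    intro s hs
    simp only [hKdef, hGdef]
    rw [dif_pos hs]
  -- continuity
  have hFc : ContinuousOn F σ := by
    rw [continuousOn_iff_continuous_restrict]
    have : Set.restrict σ F = fun z : σ => (Ψ.symm z : ℝ) := by
      funext z
      simp only [Set.restrict_apply, hFdef]
      exact dif_pos z.2
    change Continuous (Set.restrict σ F); rw [this]
    exact Ψ.symm.continuous
  have hGc : ContinuousOn G γ := by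
    rw [continuousOn_iff_continuous_restrict]
    have : Set.restrict γ G = fun z : γ => (Φ.symm z : ℝ) := by
      funext z
      simp only [Set.restrict_apply, hGdef]
      exact dif_pos z.2
    change Continuous (Set.restrict γ G); rw [this]
    exact Φ.symm.continuous
  have hHc : ContinuousOn H (Set.Ioo a b)ᶜ := by
    have : H = F ∘ (fun t => (Φ t : Plane)) := rfl
    rw [this]
    exact hFc.comp ((continuous_subtype_val.comp Φ.continuous).continuousOn)
      (fun t ht => fact1 t ht)
  have hKc : ContinuousOn K (Set.Ioo c d)ᶜ := by
    have : K = G ∘ (fun s => (Ψ s : Plane)) := rfl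
    rw [this]
    exact hGc.comp ((continuous_subtype_val.comp Ψ.continuous).continuousOn)
      (fun s hs => fact2 s hs)
  -- coordinate identities
  have hΨH : ∀ t ∉ Set.Ioo a b, (Ψ (H t) : Plane) = (Φ t : Plane) := by
    intro t ht
    rw [hHval t (fact1 t ht), Ψ.apply_symm_apply]
  have hΦK : ∀ s ∉ Set.Ioo c d, (Φ (K s) : Plane) = (Ψ s : Plane) := by
    intro s hs
    rw [hKval s (fact2 s hs), Φ.apply_symm_apply]
  have hHT : ∀ t ∉ Set.Ioo a b, H t ∉ Set.Ioo c d := by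
    intro t ht hmem
    have : (Ψ (H t) : Plane) ∈ σ \ γ := (hB' (H t)).mpr hmem
    rw [hΨH t ht] at this
    exact this.2 (Φ t).2
  have hKS : ∀ s ∉ Set.Ioo c d, K s ∉ Set.Ioo a b := by
    intro s hs hmem
    have : (Φ (K s) : Plane) ∈ γ \ σ := (hA' (K s)).mpr hmem
    rw [hΦK s hs] at this
    exact this.2 (Ψ s).2
  have hKH : ∀ t ∉ Set.Ioo a b, K (H t) = t := by
    intro t ht
    have h1 : (Ψ (H t) : Plane) ∈ γ := by rw [hΨH t ht]; exact (Φ t).2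
    rw [hKval (H t) h1]
    have h2 : (⟨(Ψ (H t) : Plane), h1⟩ : γ) = Φ t := Subtype.ext (hΨH t ht)
    rw [h2, Φ.symm_apply_apply]
  have hHK : ∀ s ∉ Set.Ioo c d, H (K s) = s := by
    intro s hs
    have h1 : (Φ (K s) : Plane) ∈ σ := by rw [hΦK s hs]; exact (Ψ s).2
    rw [hHval (K s) h1]
    have h2 : (⟨(Φ (K s) : Plane), h1⟩ : σ) = Ψ s := Subtype.ext (hΦK s hs)
    rw [h2, Ψ.symm_apply_apply]
  obtain ⟨hcd, g, hg1, hg2⟩ := realLemma a b c d hab H K hHc hKc hHT hKS hKH hHK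
  refine ⟨g.trans Ψ, a, b, hab, ?_, ?_, ?_⟩
  · intro t ht
    have : ((g.trans Ψ) t : Plane) = (Ψ (g t) : Plane) := rfl
    rw [this, hg1 t ht, hΨH t ht]
  · have hcomp : (fun t => ((g.trans Ψ) t : Plane)) = (fun s => (Ψ s : Plane)) ∘ ⇑g := rfl
    rw [hcomp, Set.image_comp, hg2]
    ext x
    constructor
    · rintro ⟨s, hs, rfl⟩
      exact (hB' s).mpr hs
    · intro hx
      refine ⟨Ψ.symm ⟨x, hx.1⟩, ?_, ?_⟩
      · apply (hB' _).mp
        rw [Ψ.apply_symm_apply]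
        exact hx
      · show ((Ψ (Ψ.symm ⟨x, hx.1⟩)) : Plane) = x
        rw [Ψ.apply_symm_apply]
  · ext x
    constructor
    · rintro ⟨t, ht, rfl⟩
      exact (hA' t).mpr ht
    · intro hx
      refine ⟨Φ.symm ⟨x, hx.1⟩, ?_, ?_⟩
      · apply (hA' _).mp
        rw [Φ.apply_symm_apply]
        exact hx
      · show ((Φ (Φ.symm ⟨x, hx.1⟩)) : Plane) = x
        rw [Φ.apply_symm_apply]
end

section
/- Let Γ be a set of topological lines in ℝ² such that for all distinct γ, γ' ∈ Γ, the difference γ \ γ' is a portion of γ. Then for every γ ∈ Γ and every nonempty finite subset Γ₀ ⊂ Γ \ {γ}, the set γ \ (⋃_{σ ∈ Γ₀} σ) is a nonempty portion of γ. -/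
open Set

/-- No interior strict maximum for an injective continuous function. -/
lemma no_interior_max {f : ℝ → ℝ} {u v w : ℝ} (huv : u < v) (hvw : v < w)
    (hc : ContinuousOn f (Icc u w)) (hi : InjOn f (Icc u w))
    (h1 : f u < f v) (h2 : f w < f v) : False := by
  set y : ℝ := (max (f u) (f w) + f v) / 2 with hy
  have hyu : f u < y := by
    have := le_max_left (f u) (f w); simp only [hy]; linarith [max_lt h1 h2]
  have hyw : f w < y := by
    have := le_max_right (f u) (f w); simp only [hy]; linarith [max_lt h1 h2]
  have hyv : y < f v := by simp only [hy]; linarith [max_lt h1 h2]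
  have hc1 : ContinuousOn f (Icc u v) :=
    hc.mono (Icc_subset_Icc le_rfl hvw.le)
  have hc2 : ContinuousOn f (Icc v w) :=
    hc.mono (Icc_subset_Icc huv.le le_rfl)
  obtain ⟨x₁, hx₁, hfx₁⟩ := intermediate_value_Ioo huv.le hc1 ⟨hyu, hyv⟩
  obtain ⟨x₂, hx₂, hfx₂⟩ := intermediate_value_Ioo' hvw.le hc2 ⟨hyw, hyv⟩
  have hlt : x₁ < x₂ := hx₁.2.trans hx₂.1
  exact hlt.ne (hi ⟨hx₁.1.le, hx₁.2.le.trans hvw.le⟩ ⟨huv.le.trans hx₂.1.le, hx₂.2.le⟩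
    (hfx₁.trans hfx₂.symm))

lemma no_interior_min {f : ℝ → ℝ} {u v w : ℝ} (huv : u < v) (hvw : v < w)
    (hc : ContinuousOn f (Icc u w)) (hi : InjOn f (Icc u w))
    (h1 : f v < f u) (h2 : f v < f w) : False :=
  no_interior_max (f := fun t => -(f t)) huv hvw (hc.neg)
    (fun x hx y hy h => hi hx hy (neg_injective h)) (by simpa) (by simpa)

/-- endpoint lemma: if an injective continuous map on `Iic α` has image `Iic a`,
then `α` maps to `a`. -/
lemma ray_endpoint {f : ℝ → ℝ} {α a : ℝ} (hc : ContinuousOn f (Iic α))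
    (hi : InjOn f (Iic α)) (him : f '' (Iic α) = Iic a) : f α = a := by
  have hfa : f α ≤ a := by
    have : f α ∈ Iic a := him ▸ mem_image_of_mem f self_mem_Iic
    exact this
  rcases hfa.lt_or_eq with hlt | h
  · exfalso
    obtain ⟨x, hx, hfx⟩ : ∃ x ∈ Iic α, f x = a := by
      have : a ∈ f '' (Iic α) := him ▸ self_mem_Iic
      exact this
    have hxα : x < α := by
      rcases (mem_Iic.1 hx).lt_or_eq with h | h
      · exact h
      · exact absurd (h ▸ hfx) hlt.ne
    have hfy : f (x - 1) < a := by
      have h1 : f (x - 1) ∈ Iic a := him ▸ mem_image_of_mem f ((by linarith : x - 1 ≤ α))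
      rcases (mem_Iic.1 h1).lt_or_eq with h | h
      · exact h
      · exact absurd (hi (by linarith : (x:ℝ) - 1 ≤ α) hx (h.trans hfx.symm)) (by linarith)
    exact no_interior_max (by linarith : x - 1 < x) hxα
      (hc.mono (Icc_subset_Iic_self)) (hi.mono Icc_subset_Iic_self)
      (hfx ▸ hfy) (hfx ▸ hlt)
  · exact h

lemma ray_endpoint2 {f : ℝ → ℝ} {α b : ℝ} (hc : ContinuousOn f (Iic α))
    (hi : InjOn f (Iic α)) (him : f '' (Iic α) = Ici b) : f α = b := by
  have h : (fun t => -(f t)) '' (Iic α) = Iic (-b) := by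
    ext y
    simp only [mem_image, mem_Iic]
    constructor
    · rintro ⟨t, ht, rfl⟩
      have : f t ∈ Ici b := him ▸ mem_image_of_mem f (mem_Iic.2 ht)
      have := mem_Ici.1 this; linarith
    · intro hy
      have : -y ∈ f '' (Iic α) := him ▸ mem_Ici.2 (by linarith)
      obtain ⟨t, ht, hft⟩ := this
      exact ⟨t, mem_Iic.1 ht, by linarith⟩
  have := ray_endpoint (f := fun t => -(f t)) (a := -b) hc.neg
    (fun x hx y hy h => hi hx hy (neg_injective h)) h
  linarith

lemma ray_endpoint3 {f : ℝ → ℝ} {β a : ℝ} (hc : ContinuousOn f (Ici β))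
    (hi : InjOn f (Ici β)) (him : f '' (Ici β) = Iic a) : f β = a := by
  have hmem : ∀ x : ℝ, x ∈ Iic (-β) → -x ∈ Ici β := fun x hx => mem_Ici.2 (by
    have := mem_Iic.1 hx; linarith)
  have h : (fun t => f (-t)) '' (Iic (-β)) = Iic a := by
    ext y
    simp only [mem_image, mem_Iic]
    constructor
    · rintro ⟨t, ht, rfl⟩
      have : f (-t) ∈ Iic a := him ▸ mem_image_of_mem f (hmem t (mem_Iic.2 ht))
      exact mem_Iic.1 this
    · intro hy
      have : y ∈ f '' (Ici β) := him ▸ mem_Iic.2 hy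
      obtain ⟨t, ht, hft⟩ := this
      exact ⟨-t, by have := mem_Ici.1 ht; linarith, by simpa using hft⟩
  have := ray_endpoint (f := fun t => f (-t)) (α := -β) (a := a)
    (hc.comp continuousOn_neg hmem)
    (fun x hx y hy hxy => by
      have := hi (hmem x hx) (hmem y hy) hxy
      linarith) h
  simpa using this

lemma ray_endpoint4 {f : ℝ → ℝ} {β b : ℝ} (hc : ContinuousOn f (Ici β))
    (hi : InjOn f (Ici β)) (him : f '' (Ici β) = Ici b) : f β = b := by
  have h := ray_endpoint3 (f := fun t => -(f t)) (a := -b) hc.neg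
    (fun x hx y hy h => hi hx hy (neg_injective h)) ?_
  · linarith
  · ext y
    simp only [mem_image, mem_Iic]
    constructor
    · rintro ⟨t, ht, rfl⟩
      have : f t ∈ Ici b := him ▸ mem_image_of_mem f ht
      have := mem_Ici.1 this; linarith
    · intro hy
      have : -y ∈ f '' (Ici β) := him ▸ mem_Ici.2 (by linarith)
      obtain ⟨t, ht, hft⟩ := this
      exact ⟨t, ht, by linarith⟩

/-- If a continuous injective map on `[c,d]` sends the open interval into `Ioo p q`
and the endpoints outside, then the image of the open interval is all of `Ioo p q`. -/
lemma arc_image {f : ℝ → ℝ} {c d p q : ℝ} (hcd : c < d)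
    (hc : ContinuousOn f (Icc c d)) (hi : InjOn f (Icc c d))
    (hsub : f '' (Ioo c d) ⊆ Ioo p q) (hec : f c ∉ Ioo p q) (hed : f d ∉ Ioo p q) :
    f '' (Ioo c d) = Ioo p q := by
  refine Subset.antisymm hsub fun y hy => ?_
  set m : ℝ := (c + d) / 2 with hm
  have hmm : m ∈ Ioo c d := ⟨by simp [hm]; linarith, by simp [hm]; linarith⟩
  have hfm : f m ∈ Ioo p q := hsub (mem_image_of_mem f hmm)
  have hcase : ∀ x : ℝ, x ∉ Ioo p q → x ≤ p ∨ q ≤ x := by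
    intro x hx
    by_contra h
    push_neg at h
    exact hx ⟨h.1, h.2⟩
  rcases hcase _ hec with h1 | h1 <;> rcases hcase _ hed with h2 | h2
  · -- f c ≤ p, f d ≤ p : interior max, contradiction
    exact (no_interior_max hmm.1 hmm.2 hc hi (lt_of_le_of_lt h1 hfm.1)
      (lt_of_le_of_lt h2 hfm.1)).elim
  · -- f c ≤ p ≤ ... q ≤ f d
    exact intermediate_value_Ioo hcd.le hc ⟨lt_of_le_of_lt h1 hy.1, lt_of_lt_of_le hy.2 h2⟩
  · -- q ≤ f c, f d ≤ p
    exact intermediate_value_Ioo' hcd.le hc ⟨lt_of_le_of_lt h2 hy.1, lt_of_lt_of_le hy.2 h1⟩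
  · -- q ≤ f c, q ≤ f d : interior min
    exact (no_interior_min hmm.1 hmm.2 hc hi (lt_of_lt_of_le hfm.2 h1)
      (lt_of_lt_of_le hfm.2 h2)).elim

open Classical in
/-- The transfer map between two parametrized lines. -/
noncomputable def tmap {γ σ : Set Plane} (Φ : ℝ ≃ₜ γ) (Ψ : ℝ ≃ₜ σ) : ℝ → ℝ :=
  fun t => if h : (Φ t : Plane) ∈ σ then Ψ.symm ⟨(Φ t : Plane), h⟩ else 0

lemma tmap_spec {γ σ : Set Plane} (Φ : ℝ ≃ₜ γ) (Ψ : ℝ ≃ₜ σ) {t : ℝ}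
    (h : (Φ t : Plane) ∈ σ) : (Ψ (tmap Φ Ψ t) : Plane) = (Φ t : Plane) := by
  simp only [tmap, dif_pos h, Homeomorph.apply_symm_apply]

lemma param_injective {γ : Set Plane} (Φ : ℝ ≃ₜ γ) :
    Function.Injective (fun t => (Φ t : Plane)) := fun a b h =>
  Φ.injective (Subtype.ext h)

lemma tmap_continuousOn {γ σ : Set Plane} (Φ : ℝ ≃ₜ γ) (Ψ : ℝ ≃ₜ σ) :
    ContinuousOn (tmap Φ Ψ) {t | (Φ t : Plane) ∈ σ} := by
  rw [continuousOn_iff_continuous_restrict]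
  have : domRestrict {t | (Φ t : Plane) ∈ σ} (tmap Φ Ψ) =
      fun x => Ψ.symm ⟨(Φ x.1 : Plane), x.2⟩ := by
    funext x
    simp only [domRestrict, tmap]
    exact dif_pos x.2
  rw [this]
  exact Ψ.symm.continuous.comp (Continuous.subtype_mk
    (continuous_subtype_val.comp (Φ.continuous.comp continuous_subtype_val)) _)

lemma tmap_injOn {γ σ : Set Plane} (Φ : ℝ ≃ₜ γ) (Ψ : ℝ ≃ₜ σ) :
    InjOn (tmap Φ Ψ) {t | (Φ t : Plane) ∈ σ} := by
  intro x hx y hy h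
  have h1 := tmap_spec Φ Ψ hx
  have h2 := tmap_spec Φ Ψ hy
  rw [h] at h1
  exact param_injective Φ (h1.symm.trans h2)

lemma tmap_image {γ σ : Set Plane} (Φ : ℝ ≃ₜ γ) (Ψ : ℝ ≃ₜ σ) {S : Set ℝ}
    (hS : S ⊆ {t | (Φ t : Plane) ∈ σ}) {u : ℝ} :
    u ∈ tmap Φ Ψ '' S ↔ ∃ t ∈ S, (Ψ u : Plane) = (Φ t : Plane) := by
  constructor
  · rintro ⟨t, ht, rfl⟩
    exact ⟨t, ht, tmap_spec Φ Ψ (hS ht)⟩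
  · rintro ⟨t, ht, hut⟩
    refine ⟨t, ht, ?_⟩
    have he : (⟨(Φ t : Plane), hS ht⟩ : σ) = Ψ u := Subtype.ext hut.symm
    simp only [tmap, he, Homeomorph.symm_apply_apply]
    exact dif_pos (hS ht)

lemma image_preimage_param {σ : Set Plane} (Ψ : ℝ ≃ₜ σ) (T : Set Plane) :
    (fun s => (Ψ s : Plane)) '' {s | (Ψ s : Plane) ∈ T} = σ ∩ T := by
  ext x
  constructor
  · rintro ⟨s, hs, rfl⟩
    exact ⟨(Ψ s).2, hs⟩
  · rintro ⟨hx, hxT⟩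
    exact ⟨Ψ.symm ⟨x, hx⟩, by simpa using hxT, by simp⟩

lemma compl_Ioo' (a b : ℝ) : (Ioo a b)ᶜ = Iic a ∪ Ici b := by
  ext x
  simp only [mem_compl_iff, mem_Ioo, mem_union, mem_Iic, mem_Ici, not_and_or, not_lt]

lemma line_not_subset {γ σ : Set Plane} (hγl : IsTopLine γ)
    (hne : γ ≠ σ) (hp : IsPortion σ (σ \ γ)) (hσl : IsTopLine σ) : ¬ γ ⊆ σ := by
  intro hsub
  obtain ⟨Ψ⟩ := hσl
  obtain ⟨e⟩ := hγl
  obtain ⟨p, q, hpq⟩ := hp.2 Ψ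
  obtain ⟨x, hxσ, hxγ⟩ := Set.exists_of_ssubset (hsub.ssubset_of_ne hne)
  have hpq' : p < q := by
    have hmem : Ψ.symm ⟨x, hxσ⟩ ∈ {s | (Ψ s : Plane) ∈ σ \ γ} := by
      show (Ψ (Ψ.symm ⟨x, hxσ⟩) : Plane) ∈ σ \ γ
      rw [Homeomorph.apply_symm_apply]
      exact ⟨hxσ, hxγ⟩
    rw [hpq] at hmem
    exact hmem.1.trans hmem.2
  -- the preimage of γ in σ's parametrization is connected
  have hrange : range (fun t => (Ψ.symm ⟨(e t : Plane), hsub (e t).2⟩ : ℝ)) =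
      {s | (Ψ s : Plane) ∈ γ} := by
    ext s
    constructor
    · rintro ⟨t, rfl⟩
      simp only [mem_setOf_eq, Homeomorph.apply_symm_apply]
      exact (e t).2
    · intro hs
      refine ⟨e.symm ⟨(Ψ s : Plane), hs⟩, ?_⟩
      simp only [Homeomorph.apply_symm_apply]
      exact congrArg Ψ.symm (Subtype.ext rfl) |>.trans (Ψ.symm_apply_apply s)
  have hconn : IsPreconnected {s | (Ψ s : Plane) ∈ γ} := by
    rw [← hrange]
    exact (isConnected_range (Ψ.symm.continuous.comp
      (Continuous.subtype_mk (continuous_subtype_val.comp e.continuous) _))).isPreconnected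
  -- but that preimage is the complement of a nonempty open interval
  have hset : {s | (Ψ s : Plane) ∈ γ} = (Ioo p q)ᶜ := by
    ext s
    simp only [mem_setOf_eq, mem_compl_iff]
    constructor
    · intro hs hmem
      rw [← hpq] at hmem
      exact hmem.2 hs
    · intro hs
      by_contra hg
      exact hs (by rw [← hpq]; exact ⟨(Ψ s).2, hg⟩)
  rw [hset, compl_Ioo'] at hconn
  have hmid : (p + q) / 2 ∈ Icc p q := ⟨by linarith, by linarith⟩
  have := hconn.ordConnected.out (show p ∈ Iic p ∪ Ici q from Or.inl self_mem_Iic)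
    (show q ∈ Iic p ∪ Ici q from Or.inr self_mem_Ici) hmid
  rcases this with h | h
  · exact absurd (mem_Iic.1 h) (by linarith)
  · exact absurd (mem_Ici.1 h) (by linarith)

lemma preconn_dichotomy {I : Set ℝ} {a b : ℝ} (hab : a < b) (hI : IsPreconnected I)
    (hsub : I ⊆ Iic a ∪ Ici b) : I ⊆ Iic a ∨ I ⊆ Ici b := by
  by_contra h
  push_neg at h
  obtain ⟨hx', hy'⟩ := h
  obtain ⟨x, hx, hxa⟩ := not_subset.1 hx'
  obtain ⟨y, hy, hyb⟩ := not_subset.1 hy'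
  have hxb : b ≤ x := by
    rcases hsub hx with h | h
    · exact absurd h hxa
    · exact mem_Ici.1 h
  have hya : y ≤ a := by
    rcases hsub hy with h | h
    · exact mem_Iic.1 h
    · exact absurd h hyb
  have hmid : (a + b) / 2 ∈ I :=
    hI.ordConnected.out hy hx ⟨by linarith, by linarith⟩
  rcases hsub hmid with h | h
  · exact absurd (mem_Iic.1 h) (by linarith)
  · exact absurd (mem_Ici.1 h) (by linarith)

lemma endpointE {γ σ : Set Plane} (Φ : ℝ ≃ₜ γ) (Ψ : ℝ ≃ₜ σ) {a b α β : ℝ}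
    (hab : a < b) (hαβ : α < β)
    (hσ : {t | (Φ t : Plane) ∈ σ} = (Ioo a b)ᶜ)
    (hγ : {s | (Ψ s : Plane) ∈ γ} = (Ioo α β)ᶜ) :
    ((Ψ α : Plane) = Φ a ∧ (Ψ β : Plane) = Φ b) ∨
      ((Ψ α : Plane) = Φ b ∧ (Ψ β : Plane) = Φ a) := by
  have hE' : {s | (Ψ s : Plane) ∈ γ} = Iic α ∪ Ici β := by rw [hγ, compl_Ioo']
  have hIic : Iic α ⊆ {s | (Ψ s : Plane) ∈ γ} := by rw [hE']; exact subset_union_left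
  have hIci : Ici β ⊆ {s | (Ψ s : Plane) ∈ γ} := by rw [hE']; exact subset_union_right
  have hαE : α ∈ {s | (Ψ s : Plane) ∈ γ} := hIic self_mem_Iic
  have hβE : β ∈ {s | (Ψ s : Plane) ∈ γ} := hIci self_mem_Ici
  have hEc := tmap_continuousOn Ψ Φ
  have hEi := tmap_injOn Ψ Φ
  have hunion : tmap Ψ Φ '' (Iic α) ∪ tmap Ψ Φ '' (Ici β) = Iic a ∪ Ici b := by
    rw [← image_union, ← hE']
    ext u
    rw [tmap_image Ψ Φ (le_refl _)]
    constructor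
    · rintro ⟨s, hs, hus⟩
      have h1 : (Φ u : Plane) ∈ σ := hus ▸ (Ψ s).2
      have h2 : u ∈ {t | (Φ t : Plane) ∈ σ} := h1
      rw [hσ, compl_Ioo'] at h2
      exact h2
    · intro hu
      have h1 : u ∈ {t | (Φ t : Plane) ∈ σ} := by rw [hσ, compl_Ioo']; exact hu
      refine ⟨Ψ.symm ⟨(Φ u : Plane), h1⟩, ?_, by simp⟩
      show (Ψ _ : Plane) ∈ γ
      simpa using (Φ u).2
  have hconn1 : IsPreconnected (tmap Ψ Φ '' (Iic α)) :=
    isPreconnected_Iic.image _ (hEc.mono hIic)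
  have hconn2 : IsPreconnected (tmap Ψ Φ '' (Ici β)) :=
    isPreconnected_Ici.image _ (hEc.mono hIci)
  have hs1 : tmap Ψ Φ '' (Iic α) ⊆ Iic a ∪ Ici b := by
    rw [← hunion]; exact subset_union_left
  have hs2 : tmap Ψ Φ '' (Ici β) ⊆ Iic a ∪ Ici b := by
    rw [← hunion]; exact subset_union_right
  have hΨα : (Ψ α : Plane) = Φ (tmap Ψ Φ α) := (tmap_spec Ψ Φ hαE).symm
  have hΨβ : (Ψ β : Plane) = Φ (tmap Ψ Φ β) := (tmap_spec Ψ Φ hβE).symm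
  have hdisj : ∀ z : ℝ, z ∈ Iic a → z ∈ Ici b → False := fun z h1 h2 => by
    have := mem_Iic.1 h1; have := mem_Ici.1 h2; linarith
  have humem : ∀ z : ℝ, z ∈ Iic a ∪ Ici b →
      z ∈ tmap Ψ Φ '' (Iic α) ∪ tmap Ψ Φ '' (Ici β) := fun z hz => by
    rw [hunion]; exact hz
  rcases preconn_dichotomy hab hconn1 hs1 with h1 | h1 <;>
    rcases preconn_dichotomy hab hconn2 hs2 with h2 | h2
  · exfalso
    rcases humem b (Or.inr self_mem_Ici) with h | h
    · exact hdisj b (h1 h) self_mem_Ici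
    · exact hdisj b (h2 h) self_mem_Ici
  · left
    have he1 : tmap Ψ Φ '' (Iic α) = Iic a := by
      refine Subset.antisymm h1 fun z hz => ?_
      rcases humem z (Or.inl hz) with h | h
      · exact h
      · exact (hdisj z hz (h2 h)).elim
    have he2 : tmap Ψ Φ '' (Ici β) = Ici b := by
      refine Subset.antisymm h2 fun z hz => ?_
      rcases humem z (Or.inr hz) with h | h
      · exact (hdisj z (h1 h) hz).elim
      · exact h
    constructor
    · rw [hΨα, ray_endpoint (hEc.mono hIic) (hEi.mono hIic) he1]
    · rw [hΨβ, ray_endpoint4 (hEc.mono hIci) (hEi.mono hIci) he2]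
  · right
    have he1 : tmap Ψ Φ '' (Iic α) = Ici b := by
      refine Subset.antisymm h1 fun z hz => ?_
      rcases humem z (Or.inr hz) with h | h
      · exact h
      · exact (hdisj z (h2 h) hz).elim
    have he2 : tmap Ψ Φ '' (Ici β) = Iic a := by
      refine Subset.antisymm h2 fun z hz => ?_
      rcases humem z (Or.inl hz) with h | h
      · exact (hdisj z hz (h1 h)).elim
      · exact h
    constructor
    · rw [hΨα, ray_endpoint2 (hEc.mono hIic) (hEi.mono hIic) he1]
    · rw [hΨβ, ray_endpoint3 (hEc.mono hIci) (hEi.mono hIci) he2]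
  · exfalso
    rcases humem a (Or.inl self_mem_Iic) with h | h
    · exact hdisj a self_mem_Iic (h1 h)
    · exact hdisj a self_mem_Iic (h2 h)

lemma arc_transfer {γ σ σ' : Set Plane} (Φ : ℝ ≃ₜ γ) (Ψ : ℝ ≃ₜ σ) {a b c d p q : ℝ}
    (hcd : c < d) (hbc : Icc c d ⊆ (Ioo a b)ᶜ)
    (hγσ : {t | (Φ t : Plane) ∈ σ} = (Ioo a b)ᶜ)
    (hγσ' : {t | (Φ t : Plane) ∈ σ'} = (Ioo c d)ᶜ)
    (hσσ' : {s | (Ψ s : Plane) ∈ σ \ σ'} = Ioo p q) :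
    σ \ σ' = (fun t => (Φ t : Plane)) '' (Ioo c d) := by
  have hIcc : Icc c d ⊆ {t | (Φ t : Plane) ∈ σ} := by
    intro t ht
    rw [hγσ]
    exact hbc ht
  have hspec : ∀ t ∈ Icc c d, (Ψ (tmap Φ Ψ t) : Plane) = Φ t :=
    fun t ht => tmap_spec Φ Ψ (hIcc ht)
  have hsub : tmap Φ Ψ '' (Ioo c d) ⊆ Ioo p q := by
    rintro _ ⟨t, ht, rfl⟩
    have htm : t ∈ Icc c d := Ioo_subset_Icc_self ht
    have h1 : (Φ t : Plane) ∈ σ := hIcc htm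
    have h2 : (Φ t : Plane) ∉ σ' := by
      intro h
      have : t ∈ {t | (Φ t : Plane) ∈ σ'} := h
      rw [hγσ'] at this
      exact this ht
    have : tmap Φ Ψ t ∈ {s | (Ψ s : Plane) ∈ σ \ σ'} := by
      show (Ψ (tmap Φ Ψ t) : Plane) ∈ σ \ σ'
      rw [hspec t htm]
      exact ⟨h1, h2⟩
    rwa [hσσ'] at this
  have hend : ∀ t, t ∈ ({c, d} : Set ℝ) → t ∈ Icc c d → tmap Φ Ψ t ∉ Ioo p q := by
    intro t htcd htm hmem
    have hσ't : (Φ t : Plane) ∈ σ' := by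
      have : t ∈ {t | (Φ t : Plane) ∈ σ'} := by
        rw [hγσ', compl_Ioo']
        rcases htcd with h | h
        · exact Or.inl (le_of_eq h)
        · exact Or.inr (mem_Ici.2 (le_of_eq (mem_singleton_iff.1 h).symm))
      exact this
    have : tmap Φ Ψ t ∈ {s | (Ψ s : Plane) ∈ σ \ σ'} := by rw [hσσ']; exact hmem
    exact this.2 (hspec t htm ▸ hσ't)
  have himg := arc_image hcd ((tmap_continuousOn Φ Ψ).mono hIcc)
    ((tmap_injOn Φ Ψ).mono hIcc) hsub
    (hend c (Or.inl rfl) (left_mem_Icc.2 hcd.le))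
    (hend d (Or.inr rfl) (right_mem_Icc.2 hcd.le))
  have h1 : σ \ σ' = (fun s => (Ψ s : Plane)) '' (Ioo p q) := by
    rw [← hσσ', image_preimage_param]
    exact (inter_eq_self_of_subset_right diff_subset).symm
  rw [h1, ← himg, image_image]
  apply image_congr
  intro t ht
  exact hspec t (Ioo_subset_Icc_self ht)

lemma preimage_pos {σ T : Set Plane} (Ψ : ℝ ≃ₜ σ) {p q : ℝ}
    (h : {s | (Ψ s : Plane) ∈ T} = Ioo p q) {x : Plane} (hxσ : x ∈ σ) (hxT : x ∈ T) :
    p < q := by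
  have : Ψ.symm ⟨x, hxσ⟩ ∈ {s | (Ψ s : Plane) ∈ T} := by
    show (Ψ (Ψ.symm ⟨x, hxσ⟩) : Plane) ∈ T
    rw [Homeomorph.apply_symm_apply]
    exact hxT
  rw [h] at this
  exact this.1.trans this.2

lemma preimage_compl {σ T : Set Plane} (Ψ : ℝ ≃ₜ σ) {p q : ℝ}
    (h : {s | (Ψ s : Plane) ∈ σ \ T} = Ioo p q) :
    {s | (Ψ s : Plane) ∈ T} = (Ioo p q)ᶜ := by
  ext s
  simp only [mem_setOf_eq, mem_compl_iff]
  constructor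
  · intro hs hmem
    rw [← h] at hmem
    exact hmem.2 hs
  · intro hs
    by_contra hg
    exact hs (by rw [← h]; exact ⟨(Ψ s).2, hg⟩)

lemma stmt7_core_aux {Γ : Set (Set Plane)} (hline : ∀ γ ∈ Γ, IsTopLine γ)
    (hport : ∀ γ ∈ Γ, ∀ γ' ∈ Γ, γ ≠ γ' → IsPortion γ (γ \ γ'))
    {γ σ σ' : Set Plane} (hγΓ : γ ∈ Γ) (hσΓ : σ ∈ Γ) (hσ'Γ : σ' ∈ Γ)
    (hγσ : γ ≠ σ) (hγσ' : γ ≠ σ') (hss : σ ≠ σ')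
    (Φ : ℝ ≃ₜ γ) {a b c d : ℝ} (hab : a < b) (hcd : c < d)
    (h1 : {t | (Φ t : Plane) ∈ σ} = (Ioo a b)ᶜ)
    (h2 : {t | (Φ t : Plane) ∈ σ'} = (Ioo c d)ᶜ)
    (hbc : b ≤ c) : False := by
  obtain ⟨Ψ⟩ := hline σ hσΓ
  obtain ⟨Ψ'⟩ := hline σ' hσ'Γ
  -- σ \ σ' = Φ '' (Ioo c d)
  obtain ⟨p, q, hpq⟩ := (hport σ hσΓ σ' hσ'Γ hss).2 Ψ
  have key1 : σ \ σ' = (fun t => (Φ t : Plane)) '' (Ioo c d) :=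
    arc_transfer Φ Ψ hcd (fun t ht hmem => absurd (hbc.trans ht.1) (not_le.2 hmem.2))
      h1 h2 hpq
  -- σ' \ σ = Φ '' (Ioo a b)
  obtain ⟨p', q', hp'q'⟩ := (hport σ' hσ'Γ σ hσΓ (Ne.symm hss)).2 Ψ'
  have key2 : σ' \ σ = (fun t => (Φ t : Plane)) '' (Ioo a b) :=
    arc_transfer Φ Ψ' hab (fun t ht hmem => absurd (ht.2.trans hbc) (not_le.2 hmem.1))
      h2 h1 hp'q'
  -- hence σ \ γ = σ' \ γ
  have himg_sub : ∀ S : Set ℝ, (fun t => (Φ t : Plane)) '' S ⊆ γ := by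
    rintro S _ ⟨t, _, rfl⟩
    exact (Φ t).2
  have hAA' : σ \ γ = σ' \ γ := by
    apply Subset.antisymm
    · rintro x ⟨hxσ, hxγ⟩
      refine ⟨?_, hxγ⟩
      by_contra hxσ'
      have hx : x ∈ σ \ σ' := ⟨hxσ, hxσ'⟩
      rw [key1] at hx
      exact hxγ (himg_sub _ hx)
    · rintro x ⟨hxσ', hxγ⟩
      refine ⟨?_, hxγ⟩
      by_contra hxσ
      have hx : x ∈ σ' \ σ := ⟨hxσ', hxσ⟩
      rw [key2] at hx
      exact hxγ (himg_sub _ hx)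
  -- the portions σ \ γ and σ' \ γ in their own parametrizations
  obtain ⟨α, β, hαβeq⟩ := (hport σ hσΓ γ hγΓ (Ne.symm hγσ)).2 Ψ
  obtain ⟨α', β', hα'β'eq⟩ := (hport σ' hσ'Γ γ hγΓ (Ne.symm hγσ')).2 Ψ'
  obtain ⟨x₀, hx₀σ, hx₀γ⟩ : ∃ x, x ∈ σ ∧ x ∉ γ := by
    have := line_not_subset (hline σ hσΓ) (Ne.symm hγσ)
      (hport γ hγΓ σ hσΓ hγσ) (hline γ hγΓ)
    obtain ⟨x, hx1, hx2⟩ := not_subset.1 this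
    exact ⟨x, hx1, hx2⟩
  obtain ⟨x₁, hx₁σ', hx₁γ⟩ : ∃ x, x ∈ σ' ∧ x ∉ γ := by
    have := line_not_subset (hline σ' hσ'Γ) (Ne.symm hγσ')
      (hport γ hγΓ σ' hσ'Γ hγσ') (hline γ hγΓ)
    obtain ⟨x, hx1, hx2⟩ := not_subset.1 this
    exact ⟨x, hx1, hx2⟩
  have hαβ : α < β := preimage_pos Ψ hαβeq hx₀σ ⟨hx₀σ, hx₀γ⟩
  have hα'β' : α' < β' := preimage_pos Ψ' hα'β'eq hx₁σ' ⟨hx₁σ', hx₁γ⟩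
  -- endpoints
  have hends := endpointE Φ Ψ hab hαβ h1 (preimage_compl Ψ hαβeq)
  have hends' := endpointE Φ Ψ' hcd hα'β' h2 (preimage_compl Ψ' hα'β'eq)
  -- Φ a belongs to the closure of A = σ \ γ
  have hA : σ \ γ = (fun s => (Ψ s : Plane)) '' (Ioo α β) := by
    rw [← hαβeq, image_preimage_param]
    exact (inter_eq_self_of_subset_right diff_subset).symm
  have hA' : σ \ γ = (fun s => (Ψ' s : Plane)) '' (Ioo α' β') := by
    rw [hAA', ← hα'β'eq, image_preimage_param]
    exact (inter_eq_self_of_subset_right diff_subset).symm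
  have hψc : Continuous (fun s => (Ψ s : Plane)) :=
    continuous_subtype_val.comp Ψ.continuous
  have hψ'c : Continuous (fun s => (Ψ' s : Plane)) :=
    continuous_subtype_val.comp Ψ'.continuous
  have hclosα : (Ψ α : Plane) ∈ closure (σ \ γ) := by
    rw [hA]
    apply image_closure_subset_closure_image hψc
    exact mem_image_of_mem _ (by rw [closure_Ioo hαβ.ne]; exact left_mem_Icc.2 hαβ.le)
  have hclosβ : (Ψ β : Plane) ∈ closure (σ \ γ) := by
    rw [hA]
    apply image_closure_subset_closure_image hψc
    exact mem_image_of_mem _ (by rw [closure_Ioo hαβ.ne]; exact right_mem_Icc.2 hαβ.le)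
  have hΦa : (Φ a : Plane) ∈ closure (σ \ γ) := by
    rcases hends with ⟨hα, _⟩ | ⟨_, hβ⟩
    · exact hα ▸ hclosα
    · exact hβ ▸ hclosβ
  -- the closure is contained in the compact image of [α', β'] under Ψ'
  have hclos_sub : closure (σ \ γ) ⊆ (fun s => (Ψ' s : Plane)) '' (Icc α' β') := by
    apply closure_minimal
    · rw [hA']
      exact image_mono Ioo_subset_Icc_self
    · exact (isCompact_Icc.image hψ'c).isClosed
  obtain ⟨s, hs, hseq⟩ := hclos_sub hΦa
  have hsio : s ∉ Ioo α' β' := by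
    intro hmem
    have : (Φ a : Plane) ∈ σ \ γ := hA' ▸ (hseq ▸ mem_image_of_mem _ hmem)
    exact this.2 (Φ a).2
  have hcases : s = α' ∨ s = β' := by
    rcases lt_or_ge α' s with h | h
    · rcases lt_or_ge s β' with h' | h'
      · exact absurd ⟨h, h'⟩ hsio
      · exact Or.inr (le_antisymm hs.2 h')
    · exact Or.inl (le_antisymm h hs.1)
  have hΦa_end : (Φ a : Plane) = Φ c ∨ (Φ a : Plane) = Φ d := by
    rcases hcases with rfl | rfl
    · rcases hends' with ⟨hc', _⟩ | ⟨hc', _⟩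
      · exact Or.inl (hseq.symm.trans hc')
      · exact Or.inr (hseq.symm.trans hc')
    · rcases hends' with ⟨_, hd'⟩ | ⟨_, hd'⟩
      · exact Or.inr (hseq.symm.trans hd')
      · exact Or.inl (hseq.symm.trans hd')
  rcases hΦa_end with h | h
  · have := param_injective Φ h
    linarith
  · have := param_injective Φ h
    linarith

lemma stmt7_core {Γ : Set (Set Plane)} (hline : ∀ γ ∈ Γ, IsTopLine γ)
    (hport : ∀ γ ∈ Γ, ∀ γ' ∈ Γ, γ ≠ γ' → IsPortion γ (γ \ γ'))
    {γ σ σ' : Set Plane} (hγΓ : γ ∈ Γ) (hσΓ : σ ∈ Γ) (hσ'Γ : σ' ∈ Γ)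
    (hγσ : γ ≠ σ) (hγσ' : γ ≠ σ') (hss : σ ≠ σ')
    (Φ : ℝ ≃ₜ γ) {a b c d : ℝ} (hab : a < b) (hcd : c < d)
    (h1 : {t | (Φ t : Plane) ∈ γ \ σ} = Ioo a b)
    (h2 : {t | (Φ t : Plane) ∈ γ \ σ'} = Ioo c d) :
    (Ioo a b ∩ Ioo c d).Nonempty := by
  have h1' : {t | (Φ t : Plane) ∈ σ} = (Ioo a b)ᶜ := preimage_compl Φ h1
  have h2' : {t | (Φ t : Plane) ∈ σ'} = (Ioo c d)ᶜ := preimage_compl Φ h2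
  by_contra hemp
  rw [not_nonempty_iff_eq_empty] at hemp
  have hdisj : b ≤ c ∨ d ≤ a := by
    by_contra hcon
    push_neg at hcon
    obtain ⟨hcb, had⟩ := hcon
    have hx : (max a c + min b d) / 2 ∈ Ioo a b ∩ Ioo c d := by
      constructor
      · constructor
        · have := le_max_left a c; have := min_le_left b d
          have h3 : max a c < min b d := max_lt (lt_min hab had) (lt_min hcb hcd)
          linarith [le_max_left a c, max_lt (lt_min hab had) (lt_min hcb hcd)]
        · linarith [min_le_left b d, max_lt (lt_min hab had) (lt_min hcb hcd)]
      · constructor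
        · linarith [le_max_right a c, max_lt (lt_min hab had) (lt_min hcb hcd)]
        · linarith [min_le_right b d, max_lt (lt_min hab had) (lt_min hcb hcd)]
    rw [hemp] at hx
    exact hx
  rcases hdisj with h | h
  · exact stmt7_core_aux hline hport hγΓ hσΓ hσ'Γ hγσ hγσ' hss Φ hab hcd h1' h2' h
  · exact stmt7_core_aux hline hport hγΓ hσ'Γ hσΓ hγσ' hγσ (Ne.symm hss) Φ hcd hab h2' h1' h

lemma stmt7_key {Γ : Set (Set Plane)} (hline : ∀ γ ∈ Γ, IsTopLine γ)
    (hport : ∀ γ ∈ Γ, ∀ γ' ∈ Γ, γ ≠ γ' → IsPortion γ (γ \ γ'))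
    {γ : Set Plane} (hγ : γ ∈ Γ)
    {Γ₀ : Set (Set Plane)} (hΓ₀ : Γ₀ ⊆ Γ \ {γ}) (hfin : Γ₀.Finite)
    (hne : Γ₀.Nonempty) (Φ : ℝ ≃ₜ γ) :
    ∃ M N : ℝ, M < N ∧ {t : ℝ | (Φ t : Plane) ∈ γ \ ⋃₀ Γ₀} = Ioo M N := by
  have hmemΓ : ∀ σ ∈ Γ₀, σ ∈ Γ := fun σ hσ => (hΓ₀ hσ).1
  have hneγ : ∀ σ ∈ Γ₀, γ ≠ σ := fun σ hσ h => (hΓ₀ hσ).2 (by simp [← h])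
  have hex : ∀ σ : Set Plane, ∃ ab : ℝ × ℝ, σ ∈ Γ₀ →
      (ab.1 < ab.2 ∧ {t : ℝ | (Φ t : Plane) ∈ γ \ σ} = Ioo ab.1 ab.2) := by
    intro σ
    by_cases hσ : σ ∈ Γ₀
    · obtain ⟨a, b, hab⟩ := (hport γ hγ σ (hmemΓ σ hσ) (hneγ σ hσ)).2 Φ
      refine ⟨(a, b), fun _ => ⟨?_, hab⟩⟩
      obtain ⟨x, hxγ, hxσ⟩ := not_subset.1 (line_not_subset (hline γ hγ) (hneγ σ hσ)
        (hport σ (hmemΓ σ hσ) γ hγ (Ne.symm (hneγ σ hσ))) (hline σ (hmemΓ σ hσ)))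
      exact preimage_pos Φ hab hxγ ⟨hxγ, hxσ⟩
    · exact ⟨(0, 1), fun h => absurd h hσ⟩
  choose F hF using hex
  set T := hfin.toFinset with hT
  have hTmem : ∀ σ, σ ∈ T ↔ σ ∈ Γ₀ := fun σ => Set.Finite.mem_toFinset hfin
  have hTne : T.Nonempty := (Set.Finite.toFinset_nonempty hfin).2 hne
  refine ⟨T.sup' hTne (fun σ => (F σ).1), T.inf' hTne (fun σ => (F σ).2), ?_, ?_⟩
  · obtain ⟨σ₁, hσ₁, he₁⟩ := Finset.exists_mem_eq_sup' hTne (fun σ => (F σ).1)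
    obtain ⟨σ₂, hσ₂, he₂⟩ := Finset.exists_mem_eq_inf' hTne (fun σ => (F σ).2)
    rw [he₁, he₂]
    by_cases heq : σ₁ = σ₂
    · subst heq
      exact (hF σ₁ ((hTmem σ₁).1 hσ₁)).1
    · obtain ⟨h₁, h₁'⟩ := hF σ₁ ((hTmem σ₁).1 hσ₁)
      obtain ⟨h₂, h₂'⟩ := hF σ₂ ((hTmem σ₂).1 hσ₂)
      obtain ⟨x, hx₁, hx₂⟩ := stmt7_core hline hport hγ (hmemΓ σ₁ ((hTmem σ₁).1 hσ₁))
        (hmemΓ σ₂ ((hTmem σ₂).1 hσ₂)) (hneγ σ₁ ((hTmem σ₁).1 hσ₁))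
        (hneγ σ₂ ((hTmem σ₂).1 hσ₂)) heq Φ h₁ h₂ h₁' h₂'
      exact hx₁.1.trans hx₂.2
  · ext t
    simp only [mem_setOf_eq, mem_diff, mem_sUnion, mem_Ioo, not_exists]
    constructor
    · rintro ⟨htγ, hnot⟩
      constructor
      · rw [Finset.sup'_lt_iff]
        intro σ hσ
        have hmem : t ∈ {t : ℝ | (Φ t : Plane) ∈ γ \ σ} :=
          ⟨htγ, fun h => hnot σ ⟨(hTmem σ).1 hσ, h⟩⟩
        rw [(hF σ ((hTmem σ).1 hσ)).2] at hmem
        exact hmem.1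
      · rw [Finset.lt_inf'_iff]
        intro σ hσ
        have hmem : t ∈ {t : ℝ | (Φ t : Plane) ∈ γ \ σ} :=
          ⟨htγ, fun h => hnot σ ⟨(hTmem σ).1 hσ, h⟩⟩
        rw [(hF σ ((hTmem σ).1 hσ)).2] at hmem
        exact hmem.2
    · rintro ⟨hM, hN⟩
      rw [Finset.sup'_lt_iff] at hM
      rw [Finset.lt_inf'_iff] at hN
      refine ⟨(Φ t).2, fun σ hσm => ?_⟩
      obtain ⟨hσ, hmem⟩ := hσm
      have hmem' : t ∈ Ioo (F σ).1 (F σ).2 :=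
        ⟨hM σ ((hTmem σ).2 hσ), hN σ ((hTmem σ).2 hσ)⟩
      rw [← (hF σ hσ).2] at hmem'
      exact hmem'.2 hmem

theorem stmt7 (Γ : Set (Set Plane)) (hline : ∀ γ ∈ Γ, IsTopLine γ)
    (hport : ∀ γ ∈ Γ, ∀ γ' ∈ Γ, γ ≠ γ' → IsPortion γ (γ \ γ'))
    (γ : Set Plane) (hγ : γ ∈ Γ)
    (Γ₀ : Set (Set Plane)) (hΓ₀ : Γ₀ ⊆ Γ \ {γ}) (hfin : Γ₀.Finite)
    (hne : Γ₀.Nonempty) :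
    IsPortion γ (γ \ ⋃₀ Γ₀) ∧ (γ \ ⋃₀ Γ₀).Nonempty := by
  constructor
  · refine ⟨diff_subset, fun Φ => ?_⟩
    obtain ⟨M, N, _, hset⟩ := stmt7_key hline hport hγ hΓ₀ hfin hne Φ
    exact ⟨M, N, hset⟩
  · obtain ⟨Φ⟩ := hline γ hγ
    obtain ⟨M, N, hMN, hset⟩ := stmt7_key hline hport hγ hΓ₀ hfin hne Φ
    have : (M + N) / 2 ∈ {t : ℝ | (Φ t : Plane) ∈ γ \ ⋃₀ Γ₀} := by
      rw [hset]
      exact ⟨by linarith, by linarith⟩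
    exact ⟨Φ ((M + N) / 2), this⟩
end

section
/- Let Γ be a set of topological lines in ℝ² such that for all distinct γ, γ' ∈ Γ, γ \ γ' is a portion of γ (so that J(γ,γ') := cl(γ △ γ') is a Jordan curve for distinct γ, γ'). Then for all distinct γ, σ, σ' ∈ Γ, the set-difference J(γ, σ') \ J(γ, σ) is a connected subset of J(σ, σ'). -/
open Set Topology

namespace Stmt8Aux

lemma rayPunct {s : Set ℝ} {x y z : ℝ} (hx : x ∈ s) (hz : z ∈ s) (hxy : x ≤ y) (hyz : y ≤ z)
    (hy : y ∉ s) : ¬ IsPreconnected s :=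
  fun h => hy (h.Icc_subset hx hz ⟨hxy, hyz⟩)

lemma compl_Ioo' (a b : ℝ) : (Ioo a b)ᶜ = Iic a ∪ Ici b := by
  ext x
  simp only [mem_compl_iff, mem_Ioo, mem_union, mem_Iic, mem_Ici, not_and_or, not_lt]

lemma lt_ab {F G : ℝ → Plane} {γ σ : Set Plane} {a b c d : ℝ}
    (hF : IsEmbedding F) (hFr : range F = γ)
    (hG : IsEmbedding G) (hGr : range G = σ)
    (hFσ : ∀ t, F t ∈ σ ↔ t ∉ Ioo a b)
    (hGγ : ∀ t, G t ∈ γ ↔ t ∉ Ioo c d)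
    (hne : γ ≠ σ) : a < b := by
  by_contra hab
  have hIoo : Ioo a b = ∅ := Ioo_eq_empty (fun h => hab h)
  have hγσ : γ ⊆ σ := by
    intro x hx
    obtain ⟨t, rfl⟩ := hFr ▸ hx
    exact (hFσ t).2 (by simp [hIoo])
  by_cases hcd : c < d
  · have h1 : G '' (Ioo c d)ᶜ = γ := by
      ext x
      constructor
      · rintro ⟨t, ht, rfl⟩; exact (hGγ t).2 ht
      · intro hx
        obtain ⟨t, rfl⟩ := hGr ▸ (hγσ hx)
        exact ⟨t, (hGγ t).1 hx, rfl⟩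
    have h2 : IsPreconnected γ := hFr ▸ isPreconnected_range hF.continuous
    have h3 : IsPreconnected ((Ioo c d)ᶜ) :=
      hG.toIsInducing.isPreconnected_image.1 (h1 ▸ h2)
    refine rayPunct (s := (Ioo c d)ᶜ) (x := c) (y := (c+d)/2) (z := d) ?_ ?_ ?_ ?_ ?_ h3
    · simp
    · simp
    · linarith
    · linarith
    · simp only [mem_compl_iff, not_not, mem_Ioo]; constructor <;> linarith
  · have hσγ : σ ⊆ γ := by
      intro x hx
      obtain ⟨t, rfl⟩ := hGr ▸ hx
      exact (hGγ t).2 (by simp [Ioo_eq_empty (fun h => hcd h)])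
    exact hne (Subset.antisymm hγσ hσγ)

lemma closure_image_Ioo {F : ℝ → Plane} (hF : IsEmbedding F) {a b : ℝ} (hab : a < b) :
    closure (F '' Ioo a b) = F '' Icc a b := by
  apply Subset.antisymm
  · exact closure_minimal (image_mono Ioo_subset_Icc_self)
      (isCompact_Icc.image hF.continuous).isClosed
  · rw [← closure_Ioo hab.ne]
    exact (image_closure_subset_closure_image hF.continuous)

lemma inter_closure_image {F : ℝ → Plane} {γ : Set Plane} (hF : IsEmbedding F)
    (hFr : range F = γ) {s : Set ℝ} (hs : IsClosed s) :
    γ ∩ closure (F '' s) = F '' s := by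
  have h1 : F ⁻¹' closure (F '' s) = s := by
    rw [← hF.toIsInducing.closure_eq_preimage_closure_image, hs.closure_eq]
  have h2 : F '' (F ⁻¹' closure (F '' s)) = closure (F '' s) ∩ range F :=
    image_preimage_eq_inter_range
  rw [h1] at h2
  rw [← hFr, inter_comm, ← h2]

lemma subset_ray {γ Q A B Z1 Z2 : Set Plane} (hQ : IsPreconnected Q)
    (hZ1 : IsClosed Z1) (hZ2 : IsClosed Z2)
    (hA : A = γ ∩ Z1) (hB : B = γ ∩ Z2)
    (hQγ : Q ⊆ γ) (hQAB : Q ⊆ A ∪ B) (hAB : A ∩ B = ∅) : Q ⊆ A ∨ Q ⊆ B := by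
  have hUV : Q ⊆ Z2ᶜ ∪ Z1ᶜ := by
    intro x hx
    rcases hQAB hx with hxA | hxB
    · left
      intro hxZ2
      have : x ∈ A ∩ B := ⟨hxA, by rw [hB]; exact ⟨hQγ hx, hxZ2⟩⟩
      rw [hAB] at this; exact this.elim
    · right
      intro hxZ1
      have : x ∈ A ∩ B := ⟨by rw [hA]; exact ⟨hQγ hx, hxZ1⟩, hxB⟩
      rw [hAB] at this; exact this.elim
  by_cases h1 : (Q ∩ Z2ᶜ).Nonempty
  · by_cases h2 : (Q ∩ Z1ᶜ).Nonempty
    · obtain ⟨x, hxQ, hx⟩ := hQ _ _ hZ2.isOpen_compl hZ1.isOpen_compl hUV h1 h2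
      exfalso
      rcases hQAB hxQ with hxA | hxB
      · exact hx.2 (by rw [hA] at hxA; exact hxA.2)
      · exact hx.1 (by rw [hB] at hxB; exact hxB.2)
    · left
      intro x hx
      rw [hA]
      refine ⟨hQγ hx, ?_⟩
      by_contra hxZ1
      exact h2 ⟨x, hx, hxZ1⟩
  · right
    intro x hx
    rw [hB]
    refine ⟨hQγ hx, ?_⟩
    by_contra hxZ2
    exact h1 ⟨x, hx, hxZ2⟩

lemma endpointLL {F G : ℝ → Plane} (hF : IsEmbedding F) (hG : IsEmbedding G) {a c : ℝ}
    (h : F '' Iic a = G '' Iic c) : F a = G c := by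
  have hmem : F a ∈ G '' Iic c := h ▸ ⟨a, mem_Iic.2 le_rfl, rfl⟩
  obtain ⟨y, hy, hGy⟩ := hmem
  rcases eq_or_lt_of_le (mem_Iic.1 hy) with rfl | hyc
  · exact hGy.symm
  exfalso
  have himg : G '' (Iic c \ {y}) = F '' Iio a := by
    rw [image_diff hG.injective, image_singleton, hGy, ← h, ← image_singleton (f := F) (a := a),
      ← image_diff hF.injective, Iic_diff_right]
  have hpre : IsPreconnected (Iic c \ {y}) := by
    apply hG.toIsInducing.isPreconnected_image.1
    rw [himg]
    exact isPreconnected_Iio.image F hF.continuous.continuousOn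
  exact rayPunct (s := Iic c \ {y}) (x := y - 1) (y := y) (z := c)
    ⟨by simp only [mem_Iic]; linarith, by simp only [mem_singleton_iff]; intro h; linarith⟩ ⟨by simp, by simp [hyc.ne']⟩ (by linarith) hyc.le
    (by simp) hpre

lemma endpointLR {F G : ℝ → Plane} (hF : IsEmbedding F) (hG : IsEmbedding G) {a d : ℝ}
    (h : F '' Iic a = G '' Ici d) : F a = G d := by
  have hmem : F a ∈ G '' Ici d := h ▸ ⟨a, mem_Iic.2 le_rfl, rfl⟩
  obtain ⟨y, hy, hGy⟩ := hmem
  rcases eq_or_lt_of_le (mem_Ici.1 hy) with rfl | hdy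
  · exact hGy.symm
  exfalso
  have himg : G '' (Ici d \ {y}) = F '' Iio a := by
    rw [image_diff hG.injective, image_singleton, hGy, ← h, ← image_singleton (f := F) (a := a),
      ← image_diff hF.injective, Iic_diff_right]
  have hpre : IsPreconnected (Ici d \ {y}) := by
    apply hG.toIsInducing.isPreconnected_image.1
    rw [himg]
    exact isPreconnected_Iio.image F hF.continuous.continuousOn
  exact rayPunct (s := Ici d \ {y}) (x := d) (y := y) (z := y + 1)
    ⟨by simp, by simp [hdy.ne]⟩ ⟨by simp only [mem_Ici]; linarith, by simp only [mem_singleton_iff]; intro h; linarith⟩ hdy.le (by linarith)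
    (by simp) hpre

lemma endpointRL {F G : ℝ → Plane} (hF : IsEmbedding F) (hG : IsEmbedding G) {b c : ℝ}
    (h : F '' Ici b = G '' Iic c) : F b = G c := by
  have hmem : F b ∈ G '' Iic c := h ▸ ⟨b, mem_Ici.2 le_rfl, rfl⟩
  obtain ⟨y, hy, hGy⟩ := hmem
  rcases eq_or_lt_of_le (mem_Iic.1 hy) with rfl | hyc
  · exact hGy.symm
  exfalso
  have himg : G '' (Iic c \ {y}) = F '' Ioi b := by
    rw [image_diff hG.injective, image_singleton, hGy, ← h, ← image_singleton (f := F) (a := b),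
      ← image_diff hF.injective, Ici_sdiff_left]
  have hpre : IsPreconnected (Iic c \ {y}) := by
    apply hG.toIsInducing.isPreconnected_image.1
    rw [himg]
    exact isPreconnected_Ioi.image F hF.continuous.continuousOn
  exact rayPunct (s := Iic c \ {y}) (x := y - 1) (y := y) (z := c)
    ⟨by simp only [mem_Iic]; linarith, by simp only [mem_singleton_iff]; intro h; linarith⟩ ⟨by simp, by simp [hyc.ne']⟩ (by linarith) hyc.le
    (by simp) hpre

lemma endpointRR {F G : ℝ → Plane} (hF : IsEmbedding F) (hG : IsEmbedding G) {b d : ℝ}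
    (h : F '' Ici b = G '' Ici d) : F b = G d := by
  have hmem : F b ∈ G '' Ici d := h ▸ ⟨b, mem_Ici.2 le_rfl, rfl⟩
  obtain ⟨y, hy, hGy⟩ := hmem
  rcases eq_or_lt_of_le (mem_Ici.1 hy) with rfl | hdy
  · exact hGy.symm
  exfalso
  have himg : G '' (Ici d \ {y}) = F '' Ioi b := by
    rw [image_diff hG.injective, image_singleton, hGy, ← h, ← image_singleton (f := F) (a := b),
      ← image_diff hF.injective, Ici_sdiff_left]
  have hpre : IsPreconnected (Ici d \ {y}) := by
    apply hG.toIsInducing.isPreconnected_image.1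
    rw [himg]
    exact isPreconnected_Ioi.image F hF.continuous.continuousOn
  exact rayPunct (s := Ici d \ {y}) (x := d) (y := y) (z := y + 1)
    ⟨by simp, by simp [hdy.ne]⟩ ⟨by simp only [mem_Ici]; linarith, by simp only [mem_singleton_iff]; intro h; linarith⟩ hdy.le (by linarith)
    (by simp) hpre

lemma rays_match {F G : ℝ → Plane} {γ σ : Set Plane} {a b c d : ℝ}
    (hF : IsEmbedding F) (hFr : range F = γ)
    (hG : IsEmbedding G) (hGr : range G = σ)
    (hFσ : ∀ t, F t ∈ σ ↔ t ∉ Ioo a b)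
    (hGγ : ∀ t, G t ∈ γ ↔ t ∉ Ioo c d)
    (hab : a < b) (hcd : c < d) :
    (F '' Iic a = G '' Iic c ∧ F '' Ici b = G '' Ici d) ∨
    (F '' Iic a = G '' Ici d ∧ F '' Ici b = G '' Iic c) := by
  set P1 := F '' Iic a with hP1
  set P2 := F '' Ici b with hP2
  set Q1 := G '' Iic c with hQ1
  set Q2 := G '' Ici d with hQ2
  have hPC : P1 ∪ P2 = γ ∩ σ := by
    rw [hP1, hP2, ← image_union, ← compl_Ioo']
    ext x
    constructor
    · rintro ⟨t, ht, rfl⟩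
      exact ⟨hFr ▸ mem_range_self t, (hFσ t).2 ht⟩
    · rintro ⟨hxγ, hxσ⟩
      obtain ⟨t, rfl⟩ := hFr ▸ hxγ
      exact ⟨t, (hFσ t).1 hxσ, rfl⟩
  have hQC : Q1 ∪ Q2 = γ ∩ σ := by
    rw [hQ1, hQ2, ← image_union, ← compl_Ioo']
    ext x
    constructor
    · rintro ⟨t, ht, rfl⟩
      exact ⟨(hGγ t).2 ht, hGr ▸ mem_range_self t⟩
    · rintro ⟨hxγ, hxσ⟩
      obtain ⟨t, rfl⟩ := hGr ▸ hxσ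
      exact ⟨t, (hGγ t).1 hxγ, rfl⟩
  have hP12 : P1 ∩ P2 = ∅ := by
    rw [hP1, hP2, ← image_inter hF.injective]
    rw [Iic_inter_Ici, Icc_eq_empty (by linarith), image_empty]
  have hQ12 : Q1 ∩ Q2 = ∅ := by
    rw [hQ1, hQ2, ← image_inter hG.injective]
    rw [Iic_inter_Ici, Icc_eq_empty (by linarith), image_empty]
  -- basic preconnectedness and closedness facts
  have hP1p : IsPreconnected P1 := isPreconnected_Iic.image F hF.continuous.continuousOn
  have hP2p : IsPreconnected P2 := isPreconnected_Ici.image F hF.continuous.continuousOn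
  have hQ1p : IsPreconnected Q1 := isPreconnected_Iic.image G hG.continuous.continuousOn
  have hQ2p : IsPreconnected Q2 := isPreconnected_Ici.image G hG.continuous.continuousOn
  have hP1c : P1 = γ ∩ closure P1 := (inter_closure_image hF hFr isClosed_Iic).symm
  have hP2c : P2 = γ ∩ closure P2 := (inter_closure_image hF hFr isClosed_Ici).symm
  have hQ1c : Q1 = σ ∩ closure Q1 := (inter_closure_image hG hGr isClosed_Iic).symm
  have hQ2c : Q2 = σ ∩ closure Q2 := (inter_closure_image hG hGr isClosed_Ici).symm
  have hQ1γ : Q1 ⊆ γ ∩ σ := hQC ▸ subset_union_left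
  have hQ2γ : Q2 ⊆ γ ∩ σ := hQC ▸ subset_union_right
  have hP1γ : P1 ⊆ γ ∩ σ := hPC ▸ subset_union_left
  have hP2γ : P2 ⊆ γ ∩ σ := hPC ▸ subset_union_right
  have hq1 : Q1 ⊆ P1 ∨ Q1 ⊆ P2 :=
    subset_ray hQ1p isClosed_closure isClosed_closure hP1c hP2c
      (fun x hx => (hQ1γ hx).1) (by rw [hPC]; exact hQ1γ) hP12
  have hq2 : Q2 ⊆ P1 ∨ Q2 ⊆ P2 :=
    subset_ray hQ2p isClosed_closure isClosed_closure hP1c hP2c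
      (fun x hx => (hQ2γ hx).1) (by rw [hPC]; exact hQ2γ) hP12
  have hp1 : P1 ⊆ Q1 ∨ P1 ⊆ Q2 :=
    subset_ray hP1p isClosed_closure isClosed_closure hQ1c hQ2c
      (fun x hx => (hP1γ hx).2) (by rw [hQC]; exact hP1γ) hQ12
  have hp2 : P2 ⊆ Q1 ∨ P2 ⊆ Q2 :=
    subset_ray hP2p isClosed_closure isClosed_closure hQ1c hQ2c
      (fun x hx => (hP2γ hx).2) (by rw [hQC]; exact hP2γ) hQ12
  have hFa : F a ∈ P1 := ⟨a, mem_Iic.2 le_rfl, rfl⟩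
  have hFb : F b ∈ P2 := ⟨b, mem_Ici.2 le_rfl, rfl⟩
  have hGc : G c ∈ Q1 := ⟨c, mem_Iic.2 le_rfl, rfl⟩
  have hGd : G d ∈ Q2 := ⟨d, mem_Ici.2 le_rfl, rfl⟩
  have empty_mem : ∀ {x : Plane} {S : Set Plane}, S = ∅ → x ∈ S → False := by
    rintro x S rfl h; exact h
  rcases hq1 with hq1 | hq1
  · left
    have hP1Q1 : P1 = Q1 := by
      rcases hp1 with hp1 | hp1
      · exact Subset.antisymm hp1 hq1
      · exact absurd (hp1 (hq1 hGc)) (fun h => empty_mem hQ12 ⟨hGc, h⟩)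
    constructor
    · exact hP1Q1
    · have hq2' : Q2 ⊆ P2 := by
        rcases hq2 with hq2 | hq2
        · exact absurd (hP1Q1 ▸ hq2 hGd) (fun h => empty_mem hQ12 ⟨h, hGd⟩)
        · exact hq2
      have hp2' : P2 ⊆ Q2 := by
        rcases hp2 with hp2 | hp2
        · exact absurd (hP1Q1 ▸ hp2 hFb) (fun h => empty_mem hP12 ⟨h, hFb⟩)
        · exact hp2
      exact Subset.antisymm hp2' hq2'
  · right
    have hP2Q1 : P2 = Q1 := by
      rcases hp2 with hp2 | hp2
      · exact Subset.antisymm hp2 hq1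
      · exact absurd (hq1 (hGc) : G c ∈ P2) (fun h =>
          empty_mem hQ12 ⟨hGc, hp2 h⟩)
    constructor
    · have hq2' : Q2 ⊆ P1 := by
        rcases hq2 with hq2 | hq2
        · exact hq2
        · exact absurd (hP2Q1 ▸ hq2 hGd) (fun h => empty_mem hQ12 ⟨h, hGd⟩)
      have hp1' : P1 ⊆ Q2 := by
        rcases hp1 with hp1 | hp1
        · exact absurd (hP2Q1 ▸ hp1 hFa) (fun h => empty_mem hP12 ⟨hFa, h⟩)
        · exact hp1
      exact Subset.antisymm hp1' hq2'
    · exact hP2Q1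

/-- All four endpoint identifications from the matching. -/
lemma endpoints_pkg {F G : ℝ → Plane} {γ σ : Set Plane} {a b c d : ℝ}
    (hF : IsEmbedding F) (hFr : range F = γ)
    (hG : IsEmbedding G) (hGr : range G = σ)
    (hFσ : ∀ t, F t ∈ σ ↔ t ∉ Ioo a b)
    (hGγ : ∀ t, G t ∈ γ ↔ t ∉ Ioo c d)
    (hab : a < b) (hcd : c < d) :
    (F a = G c ∧ F b = G d) ∨ (F a = G d ∧ F b = G c) := by
  rcases rays_match hF hFr hG hGr hFσ hGγ hab hcd with ⟨h1, h2⟩ | ⟨h1, h2⟩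
  · exact Or.inl ⟨endpointLL hF hG h1, endpointRR hF hG h2⟩
  · exact Or.inr ⟨endpointLR hF hG h1, endpointRL hF hG h2⟩

lemma caseV {F G H : ℝ → Plane} {γ σ σ' : Set Plane} {a b a' b' c d c' d' p q e f : ℝ}
    (hF : IsEmbedding F) (hFr : range F = γ)
    (hG : IsEmbedding G) (hGr : range G = σ)
    (hH : IsEmbedding H) (hHr : range H = σ')
    (hFσ : ∀ t, F t ∈ σ ↔ t ∉ Ioo a b)
    (hFσ' : ∀ t, F t ∈ σ' ↔ t ∉ Ioo a' b')
    (hGγ : ∀ t, G t ∈ γ ↔ t ∉ Ioo c d)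
    (hGσ' : ∀ t, G t ∈ σ' ↔ t ∉ Ioo p q)
    (hHγ : ∀ t, H t ∈ γ ↔ t ∉ Ioo c' d')
    (hHσ : ∀ t, H t ∈ σ ↔ t ∉ Ioo e f)
    (hab : a < b) (hab' : a' < b') (hcd : c < d) (hcd' : c' < d')
    (hb'a : b' < a) : False := by
  have hFγ : ∀ t, F t ∈ γ := fun t => hFr ▸ mem_range_self t
  have hGσ : ∀ t, G t ∈ σ := fun t => hGr ▸ mem_range_self t
  have hHσ' : ∀ t, H t ∈ σ' := fun t => hHr ▸ mem_range_self t
  have mFG := rays_match hF hFr hG hGr hFσ hGγ hab hcd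
  have mFH := rays_match hF hFr hH hHr hFσ' hHγ hab' hcd'
  have epFG := endpoints_pkg hF hFr hG hGr hFσ hGγ hab hcd
  have epFH := endpoints_pkg hF hFr hH hHr hFσ' hHγ hab' hcd'
  -- Step 1 : σ \ σ' misses Ioo c d, i.e. every G t with t ∈ Ioo c d lies in σ'
  have hS1 : ∀ t ∈ Ioo c d, G t ∈ σ' := by
    set m' : ℝ := (a' + b') / 2 with hm'def
    have hm' : m' ∈ Ioo a' b' := by constructor <;> (simp only [hm'def]; linarith)
    have hFm'σ : F m' ∈ σ := (hFσ m').2 (by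
      simp only [mem_Ioo, not_and_or, not_lt]; left; linarith)
    have hFm'nσ' : F m' ∉ σ' := fun h => ((hFσ' m').1 h) hm'
    obtain ⟨s1, hGs1⟩ : F m' ∈ range G := hGr.symm ▸ hFm'σ
    have hs1pq : s1 ∈ Ioo p q := by
      by_contra hn
      exact hFm'nσ' (hGs1 ▸ (hGσ' s1).2 hn)
    have haI' : a ∉ Ioo a' b' := by
      simp only [mem_Ioo, not_and_or, not_lt]; right; linarith
    have hbI' : b ∉ Ioo a' b' := by
      simp only [mem_Ioo, not_and_or, not_lt]; right; linarith
    have hGcσ' : G c ∈ σ' ∧ G d ∈ σ' := by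
      rcases epFG with ⟨h1, h2⟩ | ⟨h1, h2⟩
      · exact ⟨h1 ▸ (hFσ' a).2 haI', h2 ▸ (hFσ' b).2 hbI'⟩
      · exact ⟨h2 ▸ (hFσ' b).2 hbI', h1 ▸ (hFσ' a).2 haI'⟩
    have hcpq : c ∉ Ioo p q := fun h => ((hGσ' c).1 hGcσ'.1) h
    have hdpq : d ∉ Ioo p q := fun h => ((hGσ' d).1 hGcσ'.2) h
    -- component containment
    have hm'ray : F m' ∈ F '' Iic a := ⟨m', mem_Iic.2 (by linarith), rfl⟩
    intro t ht
    by_contra hGtσ'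
    have htpq : t ∈ Ioo p q := by
      by_contra hn
      exact hGtσ' ((hGσ' t).2 hn)
    rcases mFG with ⟨h1, _⟩ | ⟨h1, _⟩
    · -- F '' Iic a = G '' Iic c : s1 < c and Ioo p q ⊆ Iio c
      have hs1c : s1 ≤ c := by
        rw [h1] at hm'ray
        obtain ⟨u, hu, huG⟩ := hm'ray
        rwa [← hG.injective (huG.trans hGs1.symm)]
      have hs1c' : s1 < c := lt_of_le_of_ne hs1c (fun hh => hcpq (hh ▸ hs1pq))
      -- t ∈ Ioo p q, t ∈ Ioo c d → c ∈ Ioo p q, contradiction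
      exact hcpq ⟨lt_trans hs1pq.1 hs1c', lt_trans ht.1 htpq.2⟩
    · -- F '' Iic a = G '' Ici d : s1 > d and Ioo p q ⊆ Ioi d
      have hs1d : d ≤ s1 := by
        rw [h1] at hm'ray
        obtain ⟨u, hu, huG⟩ := hm'ray
        rw [← hG.injective (huG.trans hGs1.symm)]; exact hu
      have hs1d' : d < s1 := lt_of_le_of_ne hs1d (fun hh => hdpq (hh ▸ hs1pq))
      exact hdpq ⟨lt_trans htpq.1 ht.2, lt_trans hs1d' hs1pq.2⟩
  -- Step 2 : mirror, every H t with t ∈ Ioo c' d' lies in σ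
  have hS2 : ∀ t ∈ Ioo c' d', H t ∈ σ := by
    set m : ℝ := (a + b) / 2 with hmdef
    have hm : m ∈ Ioo a b := by constructor <;> (simp only [hmdef]; linarith)
    have hFmσ' : F m ∈ σ' := (hFσ' m).2 (by
      simp only [mem_Ioo, not_and_or, not_lt]; right; linarith)
    have hFmnσ : F m ∉ σ := fun h => ((hFσ m).1 h) hm
    obtain ⟨s2, hHs2⟩ : F m ∈ range H := hHr.symm ▸ hFmσ'
    have hs2ef : s2 ∈ Ioo e f := by
      by_contra hn
      exact hFmnσ (hHs2 ▸ (hHσ s2).2 hn)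
    have ha'I : a' ∉ Ioo a b := by
      simp only [mem_Ioo, not_and_or, not_lt]; left; linarith
    have hb'I : b' ∉ Ioo a b := by
      simp only [mem_Ioo, not_and_or, not_lt]; left; linarith
    have hHcσ : H c' ∈ σ ∧ H d' ∈ σ := by
      rcases epFH with ⟨h1, h2⟩ | ⟨h1, h2⟩
      · exact ⟨h1 ▸ (hFσ a').2 ha'I, h2 ▸ (hFσ b').2 hb'I⟩
      · exact ⟨h2 ▸ (hFσ b').2 hb'I, h1 ▸ (hFσ a').2 ha'I⟩
    have hc'ef : c' ∉ Ioo e f := fun h => ((hHσ c').1 hHcσ.1) h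
    have hd'ef : d' ∉ Ioo e f := fun h => ((hHσ d').1 hHcσ.2) h
    have hmray : F m ∈ F '' Ici b' := ⟨m, mem_Ici.2 (by linarith), rfl⟩
    intro t ht
    by_contra hHtσ
    have htef : t ∈ Ioo e f := by
      by_contra hn
      exact hHtσ ((hHσ t).2 hn)
    rcases mFH with ⟨_, h2⟩ | ⟨_, h2⟩
    · -- F '' Ici b' = H '' Ici d'
      have hs2d : d' ≤ s2 := by
        rw [h2] at hmray
        obtain ⟨u, hu, huH⟩ := hmray
        rw [← hH.injective (huH.trans hHs2.symm)]; exact hu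
      have hs2d' : d' < s2 := lt_of_le_of_ne hs2d (fun hh => hd'ef (hh ▸ hs2ef))
      exact hd'ef ⟨lt_trans htef.1 ht.2, lt_trans hs2d' hs2ef.2⟩
    · -- F '' Ici b' = H '' Iic c'
      have hs2c : s2 ≤ c' := by
        rw [h2] at hmray
        obtain ⟨u, hu, huH⟩ := hmray
        rw [← hH.injective (huH.trans hHs2.symm)]; exact hu
      have hs2c' : s2 < c' := lt_of_le_of_ne hs2c (fun hh => hc'ef (hh ▸ hs2ef))
      exact hc'ef ⟨lt_trans hs2ef.1 hs2c', lt_trans ht.1 htef.2⟩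
  -- the two deviation arcs coincide
  have him : G '' Ioo c d = H '' Ioo c' d' := by
    apply Subset.antisymm
    · rintro x ⟨t, ht, rfl⟩
      obtain ⟨s, hs⟩ : G t ∈ range H := hHr.symm ▸ hS1 t ht
      have hGtγ : G t ∉ γ := fun hh => (hGγ t).1 hh ht
      have hsI : s ∈ Ioo c' d' := by
        by_contra hn
        exact hGtγ (hs ▸ (hHγ s).2 hn)
      exact ⟨s, hsI, hs⟩
    · rintro x ⟨t, ht, rfl⟩
      obtain ⟨s, hs⟩ : H t ∈ range G := hGr.symm ▸ hS2 t ht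
      have hHtγ : H t ∉ γ := fun hh => (hHγ t).1 hh ht
      have hsI : s ∈ Ioo c d := by
        by_contra hn
        exact hHtγ (hs ▸ (hGγ s).2 hn)
      exact ⟨s, hsI, hs⟩
  have hcls : G '' Icc c d = H '' Icc c' d' := by
    rw [← closure_image_Ioo hG hcd, ← closure_image_Ioo hH hcd', him]
  have hFaG : F a ∈ G '' Icc c d := by
    rcases epFG with ⟨h1, _⟩ | ⟨h1, _⟩
    · exact ⟨c, ⟨le_rfl, hcd.le⟩, h1.symm⟩
    · exact ⟨d, ⟨hcd.le, le_rfl⟩, h1.symm⟩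
  rw [hcls] at hFaG
  obtain ⟨s, hsIcc, hsH⟩ := hFaG
  have hsnI : s ∉ Ioo c' d' := by
    intro hh
    have hsγ : H s ∈ γ := by rw [hsH]; exact hFγ a
    exact (hHγ s).1 hsγ hh
  have hs_eq : s = c' ∨ s = d' := by
    rcases hsIcc.1.eq_or_lt with h | h
    · exact Or.inl h.symm
    rcases hsIcc.2.eq_or_lt with h2 | h2
    · exact Or.inr h2
    · exact absurd ⟨h, h2⟩ hsnI
  have hfin : F a = F a' ∨ F a = F b' := by
    rcases epFH with ⟨h1, h2⟩ | ⟨h1, h2⟩ <;> rcases hs_eq with rfl | rfl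
    · exact Or.inl (hsH.symm.trans h1.symm)
    · exact Or.inr (hsH.symm.trans h2.symm)
    · exact Or.inr (hsH.symm.trans h2.symm)
    · exact Or.inl (hsH.symm.trans h1.symm)
  rcases hfin with h | h
  · have := hF.injective h; linarith
  · have := hF.injective h; linarith

lemma chart2 {γ σ σ' : Set Plane} (hl : IsTopLine γ) (hp1 : IsPortion γ (γ \ σ))
    (hp2 : IsPortion γ (γ \ σ')) :
    ∃ F : ℝ → Plane, IsEmbedding F ∧ range F = γ ∧
      (∃ a b : ℝ, ∀ t, F t ∈ σ ↔ t ∉ Ioo a b) ∧ (∃ a b : ℝ, ∀ t, F t ∈ σ' ↔ t ∉ Ioo a b) := by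
  obtain ⟨Φ⟩ := hl
  have key : ∀ σ₀ : Set Plane, IsPortion γ (γ \ σ₀) →
      ∃ a b : ℝ, ∀ t, (Φ t : Plane) ∈ σ₀ ↔ t ∉ Ioo a b := by
    intro σ₀ hp
    obtain ⟨a, b, hab⟩ := hp.2 Φ
    refine ⟨a, b, fun t => ⟨fun h hI => ?_, fun hI => ?_⟩⟩
    · rw [← hab] at hI
      exact hI.2 h
    · by_contra h
      exact hI (by rw [← hab]; exact ⟨(Φ t).2, h⟩)
  refine ⟨fun t => (Φ t : Plane), IsEmbedding.subtypeVal.comp Φ.isEmbedding, ?_, key σ hp1,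
    key σ' hp2⟩
  ext x
  constructor
  · rintro ⟨t, rfl⟩; exact (Φ t).2
  · intro hx; exact ⟨Φ.symm ⟨x, hx⟩, by simp⟩

end Stmt8Aux

open Stmt8Aux

theorem stmt8 (Γ : Set (Set Plane)) (hline : ∀ γ ∈ Γ, IsTopLine γ)
    (hport : ∀ γ ∈ Γ, ∀ γ' ∈ Γ, γ ≠ γ' → IsPortion γ (γ \ γ'))
    (γ σ σ' : Set Plane) (hγ : γ ∈ Γ) (hσ : σ ∈ Γ) (hσ' : σ' ∈ Γ)
    (h1 : γ ≠ σ) (h2 : γ ≠ σ') (h3 : σ ≠ σ') :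
    lineJ γ σ' \ lineJ γ σ ⊆ lineJ σ σ' ∧ IsConnected (lineJ γ σ' \ lineJ γ σ) := by
  classical
  obtain ⟨F, hF, hFr, ⟨a, b, hFσ⟩, ⟨a', b', hFσ'⟩⟩ :=
    chart2 (hline γ hγ) (hport γ hγ σ hσ h1) (hport γ hγ σ' hσ' h2)
  obtain ⟨G, hG, hGr, ⟨c, d, hGγ⟩, ⟨p, q, hGσ'⟩⟩ :=
    chart2 (hline σ hσ) (hport σ hσ γ hγ (Ne.symm h1)) (hport σ hσ σ' hσ' h3)
  obtain ⟨H, hH, hHr, ⟨c', d', hHγ⟩, ⟨e, f, hHσ⟩⟩ :=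
    chart2 (hline σ' hσ') (hport σ' hσ' γ hγ (Ne.symm h2)) (hport σ' hσ' σ hσ (Ne.symm h3))
  have hab : a < b := lt_ab hF hFr hG hGr hFσ hGγ h1
  have hab' : a' < b' := lt_ab hF hFr hH hHr hFσ' hHγ h2
  have hcd : c < d := lt_ab hG hGr hF hFr hGγ hFσ (Ne.symm h1)
  have hcd' : c' < d' := lt_ab hH hHr hF hFr hHγ hFσ' (Ne.symm h2)
  have hef : e < f := lt_ab hH hHr hG hGr hHσ hGσ' (Ne.symm h3)
  have hFγ : ∀ t, F t ∈ γ := fun t => hFr ▸ mem_range_self t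
  have hGσmem : ∀ t, G t ∈ σ := fun t => hGr ▸ mem_range_self t
  have hHσ'mem : ∀ t, H t ∈ σ' := fun t => hHr ▸ mem_range_self t
  -- Part 1
  have hsub3 : lineJ γ σ' ⊆ lineJ γ σ ∪ lineJ σ σ' := by
    have h0 : symmDiff γ σ' ⊆ symmDiff γ σ ∪ symmDiff σ σ' := symmDiff_triangle γ σ σ'
    calc lineJ γ σ' = closure (symmDiff γ σ') := rfl
      _ ⊆ closure (symmDiff γ σ ∪ symmDiff σ σ') := closure_mono h0
      _ = lineJ γ σ ∪ lineJ σ σ' := closure_union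
  refine ⟨fun x hx => (hsub3 hx.1).resolve_left hx.2, ?_⟩
  -- lineJ descriptions
  have hJ1 : lineJ γ σ = F '' Icc a b ∪ G '' Icc c d := by
    have e1 : γ \ σ = F '' Ioo a b := by
      ext x
      constructor
      · rintro ⟨hx1, hx2⟩
        obtain ⟨t, rfl⟩ : x ∈ range F := by rw [hFr]; exact hx1
        refine ⟨t, ?_, rfl⟩
        by_contra hn
        exact hx2 ((hFσ t).2 hn)
      · rintro ⟨t, ht, rfl⟩
        exact ⟨hFγ t, fun hh => (hFσ t).1 hh ht⟩
    have e2 : σ \ γ = G '' Ioo c d := by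
      ext x
      constructor
      · rintro ⟨hx1, hx2⟩
        obtain ⟨t, rfl⟩ : x ∈ range G := by rw [hGr]; exact hx1
        refine ⟨t, ?_, rfl⟩
        by_contra hn
        exact hx2 ((hGγ t).2 hn)
      · rintro ⟨t, ht, rfl⟩
        exact ⟨hGσmem t, fun hh => (hGγ t).1 hh ht⟩
    show closure (symmDiff γ σ) = _
    rw [Set.symmDiff_def, e1, e2, closure_union,
      closure_image_Ioo hF hab, closure_image_Ioo hG hcd]
  have hJ2 : lineJ γ σ' = F '' Icc a' b' ∪ H '' Icc c' d' := by
    have e1 : γ \ σ' = F '' Ioo a' b' := by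
      ext x
      constructor
      · rintro ⟨hx1, hx2⟩
        obtain ⟨t, rfl⟩ : x ∈ range F := by rw [hFr]; exact hx1
        refine ⟨t, ?_, rfl⟩
        by_contra hn
        exact hx2 ((hFσ' t).2 hn)
      · rintro ⟨t, ht, rfl⟩
        exact ⟨hFγ t, fun hh => (hFσ' t).1 hh ht⟩
    have e2 : σ' \ γ = H '' Ioo c' d' := by
      ext x
      constructor
      · rintro ⟨hx1, hx2⟩
        obtain ⟨t, rfl⟩ : x ∈ range H := by rw [hHr]; exact hx1
        refine ⟨t, ?_, rfl⟩
        by_contra hn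
        exact hx2 ((hHγ t).2 hn)
      · rintro ⟨t, ht, rfl⟩
        exact ⟨hHσ'mem t, fun hh => (hHγ t).1 hh ht⟩
    show closure (symmDiff γ σ') = _
    rw [Set.symmDiff_def, e1, e2, closure_union,
      closure_image_Ioo hF hab', closure_image_Ioo hH hcd']
  have epFG := endpoints_pkg hF hFr hG hGr hFσ hGγ hab hcd
  have epFH := endpoints_pkg hF hFr hH hHr hFσ' hHγ hab' hcd'
  -- cap lemmas
  have capG : ∀ x ∈ G '' Icc c d, x ∈ γ → x = F a ∨ x = F b := by
    rintro x ⟨s, hs, rfl⟩ hxγ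
    by_cases hsI : s ∈ Ioo c d
    · exact absurd hxγ (fun hh => (hGγ s).1 hh hsI)
    have hseq : s = c ∨ s = d := by
      rcases hs.1.eq_or_lt with h | h
      · exact Or.inl h.symm
      rcases hs.2.eq_or_lt with h' | h'
      · exact Or.inr h'
      · exact absurd ⟨h, h'⟩ hsI
    rcases hseq with rfl | rfl
    · rcases epFG with ⟨hh, _⟩ | ⟨_, hh⟩
      · exact Or.inl hh.symm
      · exact Or.inr hh.symm
    · rcases epFG with ⟨_, hh⟩ | ⟨hh, _⟩
      · exact Or.inr hh.symm
      · exact Or.inl hh.symm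
  have capH : ∀ x ∈ H '' Icc c' d', x ∈ γ → x = F a' ∨ x = F b' := by
    rintro x ⟨s, hs, rfl⟩ hxγ
    by_cases hsI : s ∈ Ioo c' d'
    · exact absurd hxγ (fun hh => (hHγ s).1 hh hsI)
    have hseq : s = c' ∨ s = d' := by
      rcases hs.1.eq_or_lt with h | h
      · exact Or.inl h.symm
      rcases hs.2.eq_or_lt with h' | h'
      · exact Or.inr h'
      · exact absurd ⟨h, h'⟩ hsI
    rcases hseq with rfl | rfl
    · rcases epFH with ⟨hh, _⟩ | ⟨_, hh⟩
      · exact Or.inl hh.symm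
      · exact Or.inr hh.symm
    · rcases epFH with ⟨_, hh⟩ | ⟨hh, _⟩
      · exact Or.inr hh.symm
      · exact Or.inl hh.symm
  -- exclude disjoint intervals
  rcases lt_or_ge b' a with hd1 | hd1
  · exact (caseV hF hFr hG hGr hH hHr hFσ hFσ' hGγ hGσ' hHγ hHσ hab hab' hcd hcd' hd1).elim
  rcases lt_or_ge b a' with hd2 | hd2
  · exact (caseV hF hFr hH hHr hG hGr hFσ' hFσ hHγ hHσ hGγ hGσ' hab' hab hcd' hcd hd2).elim
  -- the set identity
  have hSid : lineJ γ σ' \ lineJ γ σ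
      = F '' (Icc a' b' \ Icc a b) ∪ H '' Ioo (max c' e) (min d' f) := by
    rw [hJ1, hJ2]
    ext x
    constructor
    · rintro ⟨hx1, hx2⟩
      have hx2F : x ∉ F '' Icc a b := fun hh => hx2 (Or.inl hh)
      have hx2G : x ∉ G '' Icc c d := fun hh => hx2 (Or.inr hh)
      rcases hx1 with ⟨t, ht, rfl⟩ | ⟨t, ht, rfl⟩
      · exact Or.inl ⟨t, ⟨ht, fun hc => hx2F ⟨t, hc, rfl⟩⟩, rfl⟩
      · by_cases htI : t ∈ Ioo c' d'
        · have hnγ : H t ∉ γ := fun hh => (hHγ t).1 hh htI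
          have hnσ : H t ∉ σ := by
            intro hh
            obtain ⟨s, hs⟩ : H t ∈ range G := by rw [hGr]; exact hh
            have hsI : s ∈ Ioo c d := by
              by_contra hsn
              exact hnγ (hs ▸ (hGγ s).2 hsn)
            exact hx2G ⟨s, Ioo_subset_Icc_self hsI, hs⟩
          have hte : t ∈ Ioo e f := by
            by_contra htn
            exact hnσ ((hHσ t).2 htn)
          exact Or.inr ⟨t, ⟨max_lt htI.1 hte.1, lt_min htI.2 hte.2⟩, rfl⟩
        · have hcd'eq : t = c' ∨ t = d' := by
            rcases ht.1.eq_or_lt with h | h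
            · exact Or.inl h.symm
            rcases ht.2.eq_or_lt with h' | h'
            · exact Or.inr h'
            · exact absurd ⟨h, h'⟩ htI
          have hxF : H t = F a' ∨ H t = F b' := by
            rcases epFH with ⟨hh1, hh2⟩ | ⟨hh1, hh2⟩ <;> rcases hcd'eq with rfl | rfl
            · exact Or.inl hh1.symm
            · exact Or.inr hh2.symm
            · exact Or.inr hh2.symm
            · exact Or.inl hh1.symm
          rcases hxF with hxF | hxF <;> rw [hxF] at hx2F ⊢
          · exact Or.inl ⟨a', ⟨⟨le_rfl, hab'.le⟩, fun hc => hx2F ⟨a', hc, rfl⟩⟩, rfl⟩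
          · exact Or.inl ⟨b', ⟨⟨hab'.le, le_rfl⟩, fun hc => hx2F ⟨b', hc, rfl⟩⟩, rfl⟩
    · rintro (⟨t, ⟨ht1, ht2⟩, rfl⟩ | ⟨t, ht, rfl⟩)
      · refine ⟨Or.inl ⟨t, ht1, rfl⟩, ?_⟩
        rintro (⟨s, hs, hFs⟩ | ⟨s, hs, hGs⟩)
        · exact ht2 (hF.injective hFs ▸ hs)
        · rcases capG (F t) ⟨s, hs, hGs⟩ (hFγ t) with hh | hh
          · exact ht2 (by rw [hF.injective hh]; exact ⟨le_rfl, hab.le⟩)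
          · exact ht2 (by rw [hF.injective hh]; exact ⟨hab.le, le_rfl⟩)
      · have htc' : t ∈ Ioo c' d' :=
          ⟨lt_of_le_of_lt (le_max_left c' e) ht.1, lt_of_lt_of_le ht.2 (min_le_left d' f)⟩
        have hte : t ∈ Ioo e f :=
          ⟨lt_of_le_of_lt (le_max_right c' e) ht.1, lt_of_lt_of_le ht.2 (min_le_right d' f)⟩
        refine ⟨Or.inr ⟨t, Ioo_subset_Icc_self htc', rfl⟩, ?_⟩
        rintro (⟨s, hs, hFs⟩ | ⟨s, hs, hGs⟩)
        · exact (hHγ t).1 (hFs ▸ hFγ s) htc'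
        · exact (hHσ t).1 (hGs ▸ hGσmem s) hte
  rw [hSid]
  -- glue lemma
  have glue : ∀ w : ℝ, (F w = H c' ∨ F w = H d') → w ≠ a → w ≠ b →
      max c' e < min d' f → F w ∈ H '' Icc (max c' e) (min d' f) := by
    intro w hw hwa hwb hgh
    have harc : ∀ I : Set ℝ, I ⊆ Ioo c' d' → (∀ x ∈ I, x ∉ Ioo e f) →
        H '' I ⊆ G '' Icc c d := by
      intro I hI1 hI2
      rintro x ⟨s, hs, rfl⟩
      have hh1 : H s ∉ γ := fun hh => (hHγ s).1 hh (hI1 hs)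
      have hh2 : H s ∈ σ := (hHσ s).2 (hI2 s hs)
      obtain ⟨u, hu⟩ : H s ∈ range G := by rw [hGr]; exact hh2
      have huI : u ∈ Ioo c d := by
        by_contra hn
        exact hh1 (hu ▸ (hGγ u).2 hn)
      exact ⟨u, Ioo_subset_Icc_self huI, hu⟩
    have hnotK : F w ∉ G '' Icc c d := by
      intro hh
      rcases capG _ hh (hFγ w) with h | h
      · exact hwa (hF.injective h)
      · exact hwb (hF.injective h)
    have hKcl : IsClosed (G '' Icc c d) := (isCompact_Icc.image hG.continuous).isClosed
    rcases hw with hw | hw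
    · have hec' : e ≤ c' := by
        by_contra hec
        push_neg at hec
        have hed' : e < d' := lt_of_lt_of_le (lt_of_le_of_lt (le_max_right c' e) hgh)
          (min_le_left d' f)
        have hA1 : H '' Ioc c' e ⊆ G '' Icc c d :=
          harc _ (fun x hx => ⟨hx.1, lt_of_le_of_lt hx.2 hed'⟩)
            (fun x hx hx2 => (not_lt.2 hx.2) hx2.1)
        have hA2 : H c' ∈ closure (H '' Ioc c' e) := by
          have : H c' ∈ H '' closure (Ioc c' e) :=
            ⟨c', by rw [closure_Ioc hec.ne]; exact ⟨le_rfl, hec.le⟩, rfl⟩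
          exact image_closure_subset_closure_image hH.continuous this
        exact hnotK (by rw [hw]; exact closure_minimal hA1 hKcl hA2)
      refine ⟨c', ⟨max_le le_rfl hec', le_of_lt (lt_of_le_of_lt (le_max_left c' e) hgh)⟩, hw.symm⟩
    · have hd'f : d' ≤ f := by
        by_contra hdf
        push_neg at hdf
        have hc'f : c' < f := lt_of_le_of_lt (le_max_left c' e)
          (lt_of_lt_of_le hgh (min_le_right d' f))
        have hA1 : H '' Ico f d' ⊆ G '' Icc c d :=
          harc _ (fun x hx => ⟨lt_of_lt_of_le hc'f hx.1, hx.2⟩)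
            (fun x hx hx2 => (not_lt.2 hx.1) hx2.2)
        have hA2 : H d' ∈ closure (H '' Ico f d') := by
          have : H d' ∈ H '' closure (Ico f d') :=
            ⟨d', by rw [closure_Ico hdf.ne]; exact ⟨hdf.le, le_rfl⟩, rfl⟩
          exact image_closure_subset_closure_image hH.continuous this
        exact hnotK (by rw [hw]; exact closure_minimal hA1 hKcl hA2)
      refine ⟨d', ⟨le_of_lt (lt_of_lt_of_le hgh (min_le_left d' f)), le_min le_rfl hd'f⟩, hw.symm⟩
  -- helpers for the endpoint images
  have hwa' : F a' = H c' ∨ F a' = H d' := by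
    rcases epFH with ⟨hh, _⟩ | ⟨hh, _⟩
    · exact Or.inl hh
    · exact Or.inr hh
  have hwb' : F b' = H c' ∨ F b' = H d' := by
    rcases epFH with ⟨_, hh⟩ | ⟨_, hh⟩
    · exact Or.inr hh
    · exact Or.inl hh
  have hPpre : IsPreconnected (H '' Ioo (max c' e) (min d' f)) :=
    isPreconnected_Ioo.image H hH.continuous.continuousOn
  -- the case analysis on the relative position of the two intervals
  rcases lt_or_ge a' a with haa' | haa'
  · rcases lt_or_ge b b' with hbb' | hbb'
    · -- case (iv) : a' < a, b < b'
      have hD : Icc a' b' \ Icc a b = Ico a' a ∪ Ioc b b' := by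
        ext x
        simp only [mem_diff, mem_Icc, mem_Ico, mem_Ioc, mem_union, not_and_or, not_le]
        constructor
        · rintro ⟨⟨hx1, hx2⟩, hx3 | hx3⟩
          · exact Or.inl ⟨hx1, hx3⟩
          · exact Or.inr ⟨hx3, hx2⟩
        · rintro (⟨hx1, hx2⟩ | ⟨hx1, hx2⟩)
          · exact ⟨⟨hx1, by linarith⟩, Or.inl hx2⟩
          · exact ⟨⟨by linarith, hx2⟩, Or.inr hx1⟩
      have hgh : max c' e < min d' f := by
        by_contra hgh
        have hm : (e + f) / 2 ∈ Ioo e f := by rw [mem_Ioo]; constructor <;> linarith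
        have hh1 : H ((e + f) / 2) ∉ σ := fun hh => (hHσ _).1 hh hm
        have hh2 : (e + f) / 2 ∉ Ioo c' d' := by
          intro hmc
          have : (e + f) / 2 ∈ Ioo (max c' e) (min d' f) :=
            ⟨max_lt hmc.1 hm.1, lt_min hmc.2 hm.2⟩
          rw [Ioo_eq_empty hgh] at this
          exact this
        have hh3 : H ((e + f) / 2) ∈ γ := (hHγ _).2 hh2
        obtain ⟨t, ht⟩ : H ((e + f) / 2) ∈ range F := by rw [hFr]; exact hh3
        have ht1 : t ∈ Ioo a b := by
          by_contra hn
          exact hh1 (ht ▸ (hFσ t).2 hn)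
        have ht2 : F t ∉ σ' := fun hh => (hFσ' t).1 hh ⟨by linarith [ht1.1], by linarith [ht1.2]⟩
        exact ht2 (by rw [ht]; exact hHσ'mem _)
      rw [hD, image_union]
      have hga : F a' ∈ H '' Icc (max c' e) (min d' f) :=
        glue a' hwa' (ne_of_lt haa') (by intro hh; subst hh; linarith) hgh
      have hgb : F b' ∈ H '' Icc (max c' e) (min d' f) :=
        glue b' hwb' (by intro hh; subst hh; linarith) (ne_of_gt hbb') hgh
      have hclP : closure (H '' Ioo (max c' e) (min d' f)) = H '' Icc (max c' e) (min d' f) :=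
        closure_image_Ioo hH hgh
      have hBpre : IsPreconnected (H '' Ioo (max c' e) (min d' f) ∪ {F a', F b'}) := by
        refine hPpre.subset_closure subset_union_left (union_subset subset_closure ?_)
        rintro x (rfl | rfl)
        · rw [hclP]; exact hga
        · rw [hclP]; exact hgb
      have hU1 : IsPreconnected (F '' Ico a' a ∪
          (H '' Ioo (max c' e) (min d' f) ∪ {F a', F b'})) := by
        refine IsPreconnected.union (F a') ⟨a', ⟨le_rfl, haa'⟩, rfl⟩
          (Or.inr (Or.inl rfl)) ?_ hBpre
        exact isPreconnected_Ico.image F hF.continuous.continuousOn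
      have hU2 : IsPreconnected (F '' Ioc b b' ∪ (F '' Ico a' a ∪
          (H '' Ioo (max c' e) (min d' f) ∪ {F a', F b'}))) := by
        refine IsPreconnected.union (F b') ⟨b', ⟨hbb', le_rfl⟩, rfl⟩
          (Or.inr (Or.inr (Or.inr rfl))) ?_ hU1
        exact isPreconnected_Ioc.image F hF.continuous.continuousOn
      have heq : F '' Ioc b b' ∪ (F '' Ico a' a ∪
          (H '' Ioo (max c' e) (min d' f) ∪ {F a', F b'}))
          = (F '' Ico a' a ∪ F '' Ioc b b') ∪ H '' Ioo (max c' e) (min d' f) := by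
        apply Subset.antisymm
        · intro x hx
          rcases hx with hx | hx
          · exact Or.inl (Or.inr hx)
          rcases hx with hx | hx
          · exact Or.inl (Or.inl hx)
          rcases hx with hx | hx
          · exact Or.inr hx
          rcases hx with rfl | rfl
          · exact Or.inl (Or.inl ⟨a', ⟨le_rfl, haa'⟩, rfl⟩)
          · exact Or.inl (Or.inr ⟨b', ⟨hbb', le_rfl⟩, rfl⟩)
        · intro x hx
          rcases hx with (hx | hx) | hx
          · exact Or.inr (Or.inl hx)
          · exact Or.inl hx
          · exact Or.inr (Or.inr (Or.inl hx))
      exact ⟨⟨F a', Or.inl (Or.inl ⟨a', ⟨le_rfl, haa'⟩, rfl⟩)⟩, heq ▸ hU2⟩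
    · -- case (ii) : a' < a, b' ≤ b
      have hD : Icc a' b' \ Icc a b = Ico a' a := by
        ext x
        simp only [mem_diff, mem_Icc, mem_Ico, not_and_or, not_le]
        constructor
        · rintro ⟨⟨hx1, hx2⟩, hx3 | hx3⟩
          · exact ⟨hx1, hx3⟩
          · linarith
        · rintro ⟨hx1, hx2⟩
          exact ⟨⟨hx1, by linarith⟩, Or.inl hx2⟩
      rw [hD]
      by_cases hgh : max c' e < min d' f
      · have hga : F a' ∈ H '' Icc (max c' e) (min d' f) :=
          glue a' hwa' (ne_of_lt haa') (by intro hh; subst hh; linarith) hgh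
        have hclP : closure (H '' Ioo (max c' e) (min d' f)) = H '' Icc (max c' e) (min d' f) :=
          closure_image_Ioo hH hgh
        have hBpre : IsPreconnected (H '' Ioo (max c' e) (min d' f) ∪ {F a'}) := by
          refine hPpre.subset_closure subset_union_left (union_subset subset_closure ?_)
          rintro x rfl
          rw [hclP]; exact hga
        have hU1 : IsPreconnected (F '' Ico a' a ∪
            (H '' Ioo (max c' e) (min d' f) ∪ {F a'})) := by
          refine IsPreconnected.union (F a') ⟨a', ⟨le_rfl, haa'⟩, rfl⟩
            (Or.inr rfl) ?_ hBpre
          exact isPreconnected_Ico.image F hF.continuous.continuousOn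
        have heq : F '' Ico a' a ∪ (H '' Ioo (max c' e) (min d' f) ∪ {F a'})
            = F '' Ico a' a ∪ H '' Ioo (max c' e) (min d' f) := by
          apply Subset.antisymm
          · intro x hx
            rcases hx with hx | hx
            · exact Or.inl hx
            rcases hx with hx | hx
            · exact Or.inr hx
            rcases hx with rfl
            exact Or.inl ⟨a', ⟨le_rfl, haa'⟩, rfl⟩
          · intro x hx
            rcases hx with hx | hx
            · exact Or.inl hx
            · exact Or.inr (Or.inl hx)
        exact ⟨⟨F a', Or.inl ⟨a', ⟨le_rfl, haa'⟩, rfl⟩⟩, heq ▸ hU1⟩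
      · rw [Ioo_eq_empty hgh, image_empty, union_empty]
        exact ⟨⟨F a', ⟨a', ⟨le_rfl, haa'⟩, rfl⟩⟩,
          isPreconnected_Ico.image F hF.continuous.continuousOn⟩
  · rcases lt_or_ge b b' with hbb' | hbb'
    · -- case (iii) : a ≤ a', b < b'
      have hD : Icc a' b' \ Icc a b = Ioc b b' := by
        ext x
        simp only [mem_diff, mem_Icc, mem_Ioc, not_and_or, not_le]
        constructor
        · rintro ⟨⟨hx1, hx2⟩, hx3 | hx3⟩
          · linarith
          · exact ⟨hx3, hx2⟩
        · rintro ⟨hx1, hx2⟩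
          exact ⟨⟨by linarith, hx2⟩, Or.inr hx1⟩
      rw [hD]
      by_cases hgh : max c' e < min d' f
      · have hgb : F b' ∈ H '' Icc (max c' e) (min d' f) :=
          glue b' hwb' (by intro hh; subst hh; linarith) (ne_of_gt hbb') hgh
        have hclP : closure (H '' Ioo (max c' e) (min d' f)) = H '' Icc (max c' e) (min d' f) :=
          closure_image_Ioo hH hgh
        have hBpre : IsPreconnected (H '' Ioo (max c' e) (min d' f) ∪ {F b'}) := by
          refine hPpre.subset_closure subset_union_left (union_subset subset_closure ?_)
          rintro x rfl
          rw [hclP]; exact hgb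
        have hU1 : IsPreconnected (F '' Ioc b b' ∪
            (H '' Ioo (max c' e) (min d' f) ∪ {F b'})) := by
          refine IsPreconnected.union (F b') ⟨b', ⟨hbb', le_rfl⟩, rfl⟩
            (Or.inr rfl) ?_ hBpre
          exact isPreconnected_Ioc.image F hF.continuous.continuousOn
        have heq : F '' Ioc b b' ∪ (H '' Ioo (max c' e) (min d' f) ∪ {F b'})
            = F '' Ioc b b' ∪ H '' Ioo (max c' e) (min d' f) := by
          apply Subset.antisymm
          · intro x hx
            rcases hx with hx | hx
            · exact Or.inl hx
            rcases hx with hx | hx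
            · exact Or.inr hx
            rcases hx with rfl
            exact Or.inl ⟨b', ⟨hbb', le_rfl⟩, rfl⟩
          · intro x hx
            rcases hx with hx | hx
            · exact Or.inl hx
            · exact Or.inr (Or.inl hx)
        exact ⟨⟨F b', Or.inl ⟨b', ⟨hbb', le_rfl⟩, rfl⟩⟩, heq ▸ hU1⟩
      · rw [Ioo_eq_empty hgh, image_empty, union_empty]
        exact ⟨⟨F b', ⟨b', ⟨hbb', le_rfl⟩, rfl⟩⟩,
          isPreconnected_Ioc.image F hF.continuous.continuousOn⟩
    · -- case (i) : a ≤ a', b' ≤ b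
      have hD : Icc a' b' \ Icc a b = ∅ :=
        diff_eq_empty.2 (Icc_subset_Icc haa' hbb')
      rw [hD, image_empty, empty_union]
      have hgh : max c' e < min d' f := by
        rcases eq_or_lt_of_le haa' with heq1 | hlt1
        · rcases eq_or_lt_of_le hbb' with heq2 | hlt2
          · -- a = a', b' = b
            by_contra hgh
            have hm : (e + f) / 2 ∈ Ioo e f := by rw [mem_Ioo]; constructor <;> linarith
            have hh1 : H ((e + f) / 2) ∉ σ := fun hh => (hHσ _).1 hh hm
            have hh2 : (e + f) / 2 ∉ Ioo c' d' := by
              intro hmc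
              have : (e + f) / 2 ∈ Ioo (max c' e) (min d' f) :=
                ⟨max_lt hmc.1 hm.1, lt_min hmc.2 hm.2⟩
              rw [Ioo_eq_empty hgh] at this
              exact this
            have hh3 : H ((e + f) / 2) ∈ γ := (hHγ _).2 hh2
            obtain ⟨t, ht⟩ : H ((e + f) / 2) ∈ range F := by rw [hFr]; exact hh3
            have ht1 : t ∈ Ioo a b := by
              by_contra hn
              exact hh1 (ht ▸ (hFσ t).2 hn)
            have ht2 : F t ∉ σ' := fun hh =>
              (hFσ' t).1 hh ⟨by rw [← heq1]; exact ht1.1, by rw [heq2]; exact ht1.2⟩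
            exact ht2 (by rw [ht]; exact hHσ'mem _)
          · -- b' < b : F b' lies strictly inside Ioo a b
            by_contra hgh
            have hb'I : b' ∈ Ioo a b := ⟨lt_of_le_of_lt haa' hab', hlt2⟩
            have hh1 : F b' ∉ σ := fun hh => (hFσ b').1 hh hb'I
            rcases hwb' with hh2 | hh2
            · have hcef : c' ∈ Ioo e f := by
                by_contra hn
                exact hh1 (by rw [hh2]; exact (hHσ c').2 hn)
              exact hgh (lt_min (max_lt hcd' (lt_trans hcef.1 hcd'))
                (max_lt hcef.2 (lt_trans hcef.1 hcef.2)))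
            · have hdef : d' ∈ Ioo e f := by
                by_contra hn
                exact hh1 (by rw [hh2]; exact (hHσ d').2 hn)
              exact hgh (lt_min (max_lt hcd' hdef.1)
                (max_lt (lt_trans hcd' hdef.2) (lt_trans hdef.1 hdef.2)))
        · -- a < a'
          by_contra hgh
          have ha'I : a' ∈ Ioo a b := ⟨hlt1, lt_of_lt_of_le hab' hbb'⟩
          have hh1 : F a' ∉ σ := fun hh => (hFσ a').1 hh ha'I
          rcases hwa' with hh2 | hh2
          · have hcef : c' ∈ Ioo e f := by
              by_contra hn
              exact hh1 (by rw [hh2]; exact (hHσ c').2 hn)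
            exact hgh (lt_min (max_lt hcd' (lt_trans hcef.1 hcd'))
              (max_lt hcef.2 (lt_trans hcef.1 hcef.2)))
          · have hdef : d' ∈ Ioo e f := by
              by_contra hn
              exact hh1 (by rw [hh2]; exact (hHσ d').2 hn)
            exact hgh (lt_min (max_lt hcd' hdef.1)
              (max_lt (lt_trans hcd' hdef.2) (lt_trans hdef.1 hdef.2)))
      exact ⟨(nonempty_Ioo.2 hgh).image H, hPpre⟩
end
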